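/- arXiv:1710.03836 — 7 statements merged into one kernel-verified Lean document; each statement's English description precedes it below -/
import Mathlib

section
/- Every finite bipartite multigraph admits an equitable k-edge-coloring for every positive integer k; that is, a coloring of the edges with k colors such that at each vertex, the numbers of incident edges of any two colors differ by at most one. -/
/-- The number of edges of color `i` incident with `v`. -/
noncomputable def colorDegAt {V E : Type} [Fintype E] {k : ℕ} (ends : E → V × V) (c : E → Fin k)
    (i : Fin k) (v : V) : ℕ :=
  Nat.card {e : E // c e = i ∧ ((ends e).1 = v ∨ (ends e).2 = v)}

/-!
Every multigraph has an orientation in which in- and out-degree differ by at most one at each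
vertex: merge two edges `u₁v`, `vu₂` meeting at `v` into one edge `u₁u₂`, orient the smaller
graph by induction and route its arc through `v` again; once no two edges meet, any orientation
works. In a bipartite graph, colouring each edge by the side of its tail turns such an
orientation into a 2-colouring balanced at every vertex. A `k`-colouring minimising
`∑ v, ∑ i, dᵢ(v)²` is then equitable: if colours `i` and `j` are unbalanced at some vertex,
rebalancing the subgraph of these two colours keeps `dᵢ + dⱼ` at every vertex and strictly
lowers the sum.
-/

open Finset

namespace BipartiteEquitable

lemma sum_update_update_eq_sum_erase {ι α M : Type*} [DecidableEq ι] [AddCommMonoid M]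
    {F : α → M} {d : ι → α} {s : Finset ι} {e₁ e₂ : ι} {q₁ q₂ : α} (he₂ : e₂ ∈ s)
    (he₁ : e₁ ∈ s.erase e₂) (hne : e₁ ≠ e₂) (hq : F q₁ + F q₂ = F (d e₁)) :
    ∑ e ∈ s, F (Function.update (Function.update d e₁ q₁) e₂ q₂ e) =
      ∑ e ∈ s.erase e₂, F (d e) := by
  rw [← add_sum_erase _ _ he₂, ← add_sum_erase _ _ he₁, ← add_sum_erase _ _ he₁, ← hq,
    Function.update_self, Function.update_of_ne hne, Function.update_self, add_left_comm,
    add_assoc]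
  congr 2
  refine sum_congr rfl fun e he => ?_
  obtain ⟨h₁, h₂, -⟩ : e ≠ e₁ ∧ e ≠ e₂ ∧ e ∈ s := by simpa using he
  simp [h₁, h₂]

section Orientation

variable {V E : Type*}

lemma exists_rel_of_incident {p : V × V} {v : V} (h : p.1 = v ∨ p.2 = v) :
    ∃ u, Sym2.Rel V p (u, v) := by
  obtain ⟨a, b⟩ := p
  rcases h with rfl | rfl
  exacts [⟨b, .swap _ _⟩, ⟨a, .refl _ _⟩]

lemma fst_eq_iff_and_snd_eq_iff {side : V → Bool} {p q : V × V} (hq : side q.1 ≠ side q.2)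
    (h : Sym2.Rel V p q) (v : V) :
    (p.1 = v ↔ side p.1 = side v ∧ (q.1 = v ∨ q.2 = v)) ∧
      (p.2 = v ↔ side p.1 = !side v ∧ (q.1 = v ∨ q.2 = v)) := by
  cases h with
  | refl x y | swap x y =>
    by_cases hx : x = v <;> by_cases hy : y = v <;> subst_vars <;> simp_all [eq_comm, Bool.eq_not]

variable [DecidableEq V]

def arcFlow (p : V × V) (v : V) : ℤ :=
  (if p.1 = v then 1 else 0) - if p.2 = v then 1 else 0

lemma arcFlow_add_arcFlow (a v b x : V) :
    arcFlow (a, v) x + arcFlow (v, b) x = arcFlow (a, b) x := by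
  simp only [arcFlow]
  ring

lemma abs_arcFlow_le_one (p : V × V) (v : V) : |arcFlow p v| ≤ 1 := by
  unfold arcFlow
  split_ifs <;> simp

lemma arcFlow_eq_zero {p : V × V} {v : V} (h : ¬(p.1 = v ∨ p.2 = v)) : arcFlow p v = 0 := by
  simp [arcFlow, not_or.1 h]

lemma sum_arcFlow_eq (s : Finset E) (d : E → V × V) (v : V) :
    ∑ e ∈ s, arcFlow (d e) v = #{e ∈ s | (d e).1 = v} - #{e ∈ s | (d e).2 = v} := by
  simp only [arcFlow, sum_sub_distrib, sum_boole]

lemma abs_sum_arcFlow_le_one_of_disjoint {s : Finset E} {ends : E → V × V}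
    (h : ∀ v, ∀ e₁ ∈ s, ∀ e₂ ∈ s, e₁ ≠ e₂ → ((ends e₁).1 = v ∨ (ends e₁).2 = v) →
      ¬((ends e₂).1 = v ∨ (ends e₂).2 = v)) (v : V) :
    |∑ e ∈ s, arcFlow (ends e) v| ≤ 1 := by
  by_cases hv : ∃ e₀ ∈ s, (ends e₀).1 = v ∨ (ends e₀).2 = v
  · obtain ⟨e₀, he₀, hv₀⟩ := hv
    rw [sum_eq_single_of_mem e₀ he₀ fun e he hne =>
      arcFlow_eq_zero (h v e₀ he₀ e he hne.symm hv₀)]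
    exact abs_arcFlow_le_one _ _
  · simp only [not_exists, not_and] at hv
    rw [sum_eq_zero fun e he => arcFlow_eq_zero (hv e he)]
    simp

lemma exists_subdivided_arcs {u₁ u₂ : V} (v : V) {q : V × V} (hq : Sym2.Rel V q (u₁, u₂)) :
    ∃ q₁ q₂ : V × V, Sym2.Rel V q₁ (u₁, v) ∧ Sym2.Rel V q₂ (u₂, v) ∧
      ∀ x, arcFlow q₁ x + arcFlow q₂ x = arcFlow q x := by
  cases hq
  · exact ⟨(u₁, v), (v, u₂), .refl _ _, .swap _ _, arcFlow_add_arcFlow u₁ v u₂⟩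
  · exact ⟨(v, u₁), (u₂, v), .swap _ _, .refl _ _,
      fun x => (add_comm _ _).trans (arcFlow_add_arcFlow u₂ v u₁ x)⟩

/-- `d e` is `ends e` up to order, read as an arc from `(d e).1` to `(d e).2`. -/
theorem exists_balanced_orientation (ends : E → V × V) (s : Finset E) :
    ∃ d : E → V × V, (∀ e ∈ s, Sym2.Rel V (d e) (ends e)) ∧
      ∀ v, |∑ e ∈ s, arcFlow (d e) v| ≤ 1 := by
  classical
  induction s using Finset.strongInduction generalizing ends with
  | H s ih =>
  by_cases h : ∃ v, ∃ e₁ ∈ s, ∃ e₂ ∈ s, e₁ ≠ e₂ ∧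
      ((ends e₁).1 = v ∨ (ends e₁).2 = v) ∧ ((ends e₂).1 = v ∨ (ends e₂).2 = v)
  · obtain ⟨v, e₁, he₁, e₂, he₂, hne, hv₁, hv₂⟩ := h
    obtain ⟨u₁, hu₁⟩ := exists_rel_of_incident hv₁
    obtain ⟨u₂, hu₂⟩ := exists_rel_of_incident hv₂
    have he₁' : e₁ ∈ s.erase e₂ := mem_erase.2 ⟨hne, he₁⟩
    obtain ⟨d', hd', hbal⟩ :=
      ih (s.erase e₂) (erase_ssubset he₂) (Function.update ends e₁ (u₁, u₂))
    obtain ⟨q₁, q₂, hq₁, hq₂, hq⟩ := exists_subdivided_arcs v (by simpa using hd' e₁ he₁')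
    refine ⟨Function.update (Function.update d' e₁ q₁) e₂ q₂, fun e he => ?_, fun x => ?_⟩
    · by_cases h₂ : e = e₂
      · subst h₂
        simpa using hq₂.trans hu₂.symm
      by_cases h₁ : e = e₁
      · subst h₁
        simpa [hne] using hq₁.trans hu₁.symm
      simpa [h₁, h₂] using hd' e (mem_erase.2 ⟨h₂, he⟩)
    · rw [sum_update_update_eq_sum_erase (F := (arcFlow · x)) he₂ he₁' hne (hq x)]
      exact hbal x
  · simp only [not_exists, not_and] at h
    exact ⟨ends, fun e _ => .refl _ _, abs_sum_arcFlow_le_one_of_disjoint h⟩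

theorem exists_balanced_bicoloring {ends : E → V × V} {side : V → Bool}
    (hbip : ∀ e, side (ends e).1 ≠ side (ends e).2) (s : Finset E) :
    ∃ b : E → Bool, ∀ v,
      |(#{e ∈ s | b e = true ∧ ((ends e).1 = v ∨ (ends e).2 = v)} : ℤ) -
        #{e ∈ s | b e = false ∧ ((ends e).1 = v ∨ (ends e).2 = v)}| ≤ 1 := by
  obtain ⟨d, hd, hbal⟩ := exists_balanced_orientation ends s
  refine ⟨fun e => side (d e).1, fun v => ?_⟩
  have hiff e (he : e ∈ s) := fst_eq_iff_and_snd_eq_iff (hbip e) (hd e he) v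
  have htail : #{e ∈ s | (d e).1 = v} =
      #{e ∈ s | side (d e).1 = side v ∧ ((ends e).1 = v ∨ (ends e).2 = v)} :=
    congrArg card (filter_congr fun e he => (hiff e he).1)
  have hhead : #{e ∈ s | (d e).2 = v} =
      #{e ∈ s | side (d e).1 = !side v ∧ ((ends e).1 = v ∨ (ends e).2 = v)} :=
    congrArg card (filter_congr fun e he => (hiff e he).2)
  have h := hbal v
  rw [sum_arcFlow_eq, htail, hhead] at h
  cases hv : side v <;> simp only [hv, Bool.not_false, Bool.not_true] at h
  · rwa [abs_sub_comm]
  · exact h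

end Orientation

lemma two_mul_sq_add_sq_sub {a b x y : ℤ} (hsum : a + b = x + y) :
    2 * (x ^ 2 + y ^ 2 - (a ^ 2 + b ^ 2)) = (x - y) ^ 2 - (a - b) ^ 2 := by
  linear_combination (-(x + y + a + b)) * hsum

lemma sq_add_sq_le_of_abs_sub_le_one {a b x y : ℤ} (hsum : a + b = x + y) (hab : |a - b| ≤ 1) :
    a ^ 2 + b ^ 2 ≤ x ^ 2 + y ^ 2 := by
  have habs : |a - b| ≤ |x - y| := by
    rcases eq_or_ne (x - y) 0 with h | h
    · rw [h, abs_zero, abs_nonpos_iff]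
      rw [abs_le] at hab
      omega
    · exact hab.trans (Int.one_le_abs h)
  linarith [two_mul_sq_add_sq_sub hsum, sq_le_sq.2 habs]

lemma sq_add_sq_lt_of_abs_sub_le_one {a b x y : ℤ} (hsum : a + b = x + y) (hab : |a - b| ≤ 1)
    (hxy : 1 < |x - y|) : a ^ 2 + b ^ 2 < x ^ 2 + y ^ 2 := by
  linarith [two_mul_sq_add_sq_sub hsum, sq_lt_sq.2 (hab.trans_lt hxy)]

lemma sum_sub_sum_eq_of_eq_off_pair {ι M : Type*} [Fintype ι] [AddCommGroup M] {f g : ι → M}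
    {i j : ι} (hij : i ≠ j) (h : ∀ l, l ≠ i → l ≠ j → f l = g l) :
    ∑ l, f l - ∑ l, g l = f i + f j - (g i + g j) := by
  rw [← sum_sub_distrib, Fintype.sum_eq_add i j hij fun l hl => sub_eq_zero.2 (h l hl.1 hl.2)]
  abel

section Coloring

variable {V E : Type} [Fintype E] {k : ℕ} {ends : E → V × V}

lemma colorDegAt_eq_card [DecidableEq V] (c : E → Fin k) (i : Fin k) (v : V) :
    colorDegAt ends c i v = #{e | c e = i ∧ ((ends e).1 = v ∨ (ends e).2 = v)} := by
  rw [colorDegAt, Nat.card_eq_fintype_card, Fintype.card_subtype]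

lemma colorDegAt_add_colorDegAt [DecidableEq V] (c : E → Fin k) {i j : Fin k} (hij : i ≠ j)
    (v : V) : colorDegAt ends c i v + colorDegAt ends c j v =
      #{e | (c e = i ∨ c e = j) ∧ ((ends e).1 = v ∨ (ends e).2 = v)} := by
  classical
  rw [colorDegAt_eq_card, colorDegAt_eq_card, ← card_union_of_disjoint, ← filter_or]
  · simp only [or_and_right]
  · exact disjoint_filter.2 fun e _ hi hj => hij (hi.1.symm.trans hj.1)

theorem exists_rebalance {side : V → Bool} (hbip : ∀ e, side (ends e).1 ≠ side (ends e).2)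
    (c : E → Fin k) {i j : Fin k} (hij : i ≠ j) :
    ∃ c' : E → Fin k,
      (∀ l v, l ≠ i → l ≠ j → colorDegAt ends c' l v = colorDegAt ends c l v) ∧
      (∀ v, colorDegAt ends c' i v + colorDegAt ends c' j v =
        colorDegAt ends c i v + colorDegAt ends c j v) ∧
      ∀ v, |(colorDegAt ends c' i v : ℤ) - colorDegAt ends c' j v| ≤ 1 := by
  classical
  obtain ⟨b, hb⟩ := exists_balanced_bicoloring hbip {e | c e = i ∨ c e = j}
  let c' e := if c e = i ∨ c e = j then (if b e then i else j) else c e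
  have hi e : c' e = i ↔ (c e = i ∨ c e = j) ∧ b e = true := by grind
  have hj e : c' e = j ↔ (c e = i ∨ c e = j) ∧ b e = false := by grind
  have hl e l (hli : l ≠ i) (hlj : l ≠ j) : c' e = l ↔ c e = l := by grind
  refine ⟨c', fun l v hli hlj => ?_, fun v => ?_, fun v => ?_⟩
  · simp only [colorDegAt_eq_card, hl _ l hli hlj]
  · simp only [colorDegAt_add_colorDegAt _ hij]
    congr 1
    exact filter_congr fun e _ => by grind
  · simpa only [colorDegAt_eq_card, hi, hj, filter_filter, and_assoc] using hb v

noncomputable def colorPotential [Fintype V] (ends : E → V × V) (c : E → Fin k) : ℤ :=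
  ∑ v, ∑ l, (colorDegAt ends c l v : ℤ) ^ 2

lemma colorPotential_lt [Fintype V] {c c' : E → Fin k} {i j : Fin k} (hij : i ≠ j)
    (hother : ∀ l v, l ≠ i → l ≠ j → colorDegAt ends c' l v = colorDegAt ends c l v)
    (hsum : ∀ v, colorDegAt ends c' i v + colorDegAt ends c' j v =
      colorDegAt ends c i v + colorDegAt ends c j v)
    (hbal : ∀ v, |(colorDegAt ends c' i v : ℤ) - colorDegAt ends c' j v| ≤ 1)
    {v : V} (hv : 1 < |(colorDegAt ends c i v : ℤ) - colorDegAt ends c j v|) :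
    colorPotential ends c' < colorPotential ends c := by
  have hdiff x : ∑ l, (colorDegAt ends c' l x : ℤ) ^ 2 - ∑ l, (colorDegAt ends c l x : ℤ) ^ 2 =
      (colorDegAt ends c' i x : ℤ) ^ 2 + (colorDegAt ends c' j x : ℤ) ^ 2 -
        ((colorDegAt ends c i x : ℤ) ^ 2 + (colorDegAt ends c j x : ℤ) ^ 2) :=
    sum_sub_sum_eq_of_eq_off_pair hij fun l hli hlj => by rw [hother l x hli hlj]
  have hsum' x : (colorDegAt ends c' i x : ℤ) + colorDegAt ends c' j x =
      colorDegAt ends c i x + colorDegAt ends c j x := by exact_mod_cast hsum x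
  refine sum_lt_sum (fun x _ => ?_) ⟨v, mem_univ v, ?_⟩
  · linarith [hdiff x, sq_add_sq_le_of_abs_sub_le_one (hsum' x) (hbal x)]
  · linarith [hdiff v, sq_add_sq_lt_of_abs_sub_le_one (hsum' v) (hbal v) hv]

end Coloring

end BipartiteEquitable

open BipartiteEquitable in
/-- Every finite bipartite multigraph admits an equitable `k`-edge-coloring for every
positive integer `k`: at each vertex, the numbers of incident edges of any two colors
differ by at most one. -/
theorem bipartite_equitable_coloring {V E : Type} [Fintype V] [Fintype E]
    (ends : E → V × V) (side : V → Bool)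
    (hbip : ∀ e, side (ends e).1 ≠ side (ends e).2)
    (k : ℕ) (hk : 0 < k) :
    ∃ c : E → Fin k, ∀ (v : V) (i j : Fin k),
      |(colorDegAt ends c i v : ℤ) - (colorDegAt ends c j v : ℤ)| ≤ 1 := by
  classical
  have : Nonempty (Fin k) := ⟨⟨0, hk⟩⟩
  obtain ⟨c, -, hmin⟩ :=
    exists_min_image (univ : Finset (E → Fin k)) (colorPotential ends) univ_nonempty
  refine ⟨c, fun v i j => not_lt.1 fun hv => ?_⟩
  have hij : i ≠ j := by
    rintro rfl
    simp at hv
  obtain ⟨c', hother, hsum, hbal⟩ := exists_rebalance hbip c hij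
  exact (colorPotential_lt hij hother hsum hbal hv).not_ge (hmin c' (mem_univ c'))
end

section
/- Every finite even multigraph (every vertex has even degree) admits an evenly-equitable k-edge-coloring for every positive integer k: each color class gives every vertex even degree, and at each vertex the degrees in any two color classes differ by at most 2. -/
/-- The degree of `v` (loops count twice). -/
noncomputable def mDeg {V E : Type} [Fintype E] (ends : E → V × V) (v : V) : ℕ :=
  Nat.card {e : E // (ends e).1 = v} + Nat.card {e : E // (ends e).2 = v}

/-- The degree of `v` in the color class `i` (loops count twice). -/
noncomputable def mColorDeg {V E : Type} [Fintype E] {k : ℕ} (ends : E → V × V) (c : E → Fin k)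
    (i : Fin k) (v : V) : ℕ :=
  Nat.card {e : E // c e = i ∧ (ends e).1 = v} + Nat.card {e : E // c e = i ∧ (ends e).2 = v}

open Function

section Util

/-- A finite type of even cardinality has a fixed-point-free involution. -/
lemma exists_fpfree_involution (α : Type*) [Fintype α] (h : Even (Fintype.card α)) :
    ∃ f : α → α, Involutive f ∧ ∀ a, f a ≠ a := by
  obtain ⟨n, hn⟩ := h
  have hcard : Fintype.card α = Fintype.card (Fin n × Bool) := by
    simp [hn]; omega
  let φ := Fintype.equivOfCardEq hcard
  refine ⟨fun a => φ.symm ((φ a).1, !(φ a).2), fun a => by simp, fun a h => ?_⟩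
  apply_fun φ at h
  simp at h
  have := congrArg Prod.snd h
  simp at this

/-- Given two fixed-point-free involutions on a type, there is a `Bool`-coloring that is
flipped by both. -/
lemma exists_anti_coloring {X : Type*} (σ τ : X → X)
    (hσi : Involutive σ) (hτi : Involutive τ)
    (hσf : ∀ x, σ x ≠ x) (hτf : ∀ x, τ x ≠ x) :
    ∃ g : X → Bool, (∀ x, g (τ x) = !g x) ∧ (∀ x, g (σ x) = !g x) := by
  classical
  set τp : Equiv.Perm X := hτi.toPerm τ with hτp
  set σp : Equiv.Perm X := hσi.toPerm σ with hσp
  set π : Equiv.Perm X := τp.trans σp with hπ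
  have happ : ∀ x, π x = σ (τ x) := fun _ => rfl
  have hτinv : τp⁻¹ = τp := rfl
  have hσinv : σp⁻¹ = σp := rfl
  have hτapp : ∀ x, τp x = τ x := fun _ => rfl
  have hσapp : ∀ x, σp x = σ x := fun _ => rfl
  have hτconj1 : τp * π * τp⁻¹ = π⁻¹ := by
    ext x
    simp [hπ, hτp, hσp, Equiv.Perm.mul_apply, Equiv.Perm.inv_def, Equiv.symm_trans_apply,
      Involutive.toPerm, hτi _, hσi _]
  have hσconj1 : σp * π * σp⁻¹ = π⁻¹ := by
    ext x
    simp [hπ, hτp, hσp, Equiv.Perm.mul_apply, Equiv.Perm.inv_def, Equiv.symm_trans_apply,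
      Involutive.toPerm, hτi _, hσi _]
  have hτconj : ∀ a : ℤ, τp * (π ^ a * τp⁻¹) = π ^ (-a) := by
    intro a
    have h1 := map_zpow (MulAut.conj τp) π a
    simp only [MulAut.conj_apply] at h1
    rw [mul_assoc] at h1
    rw [h1, hτconj1, inv_zpow, ← zpow_neg]
  have hσconj : ∀ a : ℤ, σp * (π ^ a * σp⁻¹) = π ^ (-a) := by
    intro a
    have h1 := map_zpow (MulAut.conj σp) π a
    simp only [MulAut.conj_apply] at h1
    rw [mul_assoc] at h1
    rw [h1, hσconj1, inv_zpow, ← zpow_neg]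
  have hτmove : ∀ (a : ℤ) (y : X), τ ((π ^ a) y) = (π ^ (-a)) (τ y) := by
    intro a y
    have h2 := congrArg (fun (p : Equiv.Perm X) => p (τ y)) (hτconj a)
    simp only [Equiv.Perm.mul_apply, hτinv, hτapp, hτi _] at h2
    exact h2
  have hσmove : ∀ (a : ℤ) (y : X), σ ((π ^ a) y) = (π ^ (-a)) (σ y) := by
    intro a y
    have h2 := congrArg (fun (p : Equiv.Perm X) => p (σ y)) (hσconj a)
    simp only [Equiv.Perm.mul_apply, hσinv, hσapp, hσi _] at h2
    exact h2
  -- the key lemma: `τ x` is never on the `π`-cycle of `x`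
  have key : ∀ (x : X) (n : ℤ), (π ^ n) x ≠ τ x := by
    intro x n h
    rcases Int.even_or_odd n with ⟨a, ha⟩ | ⟨a, ha⟩
    · apply hτf ((π ^ a) x)
      rw [hτmove a x, ← h, ← Equiv.Perm.mul_apply, ← zpow_add,
        show -a + n = a by omega]
    · apply hσf ((π ^ (a + 1)) x)
      have hσx : σ x = (π ^ (n + 1)) x := by
        have : σ x = π (τ x) := by rw [happ (τ x), hτi x]
        rw [this, ← h, ← Equiv.Perm.mul_apply, ← zpow_one_add,
          show (1 + n : ℤ) = n + 1 by ring]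
      rw [hσmove (a + 1) x, hσx, ← Equiv.Perm.mul_apply, ← zpow_add,
        show -(a + 1) + (n + 1) = a + 1 by omega]
  -- quotient by the cycles of π
  letI s : Setoid X := ⟨π.SameCycle,
    ⟨fun _ => ⟨0, by simp⟩, fun h => h.symm, fun h h' => h.trans h'⟩⟩
  have hτwd : ∀ x y : X, π.SameCycle x y → π.SameCycle (τ x) (τ y) := by
    rintro x y ⟨i, hi⟩
    exact ⟨-i, by rw [← hτmove i x, hi]⟩
  let T : Quotient s → Quotient s := Quotient.map τ hτwd
  have hTmk : ∀ x : X, T ⟦x⟧ = ⟦τ x⟧ := fun x => rfl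
  have hT2 : ∀ q, T (T q) = q := by
    intro q; induction q using Quotient.ind with | _ x =>
    rw [hTmk, hTmk, hτi _]
  have hTf : ∀ q, T q ≠ q := by
    intro q; induction q using Quotient.ind with | _ x =>
    intro hq
    rw [hTmk] at hq
    obtain ⟨i, hi⟩ := Quotient.exact hq
    apply key x (-i)
    have hcancel : (π ^ (-i)) ((π ^ i) (τ x)) = τ x := by
      rw [← Equiv.Perm.mul_apply, ← zpow_add, show (-i) + i = 0 by ring, zpow_zero]
      simp
    rw [← hcancel, hi]
  letI s2 : Setoid (Quotient s) := ⟨fun q q' => q' = q ∨ q' = T q, by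
    refine ⟨fun q => Or.inl rfl, ?_, ?_⟩
    · rintro a b (h | h)
      · exact Or.inl h.symm
      · right; rw [h, hT2]
    · rintro a b c (hb | hb) (hc | hc)
      · exact Or.inl (hc.trans hb)
      · rw [hb] at hc; exact Or.inr hc
      · rw [hb] at hc; exact Or.inr hc
      · rw [hb, hT2] at hc; exact Or.inl hc⟩
  let rep : Quotient s → Quotient s := fun q => (Quotient.mk s2 q).out
  have hrep_mem : ∀ q, rep q = q ∨ rep q = T q := by
    intro q
    have h1 : Quotient.mk s2 (rep q) = Quotient.mk s2 q := Quotient.out_eq _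
    have h2 := Quotient.exact h1
    rcases h2 with h | h
    · exact Or.inl h.symm
    · right
      have h3 := congrArg T h
      rw [hT2] at h3
      exact h3.symm
  have hrep_T : ∀ q, rep (T q) = rep q := by
    intro q
    show (Quotient.mk s2 (T q)).out = (Quotient.mk s2 q).out
    congr 1
    exact Quotient.sound (Or.inr (hT2 q).symm)
  let g : X → Bool := fun x => decide (rep ⟦x⟧ = ⟦x⟧)
  have hgτ : ∀ x, g (τ x) = !g x := by
    intro x
    have hTx : (⟦τ x⟧ : Quotient s) = T ⟦x⟧ := rfl
    rcases hrep_mem ⟦x⟧ with h | h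
    · have hx : g x = true := decide_eq_true h
      have hne : rep ⟦τ x⟧ ≠ ⟦τ x⟧ := by
        rw [hTx, hrep_T, h]
        intro hcon
        exact hTf ⟦x⟧ (by rw [← hcon])
      have : g (τ x) = false := decide_eq_false hne
      rw [this, hx]; rfl
    · have hne : rep ⟦x⟧ ≠ ⟦x⟧ := by
        rw [h]; exact hTf ⟦x⟧
      have hx : g x = false := decide_eq_false hne
      have heq : rep ⟦τ x⟧ = ⟦τ x⟧ := by
        rw [hTx, hrep_T, h]
      have : g (τ x) = true := decide_eq_true heq
      rw [this, hx]; rfl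
  have hστ : ∀ x, (⟦σ x⟧ : Quotient s) = ⟦τ x⟧ := by
    intro x
    refine Quotient.sound ⟨-1, ?_⟩
    rw [zpow_neg_one]
    show τ (σ (σ x)) = τ x
    rw [hσi x]
  have hgσ : ∀ x, g (σ x) = !g x := by
    intro x
    have : g (σ x) = g (τ x) := by
      show decide (rep ⟦σ x⟧ = ⟦σ x⟧) = decide (rep ⟦τ x⟧ = ⟦τ x⟧)
      rw [hστ x]
    rw [this, hgτ x]
  exact ⟨g, hgτ, hgσ⟩

end Util

section OrientB
variable {V E : Type} [Fintype E]

/-- The position of a half-edge. -/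
def hpos (ends : E → V × V) (x : E × Bool) : V := if x.2 then (ends x.1).2 else (ends x.1).1

/-- Splitting half-edges satisfying a predicate according to an arbitrary `Bool`-marking. -/
def splitEquiv (ends : E → V × V) (p : E × Bool → Prop) (o : E → Bool) :
    {x : E × Bool // p x} ≃ {e : E // p (e, o e)} ⊕ {e : E // p (e, !(o e))} where
  toFun x :=
    if h : x.1.2 = o x.1.1 then
      Sum.inl ⟨x.1.1, by obtain ⟨⟨e, b⟩, hp⟩ := x; simp only at h; rw [← h]; exact hp⟩
    else
      Sum.inr ⟨x.1.1, by
        obtain ⟨⟨e, b⟩, hp⟩ := x; simp only at h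
        have : b = !(o e) := by revert h; cases b <;> cases o e <;> simp
        rw [← this]; exact hp⟩
  invFun y :=
    match y with
    | .inl ⟨e, h⟩ => ⟨(e, o e), h⟩
    | .inr ⟨e, h⟩ => ⟨(e, !(o e)), h⟩
  left_inv := by
    rintro ⟨⟨e, b⟩, hp⟩
    by_cases h : b = o e
    · subst h
      simp
    · have hb : b = !(o e) := by revert h; cases b <;> cases o e <;> simp
      subst hb
      simp
  right_inv := by
    rintro (⟨e, h⟩ | ⟨e, h⟩) <;> simp

lemma card_split (ends : E → V × V) (p : E × Bool → Prop) (o : E → Bool) :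
    Nat.card {x : E × Bool // p x}
      = Nat.card {e : E // p (e, o e)} + Nat.card {e : E // p (e, !(o e))} := by
  rw [Nat.card_congr (splitEquiv ends p o), Nat.card_sum]

lemma mDeg_eq_card_fiber (ends : E → V × V) (v : V) :
    mDeg ends v = Nat.card {x : E × Bool // hpos ends x = v} := by
  rw [card_split ends (fun x => hpos ends x = v) (fun _ => false)]
  unfold mDeg
  have ha : Nat.card {e : E // (ends e).1 = v} = Nat.card {e : E // hpos ends (e, false) = v} :=
    Nat.card_congr (Equiv.subtypeEquivRight (by intro e; simp [hpos]))
  have hb : Nat.card {e : E // (ends e).2 = v} = Nat.card {e : E // hpos ends (e, !false) = v} :=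
    Nat.card_congr (Equiv.subtypeEquivRight (by intro e; simp [hpos]))
  rw [ha, hb]

/-- Every even multigraph has a balanced orientation. -/
lemma exists_orientation (ends : E → V × V) (heven : ∀ v, Even (mDeg ends v)) :
    ∃ o : E → Bool, ∀ v,
      Nat.card {e : E // hpos ends (e, o e) = v}
        = Nat.card {e : E // hpos ends (e, !(o e)) = v} := by
  classical
  set X := E × Bool with hX
  -- fixed-point-free involution on each fiber of `hpos`
  have hfib : ∀ v : V, ∃ f : {x : X // hpos ends x = v} → {x : X // hpos ends x = v},
      Involutive f ∧ ∀ a, f a ≠ a := by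
    intro v
    apply exists_fpfree_involution
    have := heven v
    rwa [mDeg_eq_card_fiber ends v, Nat.card_eq_fintype_card] at this
  choose ι hι2 hιf using hfib
  -- glue into a global involution
  let S := Σ v : V, {x : X // hpos ends x = v}
  let eS : S ≃ X := Equiv.sigmaFiberEquiv (hpos ends)
  have heS1 : ∀ y : S, hpos ends (eS y) = y.1 := fun y => y.2.2
  let σ' : S → S := fun y => ⟨y.1, ι y.1 y.2⟩
  have hσ'2 : Involutive σ' := by
    intro y
    show (⟨y.1, ι y.1 (ι y.1 y.2)⟩ : S) = y
    rw [hι2 y.1 y.2]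
  have hσ'f : ∀ y, σ' y ≠ y := by
    rintro ⟨v, z⟩ h
    apply hιf v z
    exact eq_of_heq (Sigma.mk.inj_iff.mp h).2
  let σ : X → X := fun x => eS (σ' (eS.symm x))
  have hσ2 : Involutive σ := by
    intro x
    simp only [σ, Equiv.symm_apply_apply]
    rw [hσ'2 (eS.symm x), Equiv.apply_symm_apply]
  have hσf : ∀ x, σ x ≠ x := by
    intro x h
    apply hσ'f (eS.symm x)
    have h2 := congrArg eS.symm h
    simp only [σ, Equiv.symm_apply_apply] at h2
    exact h2
  have hσpos : ∀ x, hpos ends (σ x) = hpos ends x := by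
    intro x
    show hpos ends (eS (σ' (eS.symm x))) = _
    rw [heS1]
    show (eS.symm x).1 = _
    conv_rhs => rw [← Equiv.apply_symm_apply eS x]
    rw [heS1]
  let τ : X → X := fun x => (x.1, !x.2)
  have hτ2 : Involutive τ := by intro x; simp [τ]
  have hτf : ∀ x, τ x ≠ x := by
    intro x h
    have := congrArg Prod.snd h
    simp [τ] at this
  obtain ⟨g, hgτ, hgσ⟩ := exists_anti_coloring σ τ hσ2 hτ2 hσf hτf
  refine ⟨fun e => g (e, true), fun v => ?_⟩
  set o : E → Bool := fun e => g (e, true) with ho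
  have hgo : ∀ e, g (e, o e) = true := by
    intro e
    cases hb : g (e, true)
    · have : g (τ (e, false)) = !g (e, false) := hgτ (e, false)
      simp only [τ] at this
      have h2 : g (e, false) = true := by
        cases hgf : g (e, false)
        · rw [hgf] at this; simp at this; rw [this] at hb; cases hb
        · rfl
      simpa [o, hb] using h2
    · simpa [o, hb] using hb
  have hgno : ∀ e, g (e, !(o e)) = false := by
    intro e
    have : g (τ (e, o e)) = !g (e, o e) := hgτ (e, o e)
    simp only [τ] at this
    rw [this, hgo e]
    rfl
  -- heads ≃ true half-edges at v, tails ≃ false half-edges at v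
  have h1 : Nat.card {e : E // hpos ends (e, o e) = v}
      = Nat.card {x : X // hpos ends x = v ∧ g x = true} := by
    apply Nat.card_congr
    refine ⟨fun y => ⟨(y.1, o y.1), y.2, hgo y.1⟩, fun x => ⟨x.1.1, ?_⟩, ?_, ?_⟩
    · obtain ⟨⟨e, b⟩, hx1, hx2⟩ := x
      have hb : b = o e := by
        by_contra hcon
        have : b = !(o e) := by revert hcon; cases b <;> cases o e <;> simp
        rw [this] at hx2
        rw [hgno e] at hx2
        cases hx2
      simpa [← hb] using hx1
    · rintro ⟨e, he⟩; rfl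
    · rintro ⟨⟨e, b⟩, hx1, hx2⟩
      have hb : b = o e := by
        by_contra hcon
        have : b = !(o e) := by revert hcon; cases b <;> cases o e <;> simp
        rw [this, hgno e] at hx2
        cases hx2
      subst hb; rfl
  have h2 : Nat.card {e : E // hpos ends (e, !(o e)) = v}
      = Nat.card {x : X // hpos ends x = v ∧ g x = false} := by
    apply Nat.card_congr
    refine ⟨fun y => ⟨(y.1, !(o y.1)), y.2, hgno y.1⟩, fun x => ⟨x.1.1, ?_⟩, ?_, ?_⟩
    · obtain ⟨⟨e, b⟩, hx1, hx2⟩ := x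
      have hb : b = !(o e) := by
        by_contra hcon
        have : b = o e := by revert hcon; cases b <;> cases o e <;> simp
        rw [this, hgo e] at hx2
        cases hx2
      simpa [← hb] using hx1
    · rintro ⟨e, he⟩; rfl
    · rintro ⟨⟨e, b⟩, hx1, hx2⟩
      have hb : b = !(o e) := by
        by_contra hcon
        have : b = o e := by revert hcon; cases b <;> cases o e <;> simp
        rw [this, hgo e] at hx2
        cases hx2
      subst hb; rfl
  rw [h1, h2]
  -- σ is a bijection between the two sides
  apply Nat.card_congr
  refine ⟨fun x => ⟨σ x.1, by rw [hσpos]; exact x.2.1, by rw [hgσ, x.2.2]; rfl⟩,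
          fun x => ⟨σ x.1, by rw [hσpos]; exact x.2.1, by rw [hgσ, x.2.2]; rfl⟩, ?_, ?_⟩
  · rintro ⟨x, hx⟩
    simp [hσ2 x]
  · rintro ⟨x, hx⟩
    simp [hσ2 x]

end OrientB

lemma natcard_subtype {α : Type*} [Fintype α] (p : α → Prop) [DecidablePred p] :
    Nat.card {x : α // p x} = (Finset.univ.filter p).card := by
  rw [Nat.card_eq_fintype_card, Fintype.card_subtype]

/-- König-type theorem: a `k`-regular bipartite multigraph (given by a set of edges `F`
with endpoint maps `L R : F → W`) has a proper `k`-edge-coloring. -/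
lemma koenig_coloring (k : ℕ) :
    ∀ (F : Type) [Fintype F] (W : Type) [Fintype W] (L R : F → W),
    (∀ w, Nat.card {f : F // L f = w} = k) → (∀ w, Nat.card {f : F // R f = w} = k) →
    ∃ χ : F → Fin k,
      (∀ w (i : Fin k), ∃! f, L f = w ∧ χ f = i) ∧
      (∀ w (i : Fin k), ∃! f, R f = w ∧ χ f = i) := by
  induction k with
  | zero =>
    intro F _ W _ L R hL _
    classical
    have hFe : IsEmpty F := by
      constructor
      intro f
      have h1 := hL (L f)
      rw [Nat.card_eq_fintype_card] at h1
      have h2 := Fintype.card_eq_zero_iff.mp h1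
      exact h2.elim ⟨f, rfl⟩
    refine ⟨fun f => (hFe.false f).elim, fun w i => i.elim0, fun w i => i.elim0⟩
  | succ k ih =>
    intro F _ W _ L R hL hR
    classical
    -- Hall's condition for the neighborhood system
    set t : W → Finset W := fun w => ((Finset.univ.filter (fun f => L f = w)).image R) with ht
    have hLcard : ∀ w, (Finset.univ.filter (fun f => L f = w)).card = k + 1 := by
      intro w; rw [← natcard_subtype]; exact hL w
    have hRcard : ∀ w, (Finset.univ.filter (fun f => R f = w)).card = k + 1 := by
      intro w; rw [← natcard_subtype]; exact hR w
    have hall : ∀ s : Finset W, s.card ≤ (s.biUnion t).card := by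
      intro s
      have hES : (Finset.univ.filter (fun f => L f ∈ s))
          = s.biUnion (fun w => Finset.univ.filter (fun f => L f = w)) := by
        ext f
        simp only [Finset.mem_filter, Finset.mem_univ, true_and, Finset.mem_biUnion]
        constructor
        · intro h; exact ⟨L f, h, rfl⟩
        · rintro ⟨w, hw, hfw⟩; rw [hfw]; exact hw
      have hcard1 : (Finset.univ.filter (fun f => L f ∈ s)).card = s.card * (k + 1) := by
        rw [hES, Finset.card_biUnion]
        · rw [Finset.sum_congr rfl (fun w _ => hLcard w), Finset.sum_const, smul_eq_mul]
        · intro x _ y _ hxy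
          simp only [Finset.disjoint_filter]
          intro f _ hfx
          rw [hfx]; exact hxy
      have hsub : (Finset.univ.filter (fun f => L f ∈ s))
          ⊆ (s.biUnion t).biUnion (fun u => Finset.univ.filter (fun f => R f = u)) := by
        intro f hf
        simp only [Finset.mem_filter, Finset.mem_univ, true_and] at hf
        rw [Finset.mem_biUnion]
        refine ⟨R f, ?_, by simp⟩
        rw [Finset.mem_biUnion]
        exact ⟨L f, hf, by simp [ht, Finset.mem_image, Finset.mem_filter]; exact ⟨f, rfl, rfl⟩⟩
      have hcard2 : (Finset.univ.filter (fun f => L f ∈ s)).card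
          ≤ (s.biUnion t).card * (k + 1) := by
        calc (Finset.univ.filter (fun f => L f ∈ s)).card
            ≤ ((s.biUnion t).biUnion (fun u => Finset.univ.filter (fun f => R f = u))).card :=
              Finset.card_le_card hsub
          _ ≤ ∑ u ∈ s.biUnion t, (Finset.univ.filter (fun f => R f = u)).card :=
              Finset.card_biUnion_le
          _ = (s.biUnion t).card * (k + 1) := by
              rw [Finset.sum_congr rfl (fun u _ => hRcard u), Finset.sum_const, smul_eq_mul]
      have := hcard1 ▸ hcard2
      exact Nat.le_of_mul_le_mul_right this (Nat.succ_pos k)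
    obtain ⟨φ, hφinj, hφmem⟩ := (Finset.all_card_le_biUnion_card_iff_exists_injective t).mp hall
    have hex : ∀ w, ∃ f : F, L f = w ∧ R f = φ w := by
      intro w
      have h1 := hφmem w
      simp only [ht, Finset.mem_image, Finset.mem_filter, Finset.mem_univ, true_and] at h1
      obtain ⟨f, hf1, hf2⟩ := h1
      exact ⟨f, hf1, hf2⟩
    choose pick hpL hpR using hex
    have hφbij : Function.Bijective φ := Finite.injective_iff_bijective.mp hφinj
    -- remove the perfect matching `pick`
    let F' := {f : F // ∀ w, f ≠ pick w}
    have hL' : ∀ w, Nat.card {f : F' // L f.1 = w} = k := by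
      intro w
      have he : {f : F // (∀ w', f ≠ pick w') ∧ L f = w} ≃ {f : F' // L f.1 = w} :=
        { toFun := fun f => ⟨⟨f.1, f.2.1⟩, f.2.2⟩
          invFun := fun f => ⟨f.1.1, f.1.2, f.2⟩
          left_inv := fun f => rfl
          right_inv := fun f => rfl }
      rw [← Nat.card_congr he, natcard_subtype]
      have hfe : Finset.univ.filter (fun f => (∀ w', f ≠ pick w') ∧ L f = w)
          = (Finset.univ.filter (fun f => L f = w)).erase (pick w) := by
        ext f
        simp only [Finset.mem_filter, Finset.mem_univ, true_and, Finset.mem_erase]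
        constructor
        · rintro ⟨h1, h2⟩; exact ⟨h1 w, h2⟩
        · rintro ⟨h1, h2⟩
          refine ⟨fun w' hfw' => ?_, h2⟩
          have : L f = w' := by rw [hfw']; exact hpL w'
          rw [h2] at this
          exact h1 (by rw [hfw', ← this])
      have hmem : pick w ∈ Finset.univ.filter (fun f => L f = w) := by simp [hpL w]
      rw [hfe, Finset.card_erase_of_mem hmem, hLcard w]
      rfl
    have hR' : ∀ w, Nat.card {f : F' // R f.1 = w} = k := by
      intro w
      obtain ⟨w'', hw''⟩ := hφbij.2 w
      have he : {f : F // (∀ w', f ≠ pick w') ∧ R f = w} ≃ {f : F' // R f.1 = w} :=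
        { toFun := fun f => ⟨⟨f.1, f.2.1⟩, f.2.2⟩
          invFun := fun f => ⟨f.1.1, f.1.2, f.2⟩
          left_inv := fun f => rfl
          right_inv := fun f => rfl }
      rw [← Nat.card_congr he, natcard_subtype]
      have hfe : Finset.univ.filter (fun f => (∀ w', f ≠ pick w') ∧ R f = w)
          = (Finset.univ.filter (fun f => R f = w)).erase (pick w'') := by
        ext f
        simp only [Finset.mem_filter, Finset.mem_univ, true_and, Finset.mem_erase]
        constructor
        · rintro ⟨h1, h2⟩; exact ⟨h1 w'', h2⟩
        · rintro ⟨h1, h2⟩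
          refine ⟨fun w' hfw' => ?_, h2⟩
          have hRf : R f = φ w' := by rw [hfw']; exact hpR w'
          rw [h2] at hRf
          have : w' = w'' := hφinj (by rw [← hRf, hw''])
          exact h1 (by rw [hfw', this])
      have hmem : pick w'' ∈ Finset.univ.filter (fun f => R f = w) := by simp [hpR w'', hw'']
      rw [hfe, Finset.card_erase_of_mem hmem, hRcard w]
      rfl
    obtain ⟨χ', hχ'L, hχ'R⟩ := ih F' W (fun f => L f.1) (fun f => R f.1) hL' hR'
    -- extend by the matching, colored with the last color
    set χ : F → Fin (k + 1) := fun f => if h : ∃ w, f = pick w then Fin.last k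
            else (χ' ⟨f, by push_neg at h; exact h⟩).castSucc with hχ
    refine ⟨χ, ?_, ?_⟩
    · intro w i
      induction i using Fin.lastCases with
      | last =>
        refine ⟨pick w, ⟨hpL w, by simp only [hχ]; rw [dif_pos ⟨w, rfl⟩]⟩, ?_⟩
        rintro f' ⟨hf'L, hf'χ⟩
        simp only [hχ] at hf'χ
        by_cases hc : ∃ w', f' = pick w'
        · obtain ⟨w', hw'⟩ := hc
          have : w' = w := by rw [← hpL w', ← hw', hf'L]
          rw [hw', this]
        · rw [dif_neg hc] at hf'χ
          exact absurd hf'χ (Fin.castSucc_lt_last _).ne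
      | cast i' =>
        obtain ⟨f₀, ⟨hf₀L, hf₀χ⟩, huniq⟩ := hχ'L w i'
        have hf₀n : ¬∃ w', f₀.1 = pick w' := by
          rintro ⟨w', hw'⟩; exact f₀.2 w' hw'
        refine ⟨f₀.1, ⟨hf₀L, ?_⟩, ?_⟩
        · simp only [hχ]
          rw [dif_neg hf₀n, ← hf₀χ]
        · rintro f' ⟨hf'L, hf'χ⟩
          simp only [hχ] at hf'χ
          by_cases hc : ∃ w', f' = pick w'
          · rw [dif_pos hc] at hf'χ
            exact absurd hf'χ.symm (Fin.castSucc_lt_last _).ne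
          · rw [dif_neg hc] at hf'χ
            push_neg at hc
            have := huniq ⟨f', hc⟩ ⟨hf'L, Fin.castSucc_injective k hf'χ⟩
            rw [← this]
    · intro w i
      induction i using Fin.lastCases with
      | last =>
        obtain ⟨w'', hw''⟩ := hφbij.2 w
        refine ⟨pick w'', ⟨by rw [hpR w'', hw''], by simp only [hχ]; rw [dif_pos ⟨w'', rfl⟩]⟩, ?_⟩
        rintro f' ⟨hf'R, hf'χ⟩
        simp only [hχ] at hf'χ
        by_cases hc : ∃ w', f' = pick w'
        · obtain ⟨w', hw'⟩ := hc
          have h5 : φ w' = w := by rw [← hpR w', ← hw', hf'R]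
          have : w' = w'' := hφinj (by rw [h5, hw''])
          rw [hw', this]
        · rw [dif_neg hc] at hf'χ
          exact absurd hf'χ (Fin.castSucc_lt_last _).ne
      | cast i' =>
        obtain ⟨f₀, ⟨hf₀R, hf₀χ⟩, huniq⟩ := hχ'R w i'
        have hf₀n : ¬∃ w', f₀.1 = pick w' := by
          rintro ⟨w', hw'⟩; exact f₀.2 w' hw'
        refine ⟨f₀.1, ⟨hf₀R, ?_⟩, ?_⟩
        · simp only [hχ]
          rw [dif_neg hf₀n, ← hf₀χ]
        · rintro f' ⟨hf'R, hf'χ⟩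
          simp only [hχ] at hf'χ
          by_cases hc : ∃ w', f' = pick w'
          · rw [dif_pos hc] at hf'χ
            exact absurd hf'χ.symm (Fin.castSucc_lt_last _).ne
          · rw [dif_neg hc] at hf'χ
            push_neg at hc
            have := huniq ⟨f', hc⟩ ⟨hf'R, Fin.castSucc_injective k hf'χ⟩
            rw [← this]

lemma natcard_subtype' {α : Type*} [Fintype α] (p : α → Prop) [DecidablePred p] :
    Nat.card {x : α // p x} = (Finset.univ.filter p).card := by
  rw [Nat.card_eq_fintype_card, Fintype.card_subtype]

def sumFiberEquiv {α β γ : Type*} (f : α ⊕ β → γ) (c : γ) :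
    {x : α ⊕ β // f x = c} ≃ {a : α // f (Sum.inl a) = c} ⊕ {b : β // f (Sum.inr b) = c} where
  toFun x := match x with
    | ⟨.inl a, h⟩ => .inl ⟨a, h⟩
    | ⟨.inr b, h⟩ => .inr ⟨b, h⟩
  invFun y := match y with
    | .inl ⟨a, h⟩ => ⟨.inl a, h⟩
    | .inr ⟨b, h⟩ => ⟨.inr b, h⟩
  left_inv := by rintro ⟨(a | b), h⟩ <;> rfl
  right_inv := by rintro (⟨a, h⟩ | ⟨b, h⟩) <;> rfl

def sigmaFstFiberEquiv {ι : Type*} (β : ι → Type*) (v : ι) :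
    {x : Σ i, β i // x.1 = v} ≃ β v where
  toFun x := x.2 ▸ x.1.2
  invFun b := ⟨⟨v, b⟩, rfl⟩
  left_inv := by rintro ⟨⟨i, b⟩, h⟩; subst h; rfl
  right_inv := fun b => rfl

lemma div_eq_iff_aux {k : ℕ} (hk : 0 < k) (x j : ℕ) :
    x / k = j ↔ j * k ≤ x ∧ x < j * k + k := by
  constructor
  · intro h
    subst h
    refine ⟨Nat.div_mul_le_self x k, ?_⟩
    have e := Nat.div_add_mod x k
    have hm := Nat.mod_lt x hk
    have : k * (x / k) = x / k * k := Nat.mul_comm _ _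
    linarith
  · rintro ⟨h1, h2⟩
    have hl : j ≤ x / k := (Nat.le_div_iff_mul_le hk).mpr h1
    have hr : x / k < j + 1 := by
      rw [Nat.div_lt_iff_lt_mul hk]
      have : (j + 1) * k = j * k + k := by ring
      omega
    omega

lemma count_div_fiber {k : ℕ} (hk : 0 < k) (m j : ℕ) :
    Nat.card {p : Fin m // (p : ℕ) / k = j} = min k (m - j * k) := by
  classical
  rw [natcard_subtype']
  have hbij : (Finset.univ.filter (fun p : Fin m => (p : ℕ) / k = j)).card
      = ((Finset.range m).filter (fun x => x / k = j)).card := by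
    refine Finset.card_bij (fun p _ => (p : ℕ)) ?_ ?_ ?_
    · intro p hp
      simp only [Finset.mem_filter, Finset.mem_univ, true_and] at hp
      simp [Finset.mem_filter, Finset.mem_range, p.2, hp]
    · intro p _ p' _ h
      exact Fin.ext h
    · intro x hx
      simp only [Finset.mem_filter, Finset.mem_range] at hx
      exact ⟨⟨x, hx.1⟩, by simp [hx.2], rfl⟩
  rw [hbij]
  have hIco : (Finset.range m).filter (fun x => x / k = j)
      = Finset.Ico (j * k) (min (j * k + k) m) := by
    ext x
    simp only [Finset.mem_filter, Finset.mem_range, Finset.mem_Ico, lt_min_iff,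
      div_eq_iff_aux hk]
    tauto
  rw [hIco, Nat.card_Ico]
  generalize j * k = a
  omega
lemma balanced_coloring (k : ℕ) (hk : 0 < k) (V A : Type) [Fintype V] [Fintype A]
    (hd tl : A → V)
    (bal : ∀ v, Nat.card {a : A // hd a = v} = Nat.card {a : A // tl a = v}) :
    ∃ χ : A → Fin k, ∀ (v : V) (i j : Fin k),
      Nat.card {a : A // χ a = i ∧ hd a = v} = Nat.card {a : A // χ a = i ∧ tl a = v} ∧
      Nat.card {a : A // χ a = i ∧ hd a = v} ≤ Nat.card {a : A // χ a = j ∧ hd a = v} + 1 := by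
  classical
  set m : V → ℕ := fun v => Nat.card {a : A // hd a = v} with hm
  set q : V → ℕ := fun v => m v / k with hq
  set n : V → ℕ := fun v => if m v % k = 0 then q v else q v + 1 with hn
  have hmn : ∀ v, m v ≤ n v * k := by
    intro v
    have e1 := Nat.div_add_mod (m v) k
    have hr := Nat.mod_lt (m v) hk
    by_cases h : m v % k = 0
    · have hnv : n v = q v := by simp [hn, h]
      rw [hnv]
      simp only [hq]
      have h2 : m v / k * k = k * (m v / k) := Nat.mul_comm _ _
      linarith
    · have hnv : n v = q v + 1 := by simp [hn, h]
      rw [hnv]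
      simp only [hq]
      have h2 : (m v / k + 1) * k = k * (m v / k) + k := by ring
      linarith
  have hqn : ∀ v, q v ≤ n v := by
    intro v
    by_cases h : m v % k = 0 <;> simp [hn, h]
  have hnq1 : ∀ v, n v ≤ q v + 1 := by
    intro v
    by_cases h : m v % k = 0 <;> simp [hn, h]
  -- edge-numbering at each vertex
  have hcardH : ∀ v, Fintype.card {a : A // hd a = v} = m v := by
    intro v; rw [← Nat.card_eq_fintype_card]
  have hcardT : ∀ v, Fintype.card {a : A // tl a = v} = m v := by
    intro v; rw [← Nat.card_eq_fintype_card]; exact (bal v).symm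
  let eH : (v : V) → {a : A // hd a = v} ≃ Fin (m v) := fun v =>
    Fintype.equivFinOfCardEq (hcardH v)
  let eT : (v : V) → {a : A // tl a = v} ≃ Fin (m v) := fun v =>
    Fintype.equivFinOfCardEq (hcardT v)
  -- the bipartite multigraph
  let W := Σ v : V, Fin (n v)
  let Lp := Σ v : V, Fin (n v * k - m v)
  let F := A ⊕ Lp
  have hdivlt : ∀ (v : V) (p : Fin (m v)), (p : ℕ) / k < n v := by
    intro v p
    rw [Nat.div_lt_iff_lt_mul hk]
    exact lt_of_lt_of_le p.isLt (hmn v)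
  have hpadlt : ∀ v : V, 0 < n v * k - m v → q v < n v := by
    intro v hpos
    by_cases h : m v % k = 0
    · exfalso
      have e1 := Nat.div_add_mod (m v) k
      have h2 : n v * k = k * q v := by
        simp only [hn, h, if_pos rfl]
        exact Nat.mul_comm _ _
      simp only [hq] at h2
      omega
    · simp [hn, h]
  let loopTo : Lp → W := fun l => ⟨l.1, ⟨q l.1, hpadlt l.1 l.2.pos⟩⟩
  let Lf : F → W := Sum.elim (fun a => ⟨hd a, ⟨(eH (hd a) ⟨a, rfl⟩ : ℕ) / k, hdivlt _ _⟩⟩) loopTo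
  let Rf : F → W := Sum.elim (fun a => ⟨tl a, ⟨(eT (tl a) ⟨a, rfl⟩ : ℕ) / k, hdivlt _ _⟩⟩) loopTo
  -- characterizations of fibers
  have hLinl : ∀ (a : A) (v : V) (h : hd a = v) (j : Fin (n v)),
      (Lf (Sum.inl a) = ⟨v, j⟩) ↔ ((eH v ⟨a, h⟩ : ℕ) / k = (j : ℕ)) := by
    intro a v h j
    subst h
    constructor
    · intro hh
      have h2 := (Sigma.mk.inj_iff.mp hh).2
      have h3 : (⟨(eH (hd a) ⟨a, rfl⟩ : ℕ) / k, hdivlt _ _⟩ : Fin (n (hd a))) = j :=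
        eq_of_heq h2
      exact congrArg Fin.val h3
    · intro hh
      exact congrArg (fun t : Fin (n (hd a)) => (⟨hd a, t⟩ : W)) (Fin.ext hh)
  have hRinl : ∀ (a : A) (v : V) (h : tl a = v) (j : Fin (n v)),
      (Rf (Sum.inl a) = ⟨v, j⟩) ↔ ((eT v ⟨a, h⟩ : ℕ) / k = (j : ℕ)) := by
    intro a v h j
    subst h
    constructor
    · intro hh
      have h2 := (Sigma.mk.inj_iff.mp hh).2
      have h3 : (⟨(eT (tl a) ⟨a, rfl⟩ : ℕ) / k, hdivlt _ _⟩ : Fin (n (tl a))) = j :=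
        eq_of_heq h2
      exact congrArg Fin.val h3
    · intro hh
      exact congrArg (fun t : Fin (n (tl a)) => (⟨tl a, t⟩ : W)) (Fin.ext hh)
  have hLinr : ∀ (l : Lp) (v : V) (j : Fin (n v)),
      (loopTo l = ⟨v, j⟩) ↔ (l.1 = v ∧ q v = (j : ℕ)) := by
    rintro ⟨v', t⟩ v j
    constructor
    · intro hh
      have h1 : v' = v := congrArg Sigma.fst hh
      subst h1
      refine ⟨rfl, ?_⟩
      have h2 := eq_of_heq (Sigma.mk.inj_iff.mp hh).2
      exact congrArg Fin.val h2
    · rintro ⟨h1, h2⟩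
      subst h1
      exact congrArg (fun t' : Fin (n v') => (⟨v', t'⟩ : W)) (Fin.ext h2)
  -- cardinality of real-edge parts of fibers
  have hAcardL : ∀ (v : V) (j : Fin (n v)),
      Nat.card {a : A // Lf (Sum.inl a) = ⟨v, j⟩} = min k (m v - (j : ℕ) * k) := by
    intro v j
    have e1 : {a : A // Lf (Sum.inl a) = ⟨v, j⟩}
        ≃ {x : {a : A // hd a = v} // ((eH v x : ℕ) / k = (j : ℕ))} :=
      { toFun := fun a => ⟨⟨a.1, congrArg Sigma.fst a.2⟩,
          (hLinl a.1 v (congrArg Sigma.fst a.2) j).mp a.2⟩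
        invFun := fun x => ⟨x.1.1, (hLinl x.1.1 v x.1.2 j).mpr x.2⟩
        left_inv := fun a => Subtype.ext rfl
        right_inv := fun x => Subtype.ext (Subtype.ext rfl) }
    rw [Nat.card_congr e1,
      Nat.card_congr (Equiv.subtypeEquiv
        (q := fun p : Fin (m v) => (p : ℕ) / k = (j : ℕ)) (eH v) (fun x => Iff.rfl)),
      count_div_fiber hk (m v) (j : ℕ)]
  have hAcardR : ∀ (v : V) (j : Fin (n v)),
      Nat.card {a : A // Rf (Sum.inl a) = ⟨v, j⟩} = min k (m v - (j : ℕ) * k) := by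
    intro v j
    have e1 : {a : A // Rf (Sum.inl a) = ⟨v, j⟩}
        ≃ {x : {a : A // tl a = v} // ((eT v x : ℕ) / k = (j : ℕ))} :=
      { toFun := fun a => ⟨⟨a.1, congrArg Sigma.fst a.2⟩,
          (hRinl a.1 v (congrArg Sigma.fst a.2) j).mp a.2⟩
        invFun := fun x => ⟨x.1.1, (hRinl x.1.1 v x.1.2 j).mpr x.2⟩
        left_inv := fun a => Subtype.ext rfl
        right_inv := fun x => Subtype.ext (Subtype.ext rfl) }
    rw [Nat.card_congr e1,
      Nat.card_congr (Equiv.subtypeEquiv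
        (q := fun p : Fin (m v) => (p : ℕ) / k = (j : ℕ)) (eT v) (fun x => Iff.rfl)),
      count_div_fiber hk (m v) (j : ℕ)]
  -- cardinality of loop parts of fibers
  have hLoopCard : ∀ (v : V) (j : Fin (n v)),
      Nat.card {l : Lp // loopTo l = ⟨v, j⟩}
        = if (j : ℕ) = q v then n v * k - m v else 0 := by
    intro v j
    rw [Nat.card_congr (Equiv.subtypeEquivRight (fun l => hLinr l v j))]
    by_cases hj : (j : ℕ) = q v
    · rw [if_pos hj]
      have e2 : {l : Lp // l.1 = v ∧ q v = (j : ℕ)} ≃ {l : Lp // l.1 = v} :=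
        Equiv.subtypeEquivRight (fun l => by simp [hj.symm])
      rw [Nat.card_congr e2,
        Nat.card_congr (sigmaFstFiberEquiv (fun u => Fin (n u * k - m u)) v)]
      simp [Nat.card_eq_fintype_card]
    · rw [if_neg hj]
      have : IsEmpty {l : Lp // l.1 = v ∧ q v = (j : ℕ)} := ⟨fun l => hj l.2.2.symm⟩
      exact Nat.card_of_isEmpty
  -- arithmetic: fibers have size exactly k
  have reg : ∀ (v : V) (j : Fin (n v)),
      min k (m v - (j : ℕ) * k) + (if (j : ℕ) = q v then n v * k - m v else 0) = k := by
    intro v j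
    have e1 := Nat.div_add_mod (m v) k
    have hr := Nat.mod_lt (m v) hk
    have hjlt := j.isLt
    by_cases hj : (j : ℕ) = q v
    · rw [if_pos hj, hj]
      have hrne : m v % k ≠ 0 := by
        intro h0
        have hnv : n v = q v := by simp [hn, h0]
        omega
      have hnv : n v = q v + 1 := by simp [hn, hrne]
      rw [hnv]
      have h2 : q v * k = k * q v := Nat.mul_comm _ _
      have h3 : (q v + 1) * k = k * q v + k := by ring
      rw [h3, h2]
      generalize hA : k * q v = Aq at e1 ⊢
      generalize hR : m v % k = R at e1 hr hrne ⊢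
      omega
    · rw [if_neg hj, add_zero]
      have hjq : (j : ℕ) < q v := by
        have := hnq1 v
        omega
      have h4 : ((j : ℕ) + 1) * k ≤ q v * k := Nat.mul_le_mul_right k hjq
      have h5 : q v * k = k * q v := Nat.mul_comm _ _
      have h6 : ((j : ℕ) + 1) * k = (j : ℕ) * k + k := by ring
      generalize hA : (j : ℕ) * k = Aj at h6 ⊢
      generalize hC : ((j : ℕ) + 1) * k = Ak at h4 h6
      generalize hB : q v * k = Aq at h4 h5
      generalize hD : k * q v = Aq2 at h5 e1
      generalize hR : m v % k = R at e1 hr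
      omega
  have hregL : ∀ w : W, Nat.card {f : F // Lf f = w} = k := by
    rintro ⟨v, j⟩
    rw [Nat.card_congr (sumFiberEquiv Lf ⟨v, j⟩), Nat.card_sum]
    have h1 : Nat.card {b : Lp // Lf (Sum.inr b) = ⟨v, j⟩}
        = Nat.card {b : Lp // loopTo b = ⟨v, j⟩} := rfl
    rw [hAcardL v j, h1, hLoopCard v j]
    exact reg v j
  have hregR : ∀ w : W, Nat.card {f : F // Rf f = w} = k := by
    rintro ⟨v, j⟩
    rw [Nat.card_congr (sumFiberEquiv Rf ⟨v, j⟩), Nat.card_sum]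
    have h1 : Nat.card {b : Lp // Rf (Sum.inr b) = ⟨v, j⟩}
        = Nat.card {b : Lp // loopTo b = ⟨v, j⟩} := rfl
    rw [hAcardR v j, h1, hLoopCard v j]
    exact reg v j
  -- apply the König coloring
  obtain ⟨χF, hKL, hKR⟩ := koenig_coloring k F W Lf Rf hregL hregR
  -- count real edges of color i at copies of v
  have hout : ∀ (v : V) (i : Fin k),
      Nat.card {a : A // χF (Sum.inl a) = i ∧ hd a = v}
        = Nat.card {j : Fin (n v) //
            ∃ a : A, Lf (Sum.inl a) = ⟨v, j⟩ ∧ χF (Sum.inl a) = i} := by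
    intro v i
    apply Nat.card_congr
    refine Equiv.ofBijective
      (fun a => ⟨⟨(eH v ⟨a.1, a.2.2⟩ : ℕ) / k, hdivlt v _⟩,
        ⟨a.1, (hLinl a.1 v a.2.2 _).mpr rfl, a.2.1⟩⟩) ⟨?_, ?_⟩
    · intro a a' hEq
      have hj := congrArg Subtype.val hEq
      obtain ⟨f0, _, huniq⟩ := hKL ⟨v, ⟨(eH v ⟨a.1, a.2.2⟩ : ℕ) / k, hdivlt v _⟩⟩ i
      have h1 := huniq (Sum.inl a.1) ⟨(hLinl a.1 v a.2.2 _).mpr rfl, a.2.1⟩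
      have h2 := huniq (Sum.inl a'.1)
        ⟨(hLinl a'.1 v a'.2.2 _).mpr (congrArg Fin.val hj.symm), a'.2.1⟩
      have := h1.trans h2.symm
      exact Subtype.ext (Sum.inl.inj this)
    · rintro ⟨j, a, hLfa, hχa⟩
      have h1 : hd a = v := congrArg Sigma.fst hLfa
      refine ⟨⟨a, hχa, h1⟩, ?_⟩
      apply Subtype.ext
      apply Fin.ext
      exact (hLinl a v h1 j).mp hLfa
  have hin : ∀ (v : V) (i : Fin k),
      Nat.card {a : A // χF (Sum.inl a) = i ∧ tl a = v}
        = Nat.card {j : Fin (n v) //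
            ∃ a : A, Rf (Sum.inl a) = ⟨v, j⟩ ∧ χF (Sum.inl a) = i} := by
    intro v i
    apply Nat.card_congr
    refine Equiv.ofBijective
      (fun a => ⟨⟨(eT v ⟨a.1, a.2.2⟩ : ℕ) / k, hdivlt v _⟩,
        ⟨a.1, (hRinl a.1 v a.2.2 _).mpr rfl, a.2.1⟩⟩) ⟨?_, ?_⟩
    · intro a a' hEq
      have hj := congrArg Subtype.val hEq
      obtain ⟨f0, _, huniq⟩ := hKR ⟨v, ⟨(eT v ⟨a.1, a.2.2⟩ : ℕ) / k, hdivlt v _⟩⟩ i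
      have h1 := huniq (Sum.inl a.1) ⟨(hRinl a.1 v a.2.2 _).mpr rfl, a.2.1⟩
      have h2 := huniq (Sum.inl a'.1)
        ⟨(hRinl a'.1 v a'.2.2 _).mpr (congrArg Fin.val hj.symm), a'.2.1⟩
      have := h1.trans h2.symm
      exact Subtype.ext (Sum.inl.inj this)
    · rintro ⟨j, a, hRfa, hχa⟩
      have h1 : tl a = v := congrArg Sigma.fst hRfa
      refine ⟨⟨a, hχa, h1⟩, ?_⟩
      apply Subtype.ext
      apply Fin.ext
      exact (hRinl a v h1 j).mp hRfa
  -- the loop coupling: at every copy, color i is realized by a real edge on the left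
  -- iff it is realized by a real edge on the right
  have hPLPR : ∀ (v : V) (j : Fin (n v)) (i : Fin k),
      (∃ a : A, Lf (Sum.inl a) = ⟨v, j⟩ ∧ χF (Sum.inl a) = i)
        ↔ (∃ a : A, Rf (Sum.inl a) = ⟨v, j⟩ ∧ χF (Sum.inl a) = i) := by
    intro v j i
    constructor
    · rintro ⟨a, hL, hχ⟩
      obtain ⟨f0, ⟨hf0R, hf0χ⟩, _⟩ := hKR ⟨v, j⟩ i
      cases f0 with
      | inl a' => exact ⟨a', hf0R, hf0χ⟩
      | inr l =>
        obtain ⟨f1, _, huniqL⟩ := hKL ⟨v, j⟩ i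
        have h1 := huniqL (Sum.inl a) ⟨hL, hχ⟩
        have h2 := huniqL (Sum.inr l) ⟨hf0R, hf0χ⟩
        exact absurd (h1.trans h2.symm) (by simp)
    · rintro ⟨a, hR, hχ⟩
      obtain ⟨f0, ⟨hf0L, hf0χ⟩, _⟩ := hKL ⟨v, j⟩ i
      cases f0 with
      | inl a' => exact ⟨a', hf0L, hf0χ⟩
      | inr l =>
        obtain ⟨f1, _, huniqR⟩ := hKR ⟨v, j⟩ i
        have h1 := huniqR (Sum.inl a) ⟨hR, hχ⟩
        have h2 := huniqR (Sum.inr l) ⟨hf0L, hf0χ⟩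
        exact absurd (h1.trans h2.symm) (by simp)
  -- upper and lower bounds on the number of realized copies
  have hub : ∀ (v : V) (i : Fin k),
      Nat.card {j : Fin (n v) // ∃ a : A, Lf (Sum.inl a) = ⟨v, j⟩ ∧ χF (Sum.inl a) = i}
        ≤ n v := by
    intro v i
    have h1 := Nat.card_le_card_of_injective
      (fun (z : {j : Fin (n v) // ∃ a : A, Lf (Sum.inl a) = ⟨v, j⟩ ∧ χF (Sum.inl a) = i}) =>
        z.1) (fun z z' h => Subtype.ext h)
    simpa using h1
  have hlb : ∀ (v : V) (i : Fin k),
      q v ≤ Nat.card {j : Fin (n v) //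
          ∃ a : A, Lf (Sum.inl a) = ⟨v, j⟩ ∧ χF (Sum.inl a) = i} := by
    intro v i
    have hstep : ∀ j : Fin (n v), (j : ℕ) < q v →
        ∃ a : A, Lf (Sum.inl a) = ⟨v, j⟩ ∧ χF (Sum.inl a) = i := by
      intro j hjq
      obtain ⟨f0, ⟨hf0L, hf0χ⟩, _⟩ := hKL ⟨v, j⟩ i
      cases f0 with
      | inl a => exact ⟨a, hf0L, hf0χ⟩
      | inr l =>
        have h2 := ((hLinr l v j).mp hf0L).2
        omega
    have h1 := Nat.card_le_card_of_injective
      (fun (t : Fin (q v)) =>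
        (⟨⟨(t : ℕ), lt_of_lt_of_le t.isLt (hqn v)⟩, hstep _ t.isLt⟩ :
          {j : Fin (n v) // ∃ a : A, Lf (Sum.inl a) = ⟨v, j⟩ ∧ χF (Sum.inl a) = i}))
      (fun t t' h => by
        apply Fin.ext
        exact congrArg (fun z : {j : Fin (n v) //
          ∃ a : A, Lf (Sum.inl a) = ⟨v, j⟩ ∧ χF (Sum.inl a) = i} => (z.1 : ℕ)) h)
    simpa using h1
  -- conclusion
  refine ⟨fun a => χF (Sum.inl a), fun v i j => ⟨?_, ?_⟩⟩
  · rw [hout v i, hin v i]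
    exact Nat.card_congr (Equiv.subtypeEquivRight (fun j' => hPLPR v j' i))
  · calc Nat.card {a : A // χF (Sum.inl a) = i ∧ hd a = v}
        ≤ n v := by rw [hout v i]; exact hub v i
      _ ≤ q v + 1 := hnq1 v
      _ ≤ Nat.card {a : A // χF (Sum.inl a) = j ∧ hd a = v} + 1 := by
          rw [hout v j]
          exact Nat.add_le_add_right (hlb v j) 1
/-- (Hilton) Every finite even multigraph admits an evenly-equitable `k`-edge-coloring
for each positive `k`: every color class gives each vertex even degree, and at each
vertex the degrees in any two color classes differ by at most 2. -/
theorem even_graph_evenly_equitable_coloring {V E : Type} [Fintype V] [Fintype E]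
    (ends : E → V × V) (heven : ∀ v, Even (mDeg ends v))
    (k : ℕ) (hk : 0 < k) :
    ∃ c : E → Fin k,
      (∀ (v : V) (i : Fin k), Even (mColorDeg ends c i v)) ∧
      (∀ (v : V) (i j : Fin k),
        |(mColorDeg ends c i v : ℤ) - (mColorDeg ends c j v : ℤ)| ≤ 2) := by
  classical
  obtain ⟨o, hbal⟩ := exists_orientation ends heven
  set hd : E → V := fun e => hpos ends (e, o e) with hhd
  set tl : E → V := fun e => hpos ends (e, !(o e)) with htl
  obtain ⟨χ, hχ⟩ := balanced_coloring k hk V E hd tl hbal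
  have hsplit : ∀ (i : Fin k) (v : V),
      mColorDeg ends χ i v
        = Nat.card {e : E // χ e = i ∧ hd e = v}
          + Nat.card {e : E // χ e = i ∧ tl e = v} := by
    intro i v
    have h1 := card_split ends (fun x => χ x.1 = i ∧ hpos ends x = v) (fun _ => false)
    have h2 := card_split ends (fun x => χ x.1 = i ∧ hpos ends x = v) o
    have e1 : Nat.card {e : E // χ e = i ∧ (ends e).1 = v}
        = Nat.card {e : E // χ e = i ∧ hpos ends (e, false) = v} :=
      Nat.card_congr (Equiv.subtypeEquivRight (by intro e; simp [hpos]))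
    have e2 : Nat.card {e : E // χ e = i ∧ (ends e).2 = v}
        = Nat.card {e : E // χ e = i ∧ hpos ends (e, !false) = v} :=
      Nat.card_congr (Equiv.subtypeEquivRight (by intro e; simp [hpos]))
    unfold mColorDeg
    simp only [hhd, htl]
    rw [e1, e2, ← h1, h2]
  refine ⟨χ, ?_, ?_⟩
  · intro v i
    have hi := hsplit i v
    rw [← (hχ v i i).1] at hi
    exact ⟨_, hi⟩
  · intro v i j
    have hi := hsplit i v
    have hj := hsplit j v
    rw [← (hχ v i i).1] at hi
    rw [← (hχ v j j).1] at hj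
    have b1 := (hχ v i j).2
    have b2 := (hχ v j i).2
    rw [hi, hj, abs_le]
    constructor <;> push_cast <;> omega
end

section
/- The multigraph λK_n (n ≥ 2 vertices, every pair joined by λ parallel edges) admits a decomposition of its edge set into Hamiltonian cycles if and only if λ(n−1) is even. -/
/-- Degree of `v` in the edge set `S` (loops count twice). -/
noncomputable def degIn {V E : Type} (ends : E → V × V) (S : Finset E) (v : V) : ℕ :=
  Nat.card {e : E // e ∈ S ∧ (ends e).1 = v} + Nat.card {e : E // e ∈ S ∧ (ends e).2 = v}

/-- The edge set `S` is connected: every two vertices are joined by a walk of edges of `S`. -/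
def connIn {V E : Type} (ends : E → V × V) (S : Finset E) : Prop :=
  ∀ u v : V,
    Relation.ReflTransGen (fun a b => ∃ e ∈ S, ends e = (a, b) ∨ ends e = (b, a)) u v

/-- `S` induces a spanning (Hamiltonian) cycle: every vertex has degree 2 in `S`
and `S` is connected. -/
def IsHamCycle {V E : Type} (ends : E → V × V) (S : Finset E) : Prop :=
  (∀ v : V, degIn ends S v = 2) ∧ connIn ends S

/-- `D` is a Hamiltonian decomposition: a partition of the edge set into
spanning cycles. -/
def IsHamDecomp {V E : Type} (ends : E → V × V) (D : Finset (Finset E)) : Prop :=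
  (∀ S ∈ D, IsHamCycle ends S) ∧ ∀ e : E, ∃! S : Finset E, S ∈ D ∧ e ∈ S

lemma natCard_filter {E : Type} (S : Finset E) (P : E → Prop) [DecidablePred P] :
    Nat.card {e : E // e ∈ S ∧ P e} = (S.filter P).card := by
  have e : {e : E // e ∈ S ∧ P e} ≃ {e : E // e ∈ S.filter P} :=
    Equiv.subtypeEquivRight (fun x => by simp [Finset.mem_filter])
  rw [Nat.card_congr e, Nat.card_eq_fintype_card, Fintype.card_coe]

lemma degIn_eq_filter {V E : Type} [DecidableEq V] (ends : E → V × V) (S : Finset E) (v : V) :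
    degIn ends S v = (S.filter (fun e => (ends e).1 = v)).card
      + (S.filter (fun e => (ends e).2 = v)).card := by
  unfold degIn
  rw [natCard_filter, natCard_filter]

lemma card_filter_eq_one_of_bijective {n : ℕ} [NeZero n] {c : ZMod n → Fin n}
    (hc : Function.Bijective c) (v : Fin n) :
    (Finset.univ.filter (fun i : ZMod n => c i = v)).card = 1 := by
  obtain ⟨i₀, hi₀⟩ := hc.2 v
  rw [Finset.card_eq_one]
  refine ⟨i₀, ?_⟩
  ext j
  simp only [Finset.mem_filter, Finset.mem_univ, true_and, Finset.mem_singleton]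
  constructor
  · intro h; exact hc.1 (h.trans hi₀.symm)
  · rintro rfl; exact hi₀

lemma isHamCycle_of_cycle {E : Type} [DecidableEq E] {n : ℕ} [NeZero n] (hn : 2 ≤ n)
    (ends : E → Fin n × Fin n) (c : ZMod n → Fin n) (hc : Function.Bijective c)
    (e : ZMod n → E) (he : Function.Injective e)
    (hends : ∀ i, ends (e i) = (c i, c (i + 1)) ∨ ends (e i) = (c (i + 1), c i)) :
    IsHamCycle ends (Finset.image e Finset.univ) := by
  constructor
  · intro v
    rw [degIn_eq_filter, Finset.filter_image, Finset.filter_image,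
      Finset.card_image_of_injective _ he, Finset.card_image_of_injective _ he,
      Finset.card_filter, Finset.card_filter, ← Finset.sum_add_distrib]
    have key : ∀ i : ZMod n,
        ((if (ends (e i)).1 = v then 1 else 0) + if (ends (e i)).2 = v then 1 else 0)
        = ((if c i = v then 1 else 0) + if c (i + 1) = v then 1 else 0 : ℕ) := by
      intro i
      rcases hends i with h | h <;> rw [h] <;> simp <;> omega
    rw [Finset.sum_congr rfl (fun i _ => key i), Finset.sum_add_distrib,
      ← Finset.card_filter, ← Finset.card_filter,
      card_filter_eq_one_of_bijective hc v]
    have hc' : Function.Bijective (fun i : ZMod n => c (i + 1)) := by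
      refine hc.comp ⟨fun a b h => by simpa using h, fun a => ⟨a - 1, by ring⟩⟩
    rw [card_filter_eq_one_of_bijective hc' v]
  · intro u v
    set R := fun a b => ∃ x ∈ Finset.image e Finset.univ,
      ends x = (a, b) ∨ ends x = (b, a) with hR
    have step : ∀ i : ZMod n, R (c i) (c (i + 1)) := by
      intro i
      refine ⟨e i, Finset.mem_image_of_mem e (Finset.mem_univ i), ?_⟩
      rcases hends i with h | h
      · exact Or.inl h
      · exact Or.inr h
    have walk : ∀ (i : ZMod n) (t : ℕ), Relation.ReflTransGen R (c i) (c (i + t)) := by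
      intro i t
      induction t with
      | zero => simpa using (Relation.ReflTransGen.refl : Relation.ReflTransGen R (c i) (c i))
      | succ t ih =>
        refine Relation.ReflTransGen.tail ih ?_
        have : (i + (t + 1 : ℕ)) = (i + t) + 1 := by push_cast; ring
        rw [this]
        exact step (i + t)
    obtain ⟨i, rfl⟩ := hc.2 u
    obtain ⟨j, rfl⟩ := hc.2 v
    have : (i + ((j - i).val : ℕ)) = j := by
      rw [ZMod.natCast_rightInverse (j - i)]; ring
    simpa [this] using walk i (j - i).val


section Walecki

variable (N : ℕ) [NeZero N]

abbrev WPair (n : ℕ) := {q : Fin n × Fin n // q.1 < q.2}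

def iot (x : ZMod N) : Fin (N + 1) := ⟨x.val, by have := ZMod.val_lt x; omega⟩

lemma iot_val (x : ZMod N) : (iot N x).val = x.val := rfl

lemma iot_inj : Function.Injective (iot N) := by
  intro x y hxy
  exact ZMod.val_injective N (congrArg Fin.val hxy)

def zig (t : ℕ) : ZMod N := if t % 2 = 1 then (((t + 1) / 2 : ℕ) : ZMod N) else -((t / 2 : ℕ) : ZMod N)

lemma hNpos : 0 < N := Nat.pos_of_ne_zero (NeZero.ne N)

lemma zig_zero : zig N 0 = 0 := by simp [zig]

lemma zig_val {t : ℕ} (ht : t < N) :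
    (zig N t).val = if t % 2 = 1 then (t + 1) / 2 else (if t = 0 then 0 else N - t / 2) := by
  have hN := hNpos N
  unfold zig
  by_cases h : t % 2 = 1
  · rw [if_pos h, if_pos h, ZMod.val_natCast_of_lt (by omega)]
  · rw [if_neg h, if_neg h, ZMod.neg_val]
    by_cases h0 : t = 0
    · simp [h0]
    · have hv : ((t / 2 : ℕ) : ZMod N).val = t / 2 := ZMod.val_natCast_of_lt (by omega)
      have hnz : ((t / 2 : ℕ) : ZMod N) ≠ 0 := by
        intro hc
        rw [hc, ZMod.val_zero] at hv
        omega
      rw [if_neg hnz, hv, if_neg h0]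

lemma zig_inj {t t' : ℕ} (ht : t < N) (ht' : t' < N) (h : zig N t = zig N t') : t = t' := by
  have hv : (zig N t).val = (zig N t').val := by rw [h]
  rw [zig_val N ht, zig_val N ht'] at hv
  split_ifs at hv <;> omega


lemma zig_step {t : ℕ} (ht : t + 1 < N) :
    zig N (t + 1) = zig N t + (if t % 2 = 0 then ((t + 1 : ℕ) : ZMod N) else -((t + 1 : ℕ) : ZMod N)) := by
  unfold zig
  rcases Nat.even_or_odd t with he | ho
  · have h1 : t % 2 = 0 := Nat.even_iff.mp he
    rw [if_pos (show (t + 1) % 2 = 1 by omega), if_neg (show ¬ t % 2 = 1 by omega), if_pos h1]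
    have key : (t + 1 + 1) / 2 + t / 2 = t + 1 := by omega
    have key2 : (((t + 1 + 1) / 2 : ℕ) : ZMod N) + ((t / 2 : ℕ) : ZMod N) = ((t + 1 : ℕ) : ZMod N) := by
      rw [← Nat.cast_add, key]
    linear_combination key2
  · have h1 : t % 2 = 1 := Nat.odd_iff.mp ho
    rw [if_neg (show ¬ (t + 1) % 2 = 1 by omega), if_pos h1, if_neg (show ¬ t % 2 = 0 by omega)]
    have key : (t + 1) / 2 + (t + 1) / 2 = t + 1 := by omega
    have key2 : (((t + 1) / 2 : ℕ) : ZMod N) + (((t + 1) / 2 : ℕ) : ZMod N) = ((t + 1 : ℕ) : ZMod N) := by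
      rw [← Nat.cast_add, key]
    linear_combination -key2

lemma zig_step_eq_iff {t : ℕ} (ht : t + 1 < N) {c : ZMod N} (hc : c ≠ 0) :
    zig N (t + 1) - zig N t = c ↔ ((t % 2 = 0 ∧ t + 1 = c.val) ∨ (t % 2 = 1 ∧ t + 1 = N - c.val)) := by
  rw [zig_step N ht]
  have hcv : 1 ≤ c.val := by
    rcases Nat.eq_zero_or_pos c.val with h | h
    · exact absurd (ZMod.val_injective N (h.trans (ZMod.val_zero (n := N)).symm)) hc
    · exact h
  have hcv2 := ZMod.val_lt c
  rcases Nat.even_or_odd t with he | ho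
  · have h1 : t % 2 = 0 := Nat.even_iff.mp he
    rw [if_pos h1]
    have hval : ((t + 1 : ℕ) : ZMod N).val = t + 1 := ZMod.val_natCast_of_lt ht
    constructor
    · intro h
      left
      refine ⟨h1, ?_⟩
      have : ((t + 1 : ℕ) : ZMod N) = c := by linear_combination h
      rw [← this, hval]
    · rintro (⟨-, h⟩ | ⟨h, -⟩)
      · have : ((t + 1 : ℕ) : ZMod N) = c := by
          apply ZMod.val_injective
          rw [hval, h]
        linear_combination this
      · omega
  · have h1 : t % 2 = 1 := Nat.odd_iff.mp ho
    rw [if_neg (by omega : ¬ t % 2 = 0)]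
    have hval : ((t + 1 : ℕ) : ZMod N).val = t + 1 := ZMod.val_natCast_of_lt ht
    have hnegc : (-c).val = N - c.val := by rw [ZMod.neg_val, if_neg hc]
    constructor
    · intro h
      right
      refine ⟨h1, ?_⟩
      have : ((t + 1 : ℕ) : ZMod N) = -c := by linear_combination -h
      rw [← hnegc, ← this, hval]
    · rintro (⟨h, -⟩ | ⟨-, h⟩)
      · omega
      · have : ((t + 1 : ℕ) : ZMod N) = -c := by
          apply ZMod.val_injective
          rw [hval, hnegc, h]
        linear_combination -this


def mkP {n : ℕ} (u v : Fin n) (h : u ≠ v) : WPair n :=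
  if huv : u < v then ⟨(u, v), huv⟩ else ⟨(v, u), lt_of_le_of_ne (le_of_not_gt huv) (Ne.symm h)⟩

lemma mkP_eq_iff {n : ℕ} {u v : Fin n} (h : u ≠ v) (q : WPair n) :
    mkP u v h = q ↔ (q.val = (u, v) ∨ q.val = (v, u)) := by
  unfold mkP
  split_ifs with huv
  · constructor
    · rintro rfl; exact Or.inl rfl
    · rintro (hq | hq) <;> apply Subtype.ext
      · exact hq.symm
      · exfalso
        have := q.prop
        rw [hq] at this
        exact absurd huv (not_lt.mpr (le_of_lt this))
  · constructor
    · rintro rfl; exact Or.inr rfl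
    · rintro (hq | hq) <;> apply Subtype.ext
      · exfalso
        have := q.prop
        rw [hq] at this
        exact absurd this huv
      · exact hq.symm


lemma val_add_one (i : ZMod (N + 1)) : (i + 1).val = if i.val = N then 0 else i.val + 1 := by
  have hv := ZMod.val_lt i
  have hN := hNpos N
  have h1 : (1 : ZMod (N + 1)).val = 1 := by
    rw [ZMod.val_one_eq_one_mod]
    exact Nat.mod_eq_of_lt (by omega)
  rw [ZMod.val_add, h1]
  split_ifs with h
  · rw [h, Nat.mod_self]
  · exact Nat.mod_eq_of_lt (by omega)

lemma cast_val_le {r : ℕ} (h : r ≤ N) : ((r : ℕ) : ZMod (N + 1)).val = r :=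
  ZMod.val_natCast_of_lt (by omega)

def cvert (k : ZMod N) (j : ZMod (N + 1)) : Fin (N + 1) :=
  if j.val = N then Fin.last N else iot N (k + zig N j.val)

lemma cvert_injective (k : ZMod N) : Function.Injective (cvert N k) := by
  intro j j' h
  unfold cvert at h
  have hj := ZMod.val_lt j
  have hj' := ZMod.val_lt j'
  split_ifs at h with h1 h2 h2
  · exact ZMod.val_injective _ (h1.trans h2.symm)
  · have hlt : (iot N (k + zig N j'.val)).val < N := ZMod.val_lt _
    have hv := congrArg Fin.val h
    simp only [Fin.val_last] at hv
    omega
  · have hlt : (iot N (k + zig N j.val)).val < N := ZMod.val_lt _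
    have hv := congrArg Fin.val h
    simp only [Fin.val_last] at hv
    omega
  · have := add_left_cancel (iot_inj N h)
    have hval := zig_inj N (by omega) (by omega) this
    exact ZMod.val_injective _ hval

lemma cvert_ne_succ (k : ZMod N) (i : ZMod (N + 1)) : cvert N k i ≠ cvert N k (i + 1) := by
  intro h
  have h2 := congrArg ZMod.val (cvert_injective N k h)
  rw [val_add_one] at h2
  have := ZMod.val_lt i
  have := hNpos N
  split_ifs at h2 <;> omega

def pairAt (k : ZMod N) (i : ZMod (N + 1)) : WPair (N + 1) :=
  mkP (cvert N k i) (cvert N k (i + 1)) (cvert_ne_succ N k i)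

lemma pairAt_eq_iff (k : ZMod N) (i : ZMod (N + 1)) (q : WPair (N + 1)) :
    pairAt N k i = q ↔
      (q.val = (cvert N k i, cvert N k (i + 1)) ∨ q.val = (cvert N k (i + 1), cvert N k i)) :=
  mkP_eq_iff _ _

def qa (q : WPair (N + 1)) : ZMod N := ((q.val.1.val : ℕ) : ZMod N)
def qb (q : WPair (N + 1)) : ZMod N := ((q.val.2.val : ℕ) : ZMod N)
def qd (q : WPair (N + 1)) : ℕ := (qb N q - qa N q).val

lemma q_lt (q : WPair (N + 1)) : q.val.1.val < q.val.2.val := q.prop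
lemma q2_le (q : WPair (N + 1)) : q.val.2.val ≤ N := by have := q.val.2.isLt; omega

lemma qa_val (q : WPair (N + 1)) : (qa N q).val = q.val.1.val := by
  have h1 := q_lt N q
  have h2 := q2_le N q
  exact ZMod.val_natCast_of_lt (by omega)

lemma iot_qa (q : WPair (N + 1)) : iot N (qa N q) = q.val.1 :=
  Fin.ext (qa_val N q)

lemma qb_val (q : WPair (N + 1)) (h : q.val.2.val ≠ N) : (qb N q).val = q.val.2.val := by
  have h2 := q2_le N q
  exact ZMod.val_natCast_of_lt (by omega)

lemma iot_qb (q : WPair (N + 1)) (h : q.val.2.val ≠ N) : iot N (qb N q) = q.val.2 :=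
  Fin.ext (qb_val N q h)

lemma qba_ne (q : WPair (N + 1)) (h : q.val.2.val ≠ N) : qb N q - qa N q ≠ 0 := by
  intro hc
  rw [sub_eq_zero] at hc
  have := congrArg ZMod.val hc
  rw [qa_val, qb_val N q h] at this
  have := q_lt N q
  omega

lemma qd_pos (q : WPair (N + 1)) (h : q.val.2.val ≠ N) : 1 ≤ qd N q := by
  have h1 := qba_ne N q h
  rcases Nat.eq_zero_or_pos (qd N q) with h2 | h2
  · exact absurd (ZMod.val_injective N (h2.trans (ZMod.val_zero (n := N)).symm)) h1
  · exact h2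

lemma qd_lt (q : WPair (N + 1)) : qd N q < N := ZMod.val_lt _

lemma cast_qd (q : WPair (N + 1)) : ((qd N q : ℕ) : ZMod N) = qb N q - qa N q :=
  ZMod.natCast_rightInverse _

/-- The two occurrences of the pair `q` among the Walecki cycle edges. -/
def occ (q : WPair (N + 1)) (s : Fin 2) : ZMod N × ZMod (N + 1) :=
  if q.val.2.val = N then
    if s = 0 then (qa N q, ((N : ℕ) : ZMod (N + 1)))
    else (qa N q - zig N (N - 1), ((N - 1 : ℕ) : ZMod (N + 1)))
  else
    if s = 0 then
      ((if qd N q % 2 = 1 then qa N q else qb N q) - zig N (qd N q - 1),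
        ((qd N q - 1 : ℕ) : ZMod (N + 1)))
    else
      ((if (N - qd N q) % 2 = 1 then qb N q else qa N q) - zig N (N - qd N q - 1),
        ((N - qd N q - 1 : ℕ) : ZMod (N + 1)))


lemma cvert_eq_last (k : ZMod N) {j : ZMod (N + 1)} (h : j.val = N) :
    cvert N k j = Fin.last N := by
  unfold cvert; rw [if_pos h]

lemma cvert_eq_iot (k : ZMod N) {j : ZMod (N + 1)} (h : ¬ j.val = N) :
    cvert N k j = iot N (k + zig N j.val) := by
  unfold cvert; rw [if_neg h]

lemma occ_inf0 (q : WPair (N + 1)) (h : q.val.2.val = N) :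
    occ N q 0 = (qa N q, ((N : ℕ) : ZMod (N + 1))) := by
  simp [occ, h]

lemma occ_inf1 (q : WPair (N + 1)) (h : q.val.2.val = N) :
    occ N q 1 = (qa N q - zig N (N - 1), ((N - 1 : ℕ) : ZMod (N + 1))) := by
  simp [occ, h, Fin.ext_iff]

lemma occ_int0 (q : WPair (N + 1)) (h : ¬ q.val.2.val = N) :
    occ N q 0 = ((if qd N q % 2 = 1 then qa N q else qb N q) - zig N (qd N q - 1),
      ((qd N q - 1 : ℕ) : ZMod (N + 1))) := by
  simp [occ, h]

lemma occ_int1 (q : WPair (N + 1)) (h : ¬ q.val.2.val = N) :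
    occ N q 1 = ((if (N - qd N q) % 2 = 1 then qb N q else qa N q) - zig N (N - qd N q - 1),
      ((N - qd N q - 1 : ℕ) : ZMod (N + 1))) := by
  simp [occ, h, Fin.ext_iff]

lemma pairAt_occ_inf0 (q : WPair (N + 1)) (h : q.val.2.val = N) :
    pairAt N (qa N q) ((N : ℕ) : ZMod (N + 1)) = q := by
  have hN := hNpos N
  rw [pairAt_eq_iff]
  right
  have hi : (((N : ℕ) : ZMod (N + 1))).val = N := cast_val_le N le_rfl
  have hsucc : ((((N : ℕ) : ZMod (N + 1))) + 1).val = 0 := by rw [val_add_one, if_pos hi]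
  have hq2 : q.val.2 = Fin.last N := Fin.ext h
  rw [cvert_eq_last N _ hi, cvert_eq_iot N _ (by omega), hsucc, zig_zero, add_zero, iot_qa, ← hq2]

lemma pairAt_occ_inf1 (q : WPair (N + 1)) (h : q.val.2.val = N) :
    pairAt N (qa N q - zig N (N - 1)) ((N - 1 : ℕ) : ZMod (N + 1)) = q := by
  have hN := hNpos N
  rw [pairAt_eq_iff]
  left
  have hi : (((N - 1 : ℕ) : ZMod (N + 1))).val = N - 1 := cast_val_le N (by omega)
  have hsucc : ((((N - 1 : ℕ) : ZMod (N + 1))) + 1).val = N := by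
    rw [val_add_one, if_neg (by omega), hi]
    omega
  have hq2 : q.val.2 = Fin.last N := Fin.ext h
  rw [cvert_eq_iot N _ (by omega), cvert_eq_last N _ hsucc, hi, sub_add_cancel, iot_qa, ← hq2]

lemma pairAt_occ_int0 (q : WPair (N + 1)) (h : ¬ q.val.2.val = N) :
    pairAt N ((if qd N q % 2 = 1 then qa N q else qb N q) - zig N (qd N q - 1))
      ((qd N q - 1 : ℕ) : ZMod (N + 1)) = q := by
  have hN := hNpos N
  have hd1 := qd_pos N q h
  have hdN := qd_lt N q
  set d := qd N q with hd
  rw [pairAt_eq_iff]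
  have hi : (((d - 1 : ℕ) : ZMod (N + 1))).val = d - 1 := cast_val_le N (by omega)
  have hsucc : ((((d - 1 : ℕ) : ZMod (N + 1))) + 1).val = d := by
    rw [val_add_one, if_neg (by omega), hi]
    omega
  have hstep : zig N d = zig N (d - 1) +
      (if (d - 1) % 2 = 0 then ((d : ℕ) : ZMod N) else -((d : ℕ) : ZMod N)) := by
    have := zig_step N (t := d - 1) (by omega)
    rw [show d - 1 + 1 = d by omega] at this
    exact this
  rw [cvert_eq_iot N _ (by omega), cvert_eq_iot N _ (by omega), hi, hsucc, sub_add_cancel]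
  by_cases hpar : d % 2 = 1
  · left
    rw [if_pos hpar, hstep, if_pos (by omega), cast_qd]
    rw [show qa N q - zig N (d - 1) + (zig N (d - 1) + (qb N q - qa N q)) = qb N q by ring]
    rw [iot_qa, iot_qb N q h]
  · right
    rw [if_neg hpar, hstep, if_neg (by omega), cast_qd]
    rw [show qb N q - zig N (d - 1) + (zig N (d - 1) + -(qb N q - qa N q)) = qa N q by ring]
    rw [iot_qa, iot_qb N q h]

lemma cast_sub_qd (q : WPair (N + 1)) (h : ¬ q.val.2.val = N) :
    ((N - qd N q : ℕ) : ZMod N) = qa N q - qb N q := by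
  have hd1 := qd_pos N q h
  have hdN := qd_lt N q
  have hne := qba_ne N q h
  apply ZMod.val_injective
  rw [ZMod.val_natCast_of_lt (by omega), show qa N q - qb N q = -(qb N q - qa N q) by ring,
    ZMod.neg_val, if_neg hne]
  rfl

lemma pairAt_occ_int1 (q : WPair (N + 1)) (h : ¬ q.val.2.val = N) :
    pairAt N ((if (N - qd N q) % 2 = 1 then qb N q else qa N q) - zig N (N - qd N q - 1))
      ((N - qd N q - 1 : ℕ) : ZMod (N + 1)) = q := by
  have hN := hNpos N
  have hd1 := qd_pos N q h
  have hdN := qd_lt N q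
  have hcast := cast_sub_qd N q h
  set d := qd N q with hd
  rw [pairAt_eq_iff]
  have hi : (((N - d - 1 : ℕ) : ZMod (N + 1))).val = N - d - 1 := cast_val_le N (by omega)
  have hsucc : ((((N - d - 1 : ℕ) : ZMod (N + 1))) + 1).val = N - d := by
    rw [val_add_one, if_neg (by omega), hi]
    omega
  have hstep : zig N (N - d) = zig N (N - d - 1) +
      (if (N - d - 1) % 2 = 0 then ((N - d : ℕ) : ZMod N) else -((N - d : ℕ) : ZMod N)) := by
    have := zig_step N (t := N - d - 1) (by omega)
    rw [show N - d - 1 + 1 = N - d by omega] at this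
    exact this
  rw [cvert_eq_iot N _ (by omega), cvert_eq_iot N _ (by omega), hi, hsucc, sub_add_cancel]
  by_cases hpar : (N - d) % 2 = 1
  · right
    rw [if_pos hpar, hstep, if_pos (by omega), hcast]
    rw [show qb N q - zig N (N - d - 1) + (zig N (N - d - 1) + (qa N q - qb N q)) = qa N q by ring]
    rw [iot_qa, iot_qb N q h]
  · left
    rw [if_neg hpar, hstep, if_neg (by omega), hcast]
    rw [show qa N q - zig N (N - d - 1) + (zig N (N - d - 1) + -(qa N q - qb N q)) = qb N q by ring]
    rw [iot_qa, iot_qb N q h]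

lemma occ_correct (q : WPair (N + 1)) (s : Fin 2) :
    pairAt N (occ N q s).1 (occ N q s).2 = q := by
  have hs : s = 0 ∨ s = 1 := by
    rcases s with ⟨sv, hsv⟩
    interval_cases sv
    · exact Or.inl rfl
    · exact Or.inr rfl
  by_cases h : q.val.2.val = N
  · rcases hs with rfl | rfl
    · rw [occ_inf0 N q h]; exact pairAt_occ_inf0 N q h
    · rw [occ_inf1 N q h]; exact pairAt_occ_inf1 N q h
  · rcases hs with rfl | rfl
    · rw [occ_int0 N q h]; exact pairAt_occ_int0 N q h
    · rw [occ_int1 N q h]; exact pairAt_occ_int1 N q h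

lemma val_qab (q : WPair (N + 1)) (h : ¬ q.val.2.val = N) :
    (qa N q - qb N q).val = N - qd N q := by
  rw [show qa N q - qb N q = -(qb N q - qa N q) by ring, ZMod.neg_val, if_neg (qba_ne N q h)]
  rfl

lemma occ_complete (q : WPair (N + 1)) (k : ZMod N) (i : ZMod (N + 1))
    (h : pairAt N k i = q) : (k, i) = occ N q 0 ∨ (k, i) = occ N q 1 := by
  have hN := hNpos N
  rw [pairAt_eq_iff] at h
  have ht := ZMod.val_lt i
  have hq12 := q_lt N q
  have hq2 := q2_le N q
  by_cases h1 : i.val = N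
  · have hc1 : cvert N k i = Fin.last N := cvert_eq_last N k h1
    have hs : (i + 1).val = 0 := by rw [val_add_one, if_pos h1]
    have hc2 : cvert N k (i + 1) = iot N (k + zig N (i + 1).val) := cvert_eq_iot N k (by omega)
    rw [hs, zig_zero, add_zero] at hc2
    rcases h with h | h
    · exfalso
      have := congrArg (fun p => (Prod.fst p).val) h
      rw [hc1] at this
      simp only [Fin.val_last] at this
      omega
    · left
      have hu : q.val.1 = iot N k := by rw [congrArg Prod.fst h, hc2]
      have hv : q.val.2.val = N := by rw [congrArg Prod.snd h, hc1]; rfl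
      rw [occ_inf0 N q hv, Prod.mk.injEq]
      constructor
      · apply ZMod.val_injective
        rw [qa_val, hu, iot_val]
      · apply ZMod.val_injective
        rw [cast_val_le N le_rfl, h1]
  · by_cases h2 : (i + 1).val = N
    · have hiv : i.val = N - 1 := by
        rw [val_add_one, if_neg h1] at h2
        omega
      have hc1 : cvert N k i = iot N (k + zig N (N - 1)) := by
        rw [cvert_eq_iot N k h1, hiv]
      have hc2 : cvert N k (i + 1) = Fin.last N := cvert_eq_last N k h2
      rcases h with h | h
      · right
        have hu : q.val.1 = iot N (k + zig N (N - 1)) := by rw [congrArg Prod.fst h, hc1]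
        have hv : q.val.2.val = N := by rw [congrArg Prod.snd h, hc2]; rfl
        rw [occ_inf1 N q hv, Prod.mk.injEq]
        constructor
        · have e1 : k + zig N (N - 1) = qa N q := by
            apply ZMod.val_injective
            rw [qa_val, hu, iot_val]
          rw [← e1]
          ring
        · apply ZMod.val_injective
          rw [cast_val_le N (by omega), hiv]
      · exfalso
        have := congrArg (fun p => (Prod.fst p).val) h
        rw [hc2] at this
        simp only [Fin.val_last] at this
        omega
    · have hiv : (i + 1).val = i.val + 1 := by rw [val_add_one, if_neg h1]
      have ht2 : i.val + 1 < N := by omega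
      have hc1 : cvert N k i = iot N (k + zig N i.val) := cvert_eq_iot N k h1
      have hc2 : cvert N k (i + 1) = iot N (k + zig N (i.val + 1)) := by
        rw [cvert_eq_iot N k h2, hiv]
      have hvint : ¬ q.val.2.val = N := by
        rcases h with h | h
        · have hv' : q.val.2 = cvert N k (i + 1) := by rw [h]
          rw [hv', hc2, iot_val]
          have := ZMod.val_lt (k + zig N (i.val + 1))
          omega
        · have hv' : q.val.2 = cvert N k i := by rw [h]
          rw [hv', hc1, iot_val]
          have := ZMod.val_lt (k + zig N i.val)
          omega
      have hd1 := qd_pos N q hvint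
      have hdN := qd_lt N q
      rcases h with h | h
      · have hu' : q.val.1 = cvert N k i := by rw [h]
        have hv' : q.val.2 = cvert N k (i + 1) := by rw [h]
        have e1 : k + zig N i.val = qa N q := by
          apply ZMod.val_injective
          rw [qa_val, hu', hc1, iot_val]
        have e2 : k + zig N (i.val + 1) = qb N q := by
          apply ZMod.val_injective
          rw [qb_val N q hvint, hv', hc2, iot_val]
        have hdelta : zig N (i.val + 1) - zig N i.val = qb N q - qa N q := by
          linear_combination e2 - e1
        rw [zig_step_eq_iff N ht2 (qba_ne N q hvint),
          show (qb N q - qa N q).val = qd N q from rfl] at hdelta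
        rcases hdelta with ⟨hpar, heq⟩ | ⟨hpar, heq⟩
        · left
          rw [occ_int0 N q hvint, Prod.mk.injEq, if_pos (by omega)]
          constructor
          · rw [show qd N q - 1 = i.val by omega, ← e1]
            ring
          · apply ZMod.val_injective
            rw [cast_val_le N (by omega)]
            omega
        · right
          rw [occ_int1 N q hvint, Prod.mk.injEq, if_neg (by omega)]
          constructor
          · rw [show N - qd N q - 1 = i.val by omega, ← e1]
            ring
          · apply ZMod.val_injective
            rw [cast_val_le N (by omega)]
            omega
      · have hu' : q.val.1 = cvert N k (i + 1) := by rw [h]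
        have hv' : q.val.2 = cvert N k i := by rw [h]
        have e1 : k + zig N i.val = qb N q := by
          apply ZMod.val_injective
          rw [qb_val N q hvint, hv', hc1, iot_val]
        have e2 : k + zig N (i.val + 1) = qa N q := by
          apply ZMod.val_injective
          rw [qa_val, hu', hc2, iot_val]
        have hne' : qa N q - qb N q ≠ 0 := by
          intro hc
          apply qba_ne N q hvint
          linear_combination -hc
        have hdelta : zig N (i.val + 1) - zig N i.val = qa N q - qb N q := by
          linear_combination e2 - e1
        rw [zig_step_eq_iff N ht2 hne', val_qab N q hvint] at hdelta
        rcases hdelta with ⟨hpar, heq⟩ | ⟨hpar, heq⟩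
        · right
          rw [occ_int1 N q hvint, Prod.mk.injEq, if_pos (by omega)]
          constructor
          · rw [show N - qd N q - 1 = i.val by omega, ← e1]
            ring
          · apply ZMod.val_injective
            rw [cast_val_le N (by omega)]
            omega
        · left
          rw [occ_int0 N q hvint, Prod.mk.injEq, if_neg (by omega)]
          constructor
          · rw [show qd N q - 1 = i.val by omega, ← e1]
            ring
          · apply ZMod.val_injective
            rw [cast_val_le N (by omega)]
            omega

lemma zig_even_eval {t : ℕ} (h : t % 2 = 0) : zig N t = -((t / 2 : ℕ) : ZMod N) := by
  unfold zig; rw [if_neg (by omega)]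

lemma zig_odd_eval {t : ℕ} (h : t % 2 = 1) : zig N t = (((t + 1) / 2 : ℕ) : ZMod N) := by
  unfold zig; rw [if_pos h]

lemma qa_ne_qb (q : WPair (N + 1)) (h : ¬ q.val.2.val = N) : qa N q ≠ qb N q := by
  intro hc
  exact qba_ne N q h (by rw [hc]; ring)

lemma occ_ne (q : WPair (N + 1)) : occ N q 0 ≠ occ N q 1 := by
  have hN := hNpos N
  by_cases h : q.val.2.val = N
  · rw [occ_inf0 N q h, occ_inf1 N q h]
    intro hc
    have h2 := congrArg (fun p : ZMod N × ZMod (N + 1) => p.2.val) hc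
    simp only [cast_val_le N le_rfl, cast_val_le N (show N - 1 ≤ N by omega)] at h2
    omega
  · have hd1 := qd_pos N q h
    have hdN := qd_lt N q
    rw [occ_int0 N q h, occ_int1 N q h]
    intro hc
    have h2 := congrArg (fun p : ZMod N × ZMod (N + 1) => p.2.val) hc
    simp only [cast_val_le N (show qd N q - 1 ≤ N by omega),
      cast_val_le N (show N - qd N q - 1 ≤ N by omega)] at h2
    have hNd : N = 2 * qd N q := by omega
    have h1 := congrArg Prod.fst hc
    simp only at h1
    rw [show N - qd N q - 1 = qd N q - 1 by omega, show N - qd N q = qd N q by omega] at h1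
    by_cases hpar : qd N q % 2 = 1
    · rw [if_pos hpar, if_pos hpar] at h1
      exact qa_ne_qb N q h (by linear_combination h1)
    · rw [if_neg hpar, if_neg hpar] at h1
      exact qa_ne_qb N q h (by linear_combination -h1)

lemma occ_half (m : ℕ) (hm : N = 2 * m) (q : WPair (N + 1)) :
    (occ N q 1).1 = (occ N q 0).1 + ((m : ℕ) : ZMod N) := by
  have hN := hNpos N
  have hm1 : 1 ≤ m := by omega
  have hmm : ((2 * m : ℕ) : ZMod N) = 0 := by rw [← hm]; exact ZMod.natCast_self N
  push_cast at hmm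
  by_cases h : q.val.2.val = N
  · rw [occ_inf0 N q h, occ_inf1 N q h]
    simp only
    rw [zig_odd_eval N (t := N - 1) (by omega), show (N - 1 + 1) / 2 = m by omega]
    linear_combination -hmm
  · have hd1 := qd_pos N q h
    have hdN := qd_lt N q
    have hb : qb N q = qa N q + ((qd N q : ℕ) : ZMod N) := by
      linear_combination -(cast_qd N q)
    rw [occ_int0 N q h, occ_int1 N q h]
    simp only
    set d := qd N q with hdd
    by_cases hpar : d % 2 = 1
    · rw [if_pos hpar, if_pos (show (N - d) % 2 = 1 by omega),
        zig_even_eval N (t := d - 1) (by omega), zig_even_eval N (t := N - d - 1) (by omega), hb]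
      have key : ((d + (N - d - 1) / 2 : ℕ) : ZMod N) = (((d - 1) / 2 + m : ℕ) : ZMod N) := by
        rw [show (d + (N - d - 1) / 2 : ℕ) = ((d - 1) / 2 + m : ℕ) by omega]
      push_cast at key
      linear_combination key
    · rw [if_neg hpar, if_neg (show ¬ (N - d) % 2 = 1 by omega),
        zig_odd_eval N (t := d - 1) (by omega), zig_odd_eval N (t := N - d - 1) (by omega), hb]
      rw [show (d - 1 + 1) / 2 = d / 2 by omega, show (N - d - 1 + 1) / 2 = (N - d) / 2 by omega]
      have key : ((d + m + (N - d) / 2 : ℕ) : ZMod N) = ((d / 2 + N : ℕ) : ZMod N) := by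
        rw [show (d + m + (N - d) / 2 : ℕ) = (d / 2 + N : ℕ) by omega]
      push_cast at key
      rw [ZMod.natCast_self] at key
      linear_combination -key

lemma cvert_bijective (k : ZMod N) : Function.Bijective (cvert N k) := by
  rw [Fintype.bijective_iff_injective_and_card]
  exact ⟨cvert_injective N k, by rw [ZMod.card, Fintype.card_fin]⟩

lemma ends_pairAt (k : ZMod N) (i : ZMod (N + 1)) :
    (pairAt N k i).val = (cvert N k i, cvert N k (i + 1)) ∨
      (pairAt N k i).val = (cvert N k (i + 1), cvert N k i) :=
  (pairAt_eq_iff N k i _).mp rfl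

def sOf (k : ZMod N) (i : ZMod (N + 1)) : Fin 2 :=
  if occ N (pairAt N k i) 0 = (k, i) then 0 else 1

lemma occ_sOf (k : ZMod N) (i : ZMod (N + 1)) :
    occ N (pairAt N k i) (sOf N k i) = (k, i) := by
  unfold sOf
  split_ifs with h
  · exact h
  · rcases occ_complete N (pairAt N k i) k i rfl with h0 | h1
    · exact absurd h0.symm h
    · exact h1.symm

lemma sOf_spec (q : WPair (N + 1)) (s : Fin 2) (k : ZMod N) (i : ZMod (N + 1))
    (hq : pairAt N k i = q) (h : occ N q s = (k, i)) : sOf N k i = s := by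
  subst hq
  have hs : s = 0 ∨ s = 1 := by
    rcases s with ⟨sv, hsv⟩
    interval_cases sv
    · exact Or.inl rfl
    · exact Or.inr rfl
  unfold sOf
  split_ifs with h0
  · rcases hs with rfl | rfl
    · rfl
    · exact absurd (h0.trans h.symm) (occ_ne N _)
  · rcases hs with rfl | rfl
    · exact absurd h h0
    · rfl

set_option maxHeartbeats 1000000 in
theorem decompO (lam : ℕ) (hev : lam % 2 = 0) (hlam : 1 ≤ lam) :
    ∃ D : Finset (Finset (WPair (N + 1) × Fin lam)),
      IsHamDecomp (fun e => (e.1.val.1, e.1.val.2)) D := by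
  classical
  have hN := hNpos N
  set ends : WPair (N + 1) × Fin lam → Fin (N + 1) × Fin (N + 1) :=
    fun e => (e.1.val.1, e.1.val.2) with hends
  have hlt : ∀ (j : Fin (lam / 2)) (s : Fin 2), 2 * j.val + s.val < lam := by
    intro j s
    have := j.isLt
    have := s.isLt
    omega
  set eO : ZMod N → Fin (lam / 2) → ZMod (N + 1) → WPair (N + 1) × Fin lam :=
    fun k j i => (pairAt N k i, ⟨2 * j.val + (sOf N k i).val, hlt j (sOf N k i)⟩) with heO
  set SO : ZMod N → Fin (lam / 2) → Finset (WPair (N + 1) × Fin lam) :=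
    fun k j => Finset.image (eO k j) Finset.univ with hSO
  refine ⟨Finset.image (fun p : ZMod N × Fin (lam / 2) => SO p.1 p.2) Finset.univ, ?_, ?_⟩
  · intro S hS
    obtain ⟨p, -, rfl⟩ := Finset.mem_image.mp hS
    refine isHamCycle_of_cycle (by omega) ends (cvert N p.1) (cvert_bijective N p.1)
      (eO p.1 p.2) ?_ ?_
    · intro i i' hii
      have hp : pairAt N p.1 i = pairAt N p.1 i' := congrArg Prod.fst hii
      have hl : 2 * p.2.val + (sOf N p.1 i).val = 2 * p.2.val + (sOf N p.1 i').val := by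
        have := congrArg (fun e : WPair (N + 1) × Fin lam => e.2.val) hii
        exact this
      have hsof : sOf N p.1 i = sOf N p.1 i' := Fin.ext (by omega)
      have h1 := occ_sOf N p.1 i
      rw [hp, hsof] at h1
      have h2 := h1.symm.trans (occ_sOf N p.1 i')
      exact ((Prod.mk.injEq _ _ _ _).mp h2).2
    · intro i
      rcases ends_pairAt N p.1 i with h | h
      · left; rw [hends]; simp only [heO]; rw [h]
      · right; rw [hends]; simp only [heO]; rw [h]
  · rintro ⟨q, l⟩
    have hs2 : l.val % 2 < 2 := by omega
    set s : Fin 2 := ⟨l.val % 2, hs2⟩ with hsdef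
    set k : ZMod N := (occ N q s).1 with hk
    set i : ZMod (N + 1) := (occ N q s).2 with hi
    have hocc : occ N q s = (k, i) := rfl
    have hq : pairAt N k i = q := by
      have := occ_correct N q s
      rw [← hk, ← hi] at this
      exact this
    have hsof : sOf N k i = s := sOf_spec N q s k i hq hocc
    have hjlt : l.val / 2 < lam / 2 := by omega
    set j : Fin (lam / 2) := ⟨l.val / 2, hjlt⟩ with hj
    have hmem : eO k j i = (q, l) := by
      rw [heO]
      refine Prod.ext hq (Fin.ext ?_)
      simp only [hsof, hsdef, hj]
      omega
    refine ⟨SO k j, ⟨Finset.mem_image.mpr ⟨(k, j), Finset.mem_univ _, rfl⟩, ?_⟩, ?_⟩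
    · exact Finset.mem_image.mpr ⟨i, Finset.mem_univ _, hmem⟩
    · rintro S' ⟨hS', hmem'⟩
      obtain ⟨p, -, rfl⟩ := Finset.mem_image.mp hS'
      obtain ⟨i', -, hi'⟩ := Finset.mem_image.mp hmem'
      have hq' : pairAt N p.1 i' = q := congrArg Prod.fst hi'
      have hl' : 2 * p.2.val + (sOf N p.1 i').val = l.val := by
        have := congrArg (fun e : WPair (N + 1) × Fin lam => e.2.val) hi'
        exact this
      have hsval : (sOf N p.1 i').val = l.val % 2 := by
        have := (sOf N p.1 i').isLt
        omega
      have hsof' : sOf N p.1 i' = s := Fin.ext (by rw [hsval])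
      have h1 := occ_sOf N p.1 i'
      rw [hq', hsof', hocc] at h1
      have hpk : p.1 = k := (((Prod.mk.injEq _ _ _ _).mp h1).1).symm
      have hpj : p.2 = j := by
        refine Fin.ext ?_
        have := (sOf N p.1 i').isLt
        simp only [hj]
        omega
      rw [hpk, hpj]

lemma add_m_val (m : ℕ) (hm : N = 2 * m) (x : ZMod N) :
    (x + ((m : ℕ) : ZMod N)).val = if x.val + m < N then x.val + m else x.val + m - N := by
  have hN := hNpos N
  have hlt := ZMod.val_lt x
  rw [ZMod.val_add, ZMod.val_natCast_of_lt (by omega)]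
  split_ifs with h
  · exact Nat.mod_eq_of_lt h
  · rw [Nat.mod_eq_sub_mod (by omega), Nat.mod_eq_of_lt (by omega)]

theorem decompE (lam m : ℕ) (hm : N = 2 * m) (hlam : 1 ≤ lam) :
    ∃ D : Finset (Finset (WPair (N + 1) × Fin lam)),
      IsHamDecomp (fun e => (e.1.val.1, e.1.val.2)) D := by
  classical
  have hN := hNpos N
  have hm1 : 1 ≤ m := by omega
  have hmne : ((m : ℕ) : ZMod N) ≠ 0 := by
    intro hc
    have := congrArg ZMod.val hc
    rw [ZMod.val_natCast_of_lt (by omega), ZMod.val_zero] at this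
    omega
  set ends : WPair (N + 1) × Fin lam → Fin (N + 1) × Fin (N + 1) :=
    fun e => (e.1.val.1, e.1.val.2) with hends
  set eE : ZMod N → Fin lam → ZMod (N + 1) → WPair (N + 1) × Fin lam :=
    fun k l i => (pairAt N k i, l) with heE
  set SE : ZMod N → Fin lam → Finset (WPair (N + 1) × Fin lam) :=
    fun k l => Finset.image (eE k l) Finset.univ with hSE
  set keys : Finset (ZMod N × Fin lam) :=
    (Finset.univ.filter (fun k : ZMod N => k.val < m)) ×ˢ Finset.univ with hkeys
  have pair_inj : ∀ (k : ZMod N) (i i' : ZMod (N + 1)),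
      pairAt N k i = pairAt N k i' → i = i' := by
    intro k i i' hp
    rcases occ_complete N (pairAt N k i) k i rfl with h0 | h0 <;>
      rcases occ_complete N (pairAt N k i) k i' (by rw [hp]) with h1 | h1
    · exact ((Prod.mk.injEq _ _ _ _).mp (h0.trans h1.symm)).2
    · exfalso
      have hk0 := congrArg Prod.fst h0
      have hk1 := congrArg Prod.fst h1
      rw [occ_half N m hm] at hk1
      simp only at hk0 hk1
      apply hmne
      have h2 : (occ N (pairAt N k i) 0).1 = (occ N (pairAt N k i) 0).1 + ((m : ℕ) : ZMod N) :=
        hk0.symm.trans hk1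
      linear_combination -h2
    · exfalso
      have hk0 := congrArg Prod.fst h0
      have hk1 := congrArg Prod.fst h1
      rw [occ_half N m hm] at hk0
      simp only at hk0 hk1
      apply hmne
      have h2 : (occ N (pairAt N k i) 0).1 = (occ N (pairAt N k i) 0).1 + ((m : ℕ) : ZMod N) :=
        hk1.symm.trans hk0
      linear_combination -h2
    · exact ((Prod.mk.injEq _ _ _ _).mp (h0.trans h1.symm)).2
  refine ⟨Finset.image (fun p : ZMod N × Fin lam => SE p.1 p.2) keys, ?_, ?_⟩
  · intro S hS
    obtain ⟨p, -, rfl⟩ := Finset.mem_image.mp hS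
    refine isHamCycle_of_cycle (by omega) ends (cvert N p.1) (cvert_bijective N p.1)
      (eE p.1 p.2) ?_ ?_
    · intro i i' hii
      exact pair_inj p.1 i i' (congrArg Prod.fst hii)
    · intro i
      rcases ends_pairAt N p.1 i with h | h
      · left; rw [hends]; simp only [heE]; rw [h]
      · right; rw [hends]; simp only [heE]; rw [h]
  · rintro ⟨q, l⟩
    set k0 : ZMod N := (occ N q 0).1 with hk0
    have hhalf : (occ N q 1).1 = k0 + ((m : ℕ) : ZMod N) := occ_half N m hm q
    have hvadd := add_m_val N m hm k0
    have hlt0 := ZMod.val_lt k0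
    -- choose the occurrence whose k has val < m
    set s : Fin 2 := if k0.val < m then 0 else 1 with hs
    set k : ZMod N := (occ N q s).1 with hk
    set i : ZMod (N + 1) := (occ N q s).2 with hi
    have hkval : k.val < m := by
      rw [hk, hs]
      split_ifs with h0
      · exact h0
      · rw [hhalf, hvadd]
        split_ifs <;> omega
    have hq : pairAt N k i = q := by
      have := occ_correct N q s
      rw [← hk, ← hi] at this
      exact this
    have hkkeys : (k, l) ∈ keys := by
      rw [hkeys]
      refine Finset.mem_product.mpr ⟨Finset.mem_filter.mpr ⟨Finset.mem_univ _, hkval⟩,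
        Finset.mem_univ _⟩
    refine ⟨SE k l, ⟨Finset.mem_image.mpr ⟨(k, l), hkkeys, rfl⟩, ?_⟩, ?_⟩
    · exact Finset.mem_image.mpr ⟨i, Finset.mem_univ _, Prod.ext hq rfl⟩
    · rintro S' ⟨hS', hmem'⟩
      obtain ⟨p, hpkeys, rfl⟩ := Finset.mem_image.mp hS'
      obtain ⟨i', -, hi'⟩ := Finset.mem_image.mp hmem'
      have hq' : pairAt N p.1 i' = q := congrArg Prod.fst hi'
      have hl' : p.2 = l := congrArg Prod.snd hi'
      have hp1 : p.1.val < m := by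
        have := (Finset.mem_product.mp hpkeys).1
        exact (Finset.mem_filter.mp this).2
      have hp1k : p.1 = k := by
        rcases occ_complete N q p.1 i' hq' with h0 | h0
        · have hpk0 : p.1 = k0 := congrArg Prod.fst h0
          have hlt' : k0.val < m := by rw [← hpk0]; exact hp1
          have hs0 : s = 0 := by rw [hs, if_pos hlt']
          rw [hk, hs0, ← hk0]
          exact hpk0
        · have hpk1 : p.1 = (occ N q 1).1 := congrArg Prod.fst h0
          have hlt' : ¬ k0.val < m := by
            have hv' : p.1.val = (k0 + ((m : ℕ) : ZMod N)).val := by rw [hpk1, hhalf]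
            rw [hvadd] at hv'
            by_contra hcon
            rw [if_pos (by omega)] at hv'
            omega
          have hs1 : s = 1 := by rw [hs, if_neg hlt']
          rw [hk, hs1]
          exact hpk1
      rw [hp1k, hl']

end Walecki

section Forward

lemma card_filter_sum_decomp {E : Type} [DecidableEq E] [Fintype E] (D : Finset (Finset E))
    (hD : ∀ e : E, ∃! S, S ∈ D ∧ e ∈ S) (P : E → Prop) [DecidablePred P] :
    (Finset.univ.filter P).card = ∑ S ∈ D, (S.filter P).card := by
  rw [← Finset.card_biUnion]
  · congr 1
    ext e
    simp only [Finset.mem_biUnion, Finset.mem_filter, Finset.mem_univ, true_and]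
    constructor
    · intro hP
      obtain ⟨S, ⟨hS, he⟩, -⟩ := hD e
      exact ⟨S, hS, he, hP⟩
    · rintro ⟨S, hS, hmem, hP⟩
      exact hP
  · intro S hS S' hS' hne
    refine Finset.disjoint_left.mpr ?_
    intro e he he'
    obtain ⟨T, -, huniq⟩ := hD e
    have h1 := huniq S ⟨hS, (Finset.mem_filter.mp he).1⟩
    have h2 := huniq S' ⟨hS', (Finset.mem_filter.mp he').1⟩
    exact hne (h1.trans h2.symm)

lemma card_pairs_fst (n : ℕ) (v : Fin n) :
    (Finset.univ.filter (fun q : WPair n => q.val.1 = v)).card = n - 1 - v.val := by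
  classical
  rw [← Fin.card_Ioi v]
  refine Finset.card_bij' (fun q _ => q.val.2)
    (fun b hb => (⟨(v, b), Finset.mem_Ioi.mp hb⟩ : WPair n)) ?_ ?_ ?_ ?_
  · intro q hq
    have h1 := (Finset.mem_filter.mp hq).2
    have h2 := q.prop
    rw [h1] at h2
    exact Finset.mem_Ioi.mpr h2
  · intro b hb
    exact Finset.mem_filter.mpr ⟨Finset.mem_univ _, rfl⟩
  · intro q hq
    have h1 := (Finset.mem_filter.mp hq).2
    apply Subtype.ext
    exact Prod.ext h1.symm rfl
  · intro b hb
    rfl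

lemma card_pairs_snd (n : ℕ) (v : Fin n) :
    (Finset.univ.filter (fun q : WPair n => q.val.2 = v)).card = v.val := by
  classical
  rw [← Fin.card_Iio v]
  refine Finset.card_bij' (fun q _ => q.val.1)
    (fun b hb => (⟨(b, v), Finset.mem_Iio.mp hb⟩ : WPair n)) ?_ ?_ ?_ ?_
  · intro q hq
    have h1 := (Finset.mem_filter.mp hq).2
    have h2 := q.prop
    rw [h1] at h2
    exact Finset.mem_Iio.mpr h2
  · intro b hb
    exact Finset.mem_filter.mpr ⟨Finset.mem_univ _, rfl⟩
  · intro q hq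
    have h1 := (Finset.mem_filter.mp hq).2
    apply Subtype.ext
    exact Prod.ext rfl h1.symm
  · intro b hb
    rfl

lemma even_of_decomp {n lam : ℕ} (hn : 2 ≤ n)
    (D : Finset (Finset (WPair n × Fin lam)))
    (hD : IsHamDecomp (fun e : WPair n × Fin lam => (e.1.val.1, e.1.val.2)) D) :
    Even (lam * (n - 1)) := by
  classical
  set v : Fin n := ⟨0, by omega⟩ with hv
  -- each cycle contributes exactly 2 to the degree of v
  have hdeg : ∀ S ∈ D, (S.filter (fun e : WPair n × Fin lam => e.1.val.1 = v)).card
      + (S.filter (fun e : WPair n × Fin lam => e.1.val.2 = v)).card = 2 := by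
    intro S hS
    have h2 := (hD.1 S hS).1 v
    rw [degIn_eq_filter] at h2
    convert h2 using 3
  -- product counting
  have hprod1 : (Finset.univ.filter (fun e : WPair n × Fin lam => e.1.val.1 = v)).card
      = (Finset.univ.filter (fun q : WPair n => q.val.1 = v)).card * lam := by
    have h1 : Finset.univ.filter (fun e : WPair n × Fin lam => e.1.val.1 = v)
        = (Finset.univ.filter (fun q : WPair n => q.val.1 = v)) ×ˢ Finset.univ := by
      ext e
      simp [Finset.mem_product]
    rw [h1, Finset.card_product, Finset.card_univ, Fintype.card_fin]
  have hprod2 : (Finset.univ.filter (fun e : WPair n × Fin lam => e.1.val.2 = v)).card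
      = (Finset.univ.filter (fun q : WPair n => q.val.2 = v)).card * lam := by
    have h1 : Finset.univ.filter (fun e : WPair n × Fin lam => e.1.val.2 = v)
        = (Finset.univ.filter (fun q : WPair n => q.val.2 = v)) ×ˢ Finset.univ := by
      ext e
      simp [Finset.mem_product]
    rw [h1, Finset.card_product, Finset.card_univ, Fintype.card_fin]
  have hsum1 := card_filter_sum_decomp D hD.2 (fun e : WPair n × Fin lam => e.1.val.1 = v)
  have hsum2 := card_filter_sum_decomp D hD.2 (fun e : WPair n × Fin lam => e.1.val.2 = v)
  have htot : (Finset.univ.filter (fun e : WPair n × Fin lam => e.1.val.1 = v)).card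
      + (Finset.univ.filter (fun e : WPair n × Fin lam => e.1.val.2 = v)).card = 2 * D.card := by
    rw [hsum1, hsum2, ← Finset.sum_add_distrib, Finset.sum_congr rfl hdeg, Finset.sum_const,
      smul_eq_mul, mul_comm]
  rw [hprod1, hprod2, card_pairs_fst, card_pairs_snd] at htot
  have hv0 : v.val = 0 := rfl
  rw [hv0, Nat.sub_zero, Nat.zero_mul, Nat.add_zero] at htot
  refine ⟨D.card, ?_⟩
  rw [mul_comm, htot]
  omega

end Forward

/-- Walecki: `λK_n` (every pair of the `n ≥ 2` vertices joined by `λ ≥ 1` parallel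
edges) is Hamiltonian decomposable iff `λ(n-1)` is even. -/
theorem lambdaKn_hamDecomp_iff (n lam : ℕ) (hn : 2 ≤ n) (hlam : 1 ≤ lam) :
    (∃ D : Finset (Finset ({q : Fin n × Fin n // q.1 < q.2} × Fin lam)),
      IsHamDecomp (fun e => ((e.1.val.1 : Fin n), (e.1.val.2 : Fin n))) D) ↔
    Even (lam * (n - 1)) := by
  obtain ⟨N, rfl⟩ : ∃ N, n = N + 1 := ⟨n - 1, by omega⟩
  haveI : NeZero N := ⟨by omega⟩
  rw [show (N + 1) - 1 = N from rfl]
  constructor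
  · rintro ⟨D, hD⟩
    have := even_of_decomp (n := N + 1) (lam := lam) hn D hD
    rwa [show (N + 1) - 1 = N from rfl] at this
  · intro hev
    rcases Nat.even_mul.mp hev with hl | hN
    · exact decompO N lam (Nat.even_iff.mp hl) hlam
    · obtain ⟨m, hm⟩ := hN
      exact decompE N lam m (by omega) hlam
end

section
/- Let p > 1, a ≥ 2, λ₁ ≥ 0, λ₂ ≥ 1 be integers with λ₁ ≠ λ₂. If K(a^{(p)}; λ₁, λ₂) has a Hamiltonian decomposition, then λ₁ ≤ λ₂a(p−1). -/
/-- Number of edges joining `u` and `v`. -/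
noncomputable def multOf {V E : Type} (ends : E → V × V) (u v : V) : ℕ :=
  Nat.card {e : E // ends e = (u, v) ∨ ends e = (v, u)}

/-!
Fix a part `W` of the multipartite graph and count its pure edges in two ways. Each vertex of
`W` meets `λ₁ (a - 1)` of them, so there are `λ₁ a (a - 1) / 2`. A Hamiltonian cycle contains at
most `a - 1` of them: with `a` of them every vertex of `W` would use both its cycle edges
inside `W`, and the cycle could never leave `W`. Since every vertex has degree
`λ₁ (a - 1) + λ₂ a (p - 1)` and each cycle uses two of its edges, there are half that many cycles,
whence `λ₁ a (a - 1) ≤ (a - 1) (λ₁ (a - 1) + λ₂ a (p - 1))`, i.e. `λ₁ ≤ λ₂ a (p - 1)`.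
-/

open Finset

section Degrees

variable {V E : Type} (ends : E → V × V)

lemma connIn.mem_of_forall_mem_iff {S : Finset E} (hS : connIn ends S) {W : Finset V}
    (hW : ∀ e ∈ S, (ends e).1 ∈ W ↔ (ends e).2 ∈ W) {u : V} (hu : u ∈ W) (v : V) : v ∈ W := by
  induction hS u v with
  | refl => exact hu
  | tail _ hstep ih =>
    obtain ⟨e, he, h | h⟩ := hstep
    · simpa only [h] using (hW e he).mp (by simpa only [h] using ih)
    · simpa only [h] using (hW e he).mpr (by simpa only [h] using ih)

variable [DecidableEq V]

def edgesIn (W : Finset V) (S : Finset E) : Finset E :=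
  {e ∈ S | (ends e).1 ∈ W ∧ (ends e).2 ∈ W}

lemma degIn_eq_card_add_card (S : Finset E) (v : V) :
    degIn ends S v = #{e ∈ S | (ends e).1 = v} + #{e ∈ S | (ends e).2 = v} := by
  simp only [degIn, ← Nat.card_eq_finsetCard, mem_filter]

lemma degIn_mono {S T : Finset E} (hTS : T ⊆ S) (v : V) : degIn ends T v ≤ degIn ends S v := by
  simp only [degIn_eq_card_add_card]
  gcongr

lemma sum_degIn_eq_two_mul_card {W : Finset V} {S : Finset E}
    (hS : ∀ e ∈ S, (ends e).1 ∈ W ∧ (ends e).2 ∈ W) :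
    ∑ v ∈ W, degIn ends S v = 2 * #S := by
  simp only [degIn_eq_card_add_card, sum_add_distrib, two_mul]
  rw [← card_eq_sum_card_fiberwise fun e he => (hS e he).1,
    ← card_eq_sum_card_fiberwise fun e he => (hS e he).2]

lemma mem_of_card_filter_le {S T : Finset E} (hTS : T ⊆ S) {P : E → Prop} [DecidablePred P]
    (hcard : #{e ∈ S | P e} ≤ #{e ∈ T | P e}) {e : E} (he : e ∈ S) (hP : P e) : e ∈ T :=
  (mem_filter.mp (eq_of_subset_of_card_le (filter_subset_filter P hTS) hcard ▸
    mem_filter.mpr ⟨he, hP⟩)).1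

lemma mem_of_degIn_eq {S T : Finset E} (hTS : T ⊆ S) {v : V}
    (hdeg : degIn ends T v = degIn ends S v) {e : E} (he : e ∈ S)
    (hv : (ends e).1 = v ∨ (ends e).2 = v) : e ∈ T := by
  rw [degIn_eq_card_add_card, degIn_eq_card_add_card] at hdeg
  have h₁ := card_le_card (filter_subset_filter (fun e => (ends e).1 = v) hTS)
  have h₂ := card_le_card (filter_subset_filter (fun e => (ends e).2 = v) hTS)
  rcases hv with hv | hv
  · exact mem_of_card_filter_le hTS (P := fun e => (ends e).1 = v) (by omega) he hv
  · exact mem_of_card_filter_le hTS (P := fun e => (ends e).2 = v) (by omega) he hv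

lemma IsHamCycle.card_edgesIn_lt {S : Finset E} (hS : IsHamCycle ends S) {W : Finset V}
    (hW : W.Nonempty) {w : V} (hw : w ∉ W) : #(edgesIn ends W S) < #W := by
  by_contra! hle
  set T := edgesIn ends W S
  have hTS : T ⊆ S := filter_subset _ _
  have hTdeg : ∀ v ∈ W, degIn ends T v ≤ 2 := fun v _ => hS.1 v ▸ degIn_mono ends hTS v
  have hsum : ∑ v ∈ W, degIn ends T v = ∑ _v ∈ W, 2 := by
    refine le_antisymm (sum_le_sum hTdeg) ?_
    rw [sum_const, smul_eq_mul,
      sum_degIn_eq_two_mul_card ends (S := T) fun e he => (mem_filter.mp he).2]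
    omega
  have hfull : ∀ v ∈ W, degIn ends T v = degIn ends S v := fun v hv =>
    (hS.1 v).symm ▸ (sum_eq_sum_iff_of_le hTdeg).mp hsum v hv
  have hclosed : ∀ e ∈ S, (ends e).1 ∈ W ↔ (ends e).2 ∈ W := fun e he =>
    ⟨fun h => (mem_filter.mp (mem_of_degIn_eq ends hTS (hfull _ h) he (Or.inl rfl))).2.2,
      fun h => (mem_filter.mp (mem_of_degIn_eq ends hTS (hfull _ h) he (Or.inr rfl))).2.1⟩
  obtain ⟨u, hu⟩ := hW
  exact hw (hS.2.mem_of_forall_mem_iff ends hclosed hu w)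

variable [Fintype E]

lemma sum_card_filter_of_partition {D : Finset (Finset E)} (hD : ∀ e, ∃! S, S ∈ D ∧ e ∈ S)
    (P : E → Prop) [DecidablePred P] : ∑ S ∈ D, #{e ∈ S | P e} = #{e | P e} := by
  classical
  rw [← card_biUnion]
  · congr 1
    ext e
    simp only [mem_biUnion, mem_filter, mem_univ, true_and]
    constructor
    · rintro ⟨_, _, _, hP⟩
      exact hP
    · intro hP
      obtain ⟨S, ⟨hS, he⟩, _⟩ := hD e
      exact ⟨S, hS, he, hP⟩
  · intro S hS S' hS' hne
    exact disjoint_left.mpr fun e he he' =>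
      hne ((hD e).unique ⟨hS, (mem_filter.mp he).1⟩ ⟨hS', (mem_filter.mp he').1⟩)

lemma sum_degIn_of_partition {D : Finset (Finset E)} (hD : ∀ e, ∃! S, S ∈ D ∧ e ∈ S) (v : V) :
    ∑ S ∈ D, degIn ends S v = degIn ends univ v := by
  simp only [degIn_eq_card_add_card, sum_add_distrib, sum_card_filter_of_partition hD]

lemma IsHamDecomp.two_mul_card_eq_degIn {D : Finset (Finset E)} (hD : IsHamDecomp ends D)
    (v : V) : 2 * #D = degIn ends univ v := by
  rw [← sum_degIn_of_partition ends hD.2, sum_congr rfl fun S hS => (hD.1 S hS).1 v, sum_const,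
    smul_eq_mul, mul_comm]

lemma IsHamDecomp.card_edgesIn_le {D : Finset (Finset E)} (hD : IsHamDecomp ends D)
    {W : Finset V} (hW : W.Nonempty) {w : V} (hw : w ∉ W) :
    #(edgesIn ends W univ) ≤ #D * (#W - 1) := by
  rw [edgesIn, ← sum_card_filter_of_partition hD.2, ← smul_eq_mul, ← sum_const]
  exact sum_le_sum fun S hS => Nat.le_sub_one_of_lt ((hD.1 S hS).card_edgesIn_lt ends hW hw)

lemma multOf_eq_card_add_card {u v : V} (huv : u ≠ v) :
    multOf ends v u = #{e | ends e = (v, u)} + #{e | ends e = (u, v)} := by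
  classical
  rw [multOf, ← card_union_of_disjoint, ← filter_or, ← Nat.card_eq_finsetCard]
  · simp only [mem_filter, mem_univ, true_and]
  · refine disjoint_filter.mpr fun e _ h₁ h₂ => huv ?_
    rw [h₁, Prod.mk.injEq] at h₂
    exact h₂.2

lemma degIn_edgesIn_eq_sum_multOf (hloop : ∀ e, (ends e).1 ≠ (ends e).2) {W : Finset V}
    {v : V} (hv : v ∈ W) :
    degIn ends (edgesIn ends W univ) v = ∑ u ∈ W.erase v, multOf ends v u := by
  rw [sum_congr rfl fun u hu => multOf_eq_card_add_card ends (ne_of_mem_erase hu),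
    sum_add_distrib, degIn_eq_card_add_card]
  congr 1
  · rw [card_eq_sum_card_fiberwise (f := fun e => (ends e).2) (t := W.erase v)]
    · refine sum_congr rfl fun u hu => congr_arg card ?_
      ext e
      simp only [edgesIn, mem_filter, mem_univ, true_and, Prod.ext_iff]
      constructor
      · rintro ⟨⟨_, h₁⟩, h₂⟩
        exact ⟨h₁, h₂⟩
      · rintro ⟨h₁, h₂⟩
        exact ⟨⟨⟨h₁ ▸ hv, h₂ ▸ mem_of_mem_erase hu⟩, h₁⟩, h₂⟩
    · intro e he
      simp only [mem_coe, edgesIn, mem_filter, mem_univ, true_and] at he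
      exact mem_erase.mpr ⟨he.2 ▸ (hloop e).symm, he.1.2⟩
  · rw [card_eq_sum_card_fiberwise (f := fun e => (ends e).1) (t := W.erase v)]
    · refine sum_congr rfl fun u hu => congr_arg card ?_
      ext e
      simp only [edgesIn, mem_filter, mem_univ, true_and, Prod.ext_iff]
      constructor
      · rintro ⟨⟨_, h₁⟩, h₂⟩
        exact ⟨h₂, h₁⟩
      · rintro ⟨h₁, h₂⟩
        exact ⟨⟨⟨h₁ ▸ mem_of_mem_erase hu, h₂ ▸ hv⟩, h₂⟩, h₁⟩
    · intro e he
      simp only [mem_coe, edgesIn, mem_filter, mem_univ, true_and] at he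
      exact mem_erase.mpr ⟨he.2 ▸ hloop e, he.1.1⟩

end Degrees

section CompleteMultipartite

variable {p a l1 l2 : ℕ} {E : Type} [Fintype E] {ends : E → (Fin p × Fin a) × (Fin p × Fin a)}
  (hloop : ∀ e, (ends e).1 ≠ (ends e).2)
  (hmult : ∀ u v : Fin p × Fin a, u ≠ v → multOf ends u v = if u.1 = v.1 then l1 else l2)
include hloop hmult

lemma degIn_univ_of_multOf (v : Fin p × Fin a) :
    degIn ends univ v = (a - 1) * l1 + (p * a - a) * l2 := by
  have hpart : ({u | v.1 = u.1} : Finset (Fin p × Fin a)) = {v.1} ×ˢ univ := by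
    ext u
    simp only [mem_filter, mem_univ, true_and, mem_product, mem_singleton, and_true, eq_comm]
  have hsame : #{u ∈ univ.erase v | v.1 = u.1} = a - 1 := by
    rw [filter_erase, card_erase_of_mem (by simp), hpart, card_product]
    simp
  have hall := card_filter_add_card_filter_not (s := univ.erase v) (fun u => v.1 = u.1)
  rw [card_erase_of_mem (mem_univ v), card_univ, Fintype.card_prod, Fintype.card_fin,
    Fintype.card_fin] at hall
  have hother : #{u ∈ univ.erase v | ¬v.1 = u.1} = p * a - a := by
    have := v.2.pos
    omega
  have := degIn_edgesIn_eq_sum_multOf ends hloop (mem_univ v)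
  rw [show edgesIn ends univ univ = univ by simp [edgesIn]] at this
  rw [this, sum_congr rfl fun u hu => hmult v u (ne_of_mem_erase hu).symm, sum_ite, sum_const,
    sum_const, smul_eq_mul, smul_eq_mul, hsame, hother]

lemma two_mul_card_edgesIn_part (i : Fin p) :
    2 * #(edgesIn ends ({i} ×ˢ univ) univ) = a * ((a - 1) * l1) := by
  have hdeg : ∀ v ∈ ({i} ×ˢ univ : Finset (Fin p × Fin a)),
      degIn ends (edgesIn ends ({i} ×ˢ univ) univ) v = (a - 1) * l1 := by
    intro v hvW
    have hsame : ∀ u ∈ ({i} ×ˢ univ).erase v, multOf ends v u = l1 := by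
      intro u hu
      have hvi := mem_singleton.mp (mem_product.mp hvW).1
      have hui := mem_singleton.mp (mem_product.mp (mem_of_mem_erase hu)).1
      rw [hmult v u (ne_of_mem_erase hu).symm, if_pos (hvi.trans hui.symm)]
    rw [degIn_edgesIn_eq_sum_multOf ends hloop hvW, sum_congr rfl hsame, sum_const, smul_eq_mul,
      card_erase_of_mem hvW, card_product]
    simp
  rw [← sum_degIn_eq_two_mul_card ends (S := edgesIn ends ({i} ×ˢ univ) univ)
      fun e he => (mem_filter.mp he).2, sum_congr rfl hdeg,
    sum_const, smul_eq_mul, card_product]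
  simp

end CompleteMultipartite

theorem hamDecomp_lambda_ineq_general (p a l1 l2 : ℕ) (hp : 1 < p) (ha : 2 ≤ a)
    {E : Type} [Fintype E]
    (ends : E → (Fin p × Fin a) × (Fin p × Fin a))
    (hloopless : ∀ e, (ends e).1 ≠ (ends e).2)
    (hmult : ∀ u v : Fin p × Fin a, u ≠ v →
      multOf ends u v = if u.1 = v.1 then l1 else l2)
    (D : Finset (Finset E)) (hD : IsHamDecomp ends D) :
    l1 ≤ l2 * a * (p - 1) := by
  classical
  let W : Finset (Fin p × Fin a) := {⟨0, by omega⟩} ×ˢ univ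
  have hWcard : #W = a := by simp [W]
  have hW : W.Nonempty := ⟨(⟨0, by omega⟩, ⟨0, by omega⟩), by simp [W]⟩
  have hwW : ((⟨1, hp⟩, ⟨0, by omega⟩) : Fin p × Fin a) ∉ W := by simp [W]
  have hcycles : 2 * #D = (a - 1) * l1 + (p * a - a) * l2 := by
    rw [hD.two_mul_card_eq_degIn ends (⟨0, by omega⟩, ⟨0, by omega⟩),
      degIn_univ_of_multOf hloopless hmult]
  have hpure : 2 * #(edgesIn ends W univ) = a * ((a - 1) * l1) :=
    two_mul_card_edgesIn_part hloopless hmult _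
  have hpure_le : #(edgesIn ends W univ) ≤ #D * (a - 1) :=
    (hD.card_edgesIn_le ends hW hwW).trans_eq (by rw [hWcard])
  have hdiv : (a - 1) * (a * l1) ≤ (a - 1) * ((a - 1) * l1 + (p * a - a) * l2) := by
    calc (a - 1) * (a * l1) = 2 * #(edgesIn ends W univ) := by rw [hpure]; ring
      _ ≤ 2 * (#D * (a - 1)) := Nat.mul_le_mul_left 2 hpure_le
      _ = (a - 1) * (2 * #D) := by ring
      _ = _ := by rw [hcycles]
  have hcancel := Nat.le_of_mul_le_mul_left hdiv (by omega)
  rw [← Nat.sub_one_mul] at hcancel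
  have hsplit : a * l1 = (a - 1) * l1 + l1 := by
    rw [Nat.sub_one_mul, Nat.sub_add_cancel (Nat.le_mul_of_pos_left l1 (by omega))]
  linarith

/-- If `K(a^{(p)}; λ₁, λ₂)` (with `p > 1`, `a ≥ 2`, `λ₂ ≥ 1`, `λ₁ ≠ λ₂`) has a
Hamiltonian decomposition, then `λ₁ ≤ λ₂a(p-1)`. -/
theorem hamDecomp_lambda_ineq (p a l1 l2 : ℕ) (hp : 1 < p) (ha : 2 ≤ a)
    (hl2 : 1 ≤ l2) (hne : l1 ≠ l2)
    {E : Type} [Fintype E]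
    (ends : E → (Fin p × Fin a) × (Fin p × Fin a))
    (hloopless : ∀ e, (ends e).1 ≠ (ends e).2)
    (hmult : ∀ u v : Fin p × Fin a, u ≠ v →
      multOf ends u v = if u.1 = v.1 then l1 else l2)
    (D : Finset (Finset E)) (hD : IsHamDecomp ends D) :
    l1 ≤ l2 * a * (p - 1) :=
  hamDecomp_lambda_ineq_general p a l1 l2 hp ha ends hloopless hmult D hD
end

section
/- In any Hamiltonian decomposition of K(a^{(p)}; λ₁, λ₂) with p > 1 parts of size a ≥ 2, each Hamiltonian cycle contains at least p mixed edges (edges with endpoints in different parts), and the total number of mixed edges is λ₂a²·p(p−1)/2; consequently λ₂a²p(p−1)/2 ≥ p(λ₁(a−1)+λ₂a(p−1))/2, which implies λ₁ ≤ λ₂a(p−1). -/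
/-- Edge type of `K(a^{(p)}; λ₁, λ₂)`: vertices are `Fin (p*a)` with `v` lying in
part `v / a`; each pair of distinct vertices in the same part is joined by `λ₁`
edges, and each pair in different parts by `λ₂` edges. -/
abbrev KEdge (p a l1 l2 : ℕ) : Type :=
  Σ q : {q : Fin (p * a) × Fin (p * a) // q.1 < q.2},
    Fin (if q.val.1.val / a = q.val.2.val / a then l1 else l2)

/-- Endpoints of an edge of `K(a^{(p)}; λ₁, λ₂)`. -/
def Kends (p a l1 l2 : ℕ) : KEdge p a l1 l2 → Fin (p * a) × Fin (p * a) :=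
  fun e => (e.1.val.1, e.1.val.2)

/-- An edge of `K(a^{(p)}; λ₁, λ₂)` is mixed if its endpoints lie in different parts. -/
def KMixed (p a l1 l2 : ℕ) (e : KEdge p a l1 l2) : Prop :=
  ((Kends p a l1 l2 e).1.val / a ≠ (Kends p a l1 l2 e).2.val / a)


/-!
Let `C` be a Hamiltonian cycle and `P` a part. Some vertex lies in `P` and (as `p > 1`) some
vertex lies outside it, so by connectivity `C` has an edge leaving `P`; as every vertex has even
degree in `C`, the number of edges of `C` leaving `P` is even, hence at least `2`. A mixed edge
leaves exactly two parts, so `C` has at least `p` mixed edges.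

Double counting over ordered pairs of vertices gives `2 · #mixed edges = λ₂a²p(p-1)` and
`2 · #edges = pa(λ₁(a-1) + λ₂a(p-1))`. Every cycle has `pa` edges, so a decomposition `D` has
`2|D| = λ₁(a-1) + λ₂a(p-1)`, and `p|D| ≤ #mixed edges` gives the inequalities.
-/

open Finset

lemma natCard_subtype_mem_and {E : Type} (S : Finset E) (P : E → Prop) [DecidablePred P] :
    Nat.card {e // e ∈ S ∧ P e} = #{e ∈ S | P e} := by
  rw [← Nat.card_eq_finsetCard]
  exact Nat.card_congr (Equiv.subtypeEquivRight fun e => (mem_filter (s := S)).symm)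

section Cuts

variable {V E : Type} (ends : E → V × V) (S : Finset E)

def cutIn (Q : V → Prop) [DecidablePred Q] : Finset E :=
  {e ∈ S | ¬(Q (ends e).1 ↔ Q (ends e).2)}

lemma degIn_eq_card [DecidableEq V] (v : V) :
    degIn ends S v = #{e ∈ S | (ends e).1 = v} + #{e ∈ S | (ends e).2 = v} := by
  simp only [degIn, natCard_subtype_mem_and]

lemma sum_degIn [DecidableEq V] (P : Finset V) :
    ∑ v ∈ P, degIn ends S v =
      ∑ e ∈ S, ((if (ends e).1 ∈ P then 1 else 0) + if (ends e).2 ∈ P then 1 else 0) := by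
  simp only [degIn_eq_card, card_filter, sum_add_distrib]
  rw [sum_comm, sum_comm (s := P)]
  simp [sum_ite_eq]

lemma even_card_cutIn [Fintype V] [DecidableEq V] (hdeg : ∀ v, Even (degIn ends S v))
    (Q : V → Prop) [DecidablePred Q] : Even #(cutIn ends S Q) := by
  have hsum : ∑ v ∈ {v | Q v}, degIn ends S v =
      2 * #{e ∈ S | Q (ends e).1 ∧ Q (ends e).2} + #(cutIn ends S Q) := by
    rw [sum_degIn, cutIn, card_filter, card_filter, mul_sum, ← sum_add_distrib]
    refine sum_congr rfl fun e _ => ?_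
    by_cases h1 : Q (ends e).1 <;> by_cases h2 : Q (ends e).2 <;> simp [h1, h2]
  have heven : Even (∑ v ∈ {v | Q v}, degIn ends S v) := even_sum _ fun v _ => hdeg v
  rw [hsum] at heven
  exact (Nat.even_add.mp heven).mp (even_two_mul _)

lemma exists_mem_cutIn_of_reflTransGen (Q : V → Prop) [DecidablePred Q] {u v : V}
    (h : Relation.ReflTransGen (fun a b => ∃ e ∈ S, ends e = (a, b) ∨ ends e = (b, a)) u v)
    (hu : Q u) (hv : ¬Q v) : ∃ e, e ∈ cutIn ends S Q := by
  induction h with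
  | refl => exact absurd hu hv
  | @tail b c _ hbc ih =>
    by_cases hb : Q b
    · obtain ⟨e, heS, he | he⟩ := hbc <;>
        exact ⟨e, mem_filter.mpr ⟨heS, by rw [he]; tauto⟩⟩
    · exact ih hb

lemma two_le_card_cutIn [Fintype V] [DecidableEq V] (hdeg : ∀ v, Even (degIn ends S v))
    (hconn : connIn ends S) (Q : V → Prop) [DecidablePred Q] {u v : V} (hu : Q u) (hv : ¬Q v) :
    2 ≤ #(cutIn ends S Q) := by
  have hpos : 0 < #(cutIn ends S Q) :=
    card_pos.mpr (exists_mem_cutIn_of_reflTransGen ends S Q (hconn u v) hu hv)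
  obtain ⟨k, hk⟩ := even_card_cutIn ends S hdeg Q
  omega

lemma sum_card_cutIn_fiber {ι : Type} [Fintype ι] [DecidableEq ι] (π : V → ι) :
    ∑ i, #(cutIn ends S (π · = i)) = 2 * #{e ∈ S | π (ends e).1 ≠ π (ends e).2} := by
  simp only [cutIn, card_filter]
  rw [sum_comm, mul_sum]
  refine sum_congr rfl fun e _ => ?_
  rw [← card_filter]
  by_cases h : π (ends e).1 = π (ends e).2
  · simp [h]
  · have : ({i | ¬(π (ends e).1 = i ↔ π (ends e).2 = i)} : Finset ι) =
        {π (ends e).1, π (ends e).2} := by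
      ext i; simp only [mem_filter, mem_univ, true_and, mem_insert, mem_singleton]; grind
    rw [this, card_pair h, if_pos h, mul_one]

lemma card_le_card_filter_ne [Fintype V] [DecidableEq V] {ι : Type} [Fintype ι] [DecidableEq ι]
    (hdeg : ∀ v, Even (degIn ends S v)) (hconn : connIn ends S) (π : V → ι)
    (hπ : Function.Surjective π) (hι : 1 < Fintype.card ι) :
    Fintype.card ι ≤ #{e ∈ S | π (ends e).1 ≠ π (ends e).2} := by
  have hcut (i : ι) : 2 ≤ #(cutIn ends S (π · = i)) := by
    obtain ⟨j, hji⟩ := Fintype.exists_ne_of_one_lt_card hι i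
    obtain ⟨u, rfl⟩ := hπ i
    obtain ⟨v, rfl⟩ := hπ j
    exact two_le_card_cutIn ends S hdeg hconn _ rfl hji
  have hsum := card_nsmul_le_sum univ _ 2 fun i _ => hcut i
  rw [sum_card_cutIn_fiber, card_univ, smul_eq_mul] at hsum
  omega

end Cuts

lemma sum_card_filter_of_existsUnique {E : Type} [Fintype E] [DecidableEq E]
    (D : Finset (Finset E)) (hD : ∀ e, ∃! S, S ∈ D ∧ e ∈ S) (P : E → Prop) [DecidablePred P] :
    ∑ S ∈ D, #{e ∈ S | P e} = #{e | P e} := by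
  have hcover (e : E) : #{S ∈ D | e ∈ S} = 1 := by
    obtain ⟨S, hS, huniq⟩ := hD e
    exact card_eq_one.mpr ⟨S, by ext T; simpa using ⟨fun hT => huniq T hT, fun h => h ▸ hS⟩⟩
  simp only [card_filter]
  rw [sum_comm' (t' := univ) (s' := fun e => {S ∈ D | e ∈ S}) (by simp)]
  simp only [sum_const, hcover, one_smul]

lemma IsHamCycle.card_eq {V E : Type} [Fintype V] [DecidableEq V] {ends : E → V × V}
    {S : Finset E} (h : IsHamCycle ends S) : #S = Fintype.card V := by
  have := sum_degIn ends S univ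
  simp only [h.1, mem_univ, if_true, sum_const, card_univ, smul_eq_mul] at this
  omega

lemma IsHamDecomp.card_mul_card {V E : Type} [Fintype V] [DecidableEq V] [Fintype E]
    [DecidableEq E] {ends : E → V × V} {D : Finset (Finset E)} (hD : IsHamDecomp ends D) :
    #D * Fintype.card V = Fintype.card E := by
  have := sum_card_filter_of_existsUnique D hD.2 fun _ => True
  simp only [filter_true, card_univ] at this
  rw [← this, ← smul_eq_mul, ← sum_const]
  exact sum_congr rfl fun S hS => (hD.1 S hS).card_eq.symm

lemma two_mul_sum_subtype_lt {V : Type} [Fintype V] [LinearOrder V] (f : V → V → ℕ)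
    (hf : ∀ u w, f u w = f w u) :
    2 * ∑ q : {q : V × V // q.1 < q.2}, f q.1.1 q.1.2 = ∑ u, ∑ w ∈ univ.erase u, f u w := by
  have hlt : ∑ q : {q : V × V // q.1 < q.2}, f q.1.1 q.1.2 =
      ∑ u, ∑ w, if u < w then f u w else 0 := by
    rw [← sum_subtype (univ.filter fun q : V × V => q.1 < q.2) (by simp) (fun q => f q.1 q.2),
      sum_filter, Fintype.sum_prod_type]
  have hgt : ∑ u, ∑ w, (if w < u then f u w else 0) = ∑ u, ∑ w, if u < w then f u w else 0 := by
    rw [sum_comm]; simp only [hf]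
  have herase (u : V) : ∑ w ∈ univ.erase u, f u w =
      ∑ w, ((if u < w then f u w else 0) + if w < u then f u w else 0) := by
    rw [← filter_ne' univ u, sum_filter]
    refine sum_congr rfl fun w _ => ?_
    rcases lt_trichotomy u w with h | rfl | h
    · simp [h, h.ne', not_lt_of_gt h]
    · simp
    · simp [h, h.ne, not_lt_of_gt h]
  simp only [herase, sum_add_distrib, hgt, hlt]
  ring

lemma card_filter_sigma_fst {ι : Type} {α : ι → Type} [Fintype ι] [∀ i, Fintype (α i)]
    (P : ι → Prop) [DecidablePred P] :
    #{x : Σ i, α i | P x.1} = ∑ i, if P i then Fintype.card (α i) else 0 := by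
  rw [card_filter, Fintype.sum_sigma]
  simp only [sum_boole, filter_const, apply_ite card, card_univ, card_empty, Nat.cast_id]

section Parts

variable {p a : ℕ}

lemma card_filter_divNat_eq (i : Fin p) : #{w : Fin (p * a) | w.divNat = i} = a := by
  have e : {w : Fin (p * a) // w.divNat = i} ≃ Fin a :=
    { toFun := fun w => w.1.modNat
      invFun := fun j => ⟨Fin.mkDivMod i j, Fin.divNat_mkDivMod i j⟩
      left_inv := fun ⟨w, hw⟩ => by subst hw; simp
      right_inv := fun j => by simp }
  rw [← Fintype.card_subtype, Fintype.card_congr e, Fintype.card_fin]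

lemma card_erase_filter_same_part (u : Fin (p * a)) :
    #{w ∈ univ.erase u | u.val / a = w.val / a} = a - 1 := by
  have : ({w ∈ univ.erase u | u.val / a = w.val / a} : Finset (Fin (p * a))) =
      ({w | w.divNat = u.divNat} : Finset _).erase u := by
    ext w; simp [Fin.ext_iff, eq_comm, and_comm]
  rw [this, card_erase_of_mem (by simp), card_filter_divNat_eq]

lemma card_erase_filter_other_part (u : Fin (p * a)) :
    #{w ∈ univ.erase u | ¬u.val / a = w.val / a} = a * (p - 1) := by
  have : ({w ∈ univ.erase u | ¬u.val / a = w.val / a} : Finset (Fin (p * a))) =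
      ({w | ¬w.divNat = u.divNat} : Finset (Fin (p * a))) := by
    ext w; simp only [mem_filter, mem_erase, mem_univ, Fin.ext_iff, Fin.coe_divNat]; grind
  have hsplit := card_filter_add_card_filter_not (s := univ) (p := fun w : Fin (p * a) =>
    w.divNat = u.divNat)
  rw [card_filter_divNat_eq, card_univ, Fintype.card_fin] at hsplit
  rw [this, Nat.mul_sub_one, Nat.mul_comm a p]
  omega

end Parts

lemma two_mul_card_KEdge (p a l1 l2 : ℕ) :
    2 * Fintype.card (KEdge p a l1 l2) = p * a * (l1 * (a - 1) + l2 * a * (p - 1)) := by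
  rw [Fintype.card_sigma]
  simp only [Fintype.card_fin]
  rw [two_mul_sum_subtype_lt (fun u w : Fin (p * a) => if u.val / a = w.val / a then l1 else l2)
    (by simp [eq_comm])]
  simp only [sum_ite, sum_const, smul_eq_mul, card_erase_filter_same_part,
    card_erase_filter_other_part, card_univ, Fintype.card_fin]
  ring

lemma two_mul_card_KMixed (p a l1 l2 : ℕ) :
    2 * Nat.card {e : KEdge p a l1 l2 // KMixed p a l1 l2 e} = l2 * a ^ 2 * p * (p - 1) := by
  simp only [KMixed, Kends]
  rw [Nat.card_eq_fintype_card, Fintype.card_subtype,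
    card_filter_sigma_fst fun q : {q : Fin (p * a) × Fin (p * a) // q.1 < q.2} =>
      q.1.1.val / a ≠ q.1.2.val / a]
  simp +contextual only [Fintype.card_fin, ite_not, if_false]
  rw [two_mul_sum_subtype_lt (fun u w : Fin (p * a) => if u.val / a = w.val / a then 0 else l2)
    (by simp [eq_comm])]
  simp only [sum_ite, sum_const_zero, sum_const, smul_eq_mul, card_erase_filter_other_part,
    card_univ, Fintype.card_fin]
  ring

instance (p a l1 l2 : ℕ) : DecidablePred (KMixed p a l1 l2) :=
  fun _ => inferInstanceAs (Decidable (¬_ = _))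

lemma KMixed_iff_divNat_ne {p a l1 l2 : ℕ} (e : KEdge p a l1 l2) :
    KMixed p a l1 l2 e ↔ (Kends p a l1 l2 e).1.divNat ≠ (Kends p a l1 l2 e).2.divNat := by
  simp only [KMixed, ne_eq, Fin.ext_iff, Fin.coe_divNat]

lemma IsHamCycle.le_natCard_KMixed {p a l1 l2 : ℕ} (hp : 1 < p) (ha : 0 < a)
    {S : Finset (KEdge p a l1 l2)} (hS : IsHamCycle (Kends p a l1 l2) S) :
    p ≤ Nat.card {e // e ∈ S ∧ KMixed p a l1 l2 e} := by
  have hπ : Function.Surjective (Fin.divNat : Fin (p * a) → Fin p) := fun i =>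
    ⟨Fin.mkDivMod i ⟨0, ha⟩, Fin.divNat_mkDivMod _ _⟩
  rw [natCard_subtype_mem_and, filter_congr fun e _ => KMixed_iff_divNat_ne e]
  simpa using card_le_card_filter_ne _ S (fun v => hS.1 v ▸ even_two) hS.2 _ hπ
    (by simpa using hp)

lemma IsHamDecomp.sum_natCard_KMixed {p a l1 l2 : ℕ} {D : Finset (Finset (KEdge p a l1 l2))}
    (hD : IsHamDecomp (Kends p a l1 l2) D) :
    ∑ S ∈ D, Nat.card {e // e ∈ S ∧ KMixed p a l1 l2 e} =
      Nat.card {e // KMixed p a l1 l2 e} := by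
  simp only [natCard_subtype_mem_and]
  rw [sum_card_filter_of_existsUnique D hD.2, Nat.card_eq_fintype_card, Fintype.card_subtype]

lemma le_of_mul_sub_one_add_le_mul {a l x : ℕ} (ha : 1 < a) (h : l * (a - 1) + x ≤ x * a) :
    l ≤ x := by
  obtain ⟨b, rfl⟩ : ∃ b, a = b + 1 := ⟨a - 1, by omega⟩
  rw [Nat.add_sub_cancel, mul_add_one] at h
  exact Nat.le_of_mul_le_mul_right (c := b) (by omega) (by omega)

theorem K_hamDecomp_mixed_edges_general (p a l1 l2 : ℕ) (hp : 1 < p) (ha : 2 ≤ a)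
    (D : Finset (Finset (KEdge p a l1 l2))) (hD : IsHamDecomp (Kends p a l1 l2) D) :
    (∀ S ∈ D, p ≤ Nat.card {e : KEdge p a l1 l2 // e ∈ S ∧ KMixed p a l1 l2 e}) ∧
    2 * Nat.card {e : KEdge p a l1 l2 // KMixed p a l1 l2 e} = l2 * a ^ 2 * p * (p - 1) ∧
    p * (l1 * (a - 1) + l2 * a * (p - 1)) ≤ l2 * a ^ 2 * p * (p - 1) ∧
    l1 ≤ l2 * a * (p - 1) := by
  have hcycle : ∀ S ∈ D, p ≤ Nat.card {e // e ∈ S ∧ KMixed p a l1 l2 e} :=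
    fun S hS => (hD.1 S hS).le_natCard_KMixed hp (by omega)
  have hmixed := two_mul_card_KMixed p a l1 l2
  have hcycles : 2 * #D = l1 * (a - 1) + l2 * a * (p - 1) := by
    have hedges := two_mul_card_KEdge p a l1 l2
    rw [← hD.card_mul_card, Fintype.card_fin] at hedges
    exact Nat.eq_of_mul_eq_mul_left (by positivity : 0 < p * a) (by linarith)
  have hbound : p * (l1 * (a - 1) + l2 * a * (p - 1)) ≤ l2 * a ^ 2 * p * (p - 1) := by
    have hsum := card_nsmul_le_sum D _ p hcycle
    rw [hD.sum_natCard_KMixed, smul_eq_mul] at hsum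
    rw [← hcycles]
    linarith
  exact ⟨hcycle, hmixed, hbound, le_of_mul_sub_one_add_le_mul ha
    (Nat.le_of_mul_le_mul_left (c := p) (by linarith) (by omega))⟩

/-- In any Hamiltonian decomposition of `K(a^{(p)}; λ₁, λ₂)` (`p > 1`, `a ≥ 2`,
`λ₂ ≥ 1`): each Hamiltonian cycle contains at least `p` mixed edges, the total number
of mixed edges is `λ₂a²p(p-1)/2`; consequently `λ₂a²p(p-1)/2 ≥ p(λ₁(a-1)+λ₂a(p-1))/2`,
which implies `λ₁ ≤ λ₂a(p-1)`. -/
theorem K_hamDecomp_mixed_edges (p a l1 l2 : ℕ) (hp : 1 < p) (ha : 2 ≤ a)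
    (hl2 : 1 ≤ l2)
    (D : Finset (Finset (KEdge p a l1 l2))) (hD : IsHamDecomp (Kends p a l1 l2) D) :
    (∀ S ∈ D, p ≤ Nat.card {e : KEdge p a l1 l2 // e ∈ S ∧ KMixed p a l1 l2 e}) ∧
    2 * Nat.card {e : KEdge p a l1 l2 // KMixed p a l1 l2 e} = l2 * a ^ 2 * p * (p - 1) ∧
    p * (l1 * (a - 1) + l2 * a * (p - 1)) ≤ l2 * a ^ 2 * p * (p - 1) ∧
    l1 ≤ l2 * a * (p - 1) :=
  K_hamDecomp_mixed_edges_general p a l1 l2 hp ha D hD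
end

section
/- Let H be a k-edge-colored finite multigraph (loops allowed) and η : V(H) → ℕ with η(w) = 1 implying w has no loops. Then there exists a loopless detachment G of H with amalgamation function ψ such that each vertex w of H splits into η(w) vertices, and for every w ∈ V(H) and u ∈ ψ⁻¹(w), the degree of u in G satisfies ⌊d_H(w)/η(w)⌋ ≤ d_G(u) ≤ ⌈d_H(w)/η(w)⌉, and moreover for each color j, ⌊d_{H(j)}(w)/η(w)⌋ ≤ d_{G(j)}(u) ≤ ⌈d_{H(j)}(w)/η(w)⌉. -/
/-- Degree of `v` (loops count twice). -/
noncomputable def gDeg {V E : Type} (ends : E → V × V) (v : V) : ℕ :=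
  Nat.card {e : E // (ends e).1 = v} + Nat.card {e : E // (ends e).2 = v}

/-- Degree of `v` in the color class `j` (loops count twice). -/
noncomputable def gColorDeg {V E : Type} {k : ℕ} (ends : E → V × V) (c : E → Fin k)
    (j : Fin k) (v : V) : ℕ :=
  Nat.card {e : E // c e = j ∧ (ends e).1 = v} +
    Nat.card {e : E // c e = j ∧ (ends e).2 = v}

/-- Number of loops at `v`. -/
noncomputable def gLoops {V E : Type} (ends : E → V × V) (v : V) : ℕ :=
  Nat.card {e : E // ends e = (v, v)}

/-- Number of edges joining `u` and `v`. -/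
noncomputable def gMult {V E : Type} (ends : E → V × V) (u v : V) : ℕ :=
  Nat.card {e : E // ends e = (u, v) ∨ ends e = (v, u)}

/-- `ends'` gives an `η`-detachment of the graph `(V, E, ends)`: each vertex `w`
splits into the `η w` vertices `⟨w, t⟩`, and each edge keeps the same endpoints
after projecting back via `Sigma.fst` (the amalgamation function `ψ`). -/
def IsDetachment {V E : Type} (ends : E → V × V) (η : V → ℕ)
    (ends' : E → (Σ w : V, Fin (η w)) × (Σ w : V, Fin (η w))) : Prop :=
  ∀ e : E, ((ends' e).1.1, (ends' e).2.1) = ends e ∨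
    ((ends' e).2.1, (ends' e).1.1) = ends e

open Finset



lemma cnt_le_one (m a L t : ℕ) (hL : L ≤ m) :
    ((Ico a (a+L)).filter (fun i => i % m = t)).card ≤ 1 := by
  apply Finset.card_le_one.2
  intro i hi j hj
  simp only [mem_filter, mem_Ico] at hi hj
  obtain ⟨⟨hi1, hi2⟩, hi3⟩ := hi
  obtain ⟨⟨hj1, hj2⟩, hj3⟩ := hj
  rcases le_total i j with h | h
  · have : m ∣ j - i := (Nat.modEq_iff_dvd' h).mp (hi3.trans hj3.symm)
    rcases this with ⟨q, hq⟩
    rcases Nat.eq_zero_or_pos q with rfl | hq0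
    · omega
    · have : m ≤ j - i := hq ▸ Nat.le_mul_of_pos_right m hq0
      omega
  · have : m ∣ i - j := (Nat.modEq_iff_dvd' h).mp (hj3.trans hi3.symm)
    rcases this with ⟨q, hq⟩
    rcases Nat.eq_zero_or_pos q with rfl | hq0
    · omega
    · have : m ≤ i - j := hq ▸ Nat.le_mul_of_pos_right m hq0
      omega

lemma cnt_eq_one (m a t : ℕ) (hm : 0 < m) (ht : t < m) :
    ((Ico a (a+m)).filter (fun i => i % m = t)).card = 1 := by
  refine le_antisymm (cnt_le_one m a m t le_rfl) ?_
  rw [Nat.one_le_iff_ne_zero, ← Nat.pos_iff_ne_zero, Finset.card_pos]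
  have hmod := Nat.mod_lt a hm
  have hdm := Nat.div_add_mod a m
  by_cases hc : a % m ≤ t
  · refine ⟨m * (a / m) + t, ?_⟩
    simp only [mem_filter, mem_Ico, Nat.mul_add_mod]
    exact ⟨⟨by omega, by omega⟩, Nat.mod_eq_of_lt ht⟩
  · refine ⟨m * (a / m) + m + t, ?_⟩
    simp only [mem_filter, mem_Ico]
    constructor
    · constructor <;> omega
    · rw [show m * (a / m) + m + t = m * (a / m + 1) + t by ring, Nat.mul_add_mod]
      exact Nat.mod_eq_of_lt ht

lemma cnt_bounds (m t : ℕ) (hm : 0 < m) (ht : t < m) :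
    ∀ L a, L / m ≤ ((Ico a (a+L)).filter (fun i => i % m = t)).card ∧
      ((Ico a (a+L)).filter (fun i => i % m = t)).card ≤ (L + m - 1) / m := by
  intro L
  induction L using Nat.strong_induction_on with
  | _ L ih =>
    intro a
    by_cases hL : L < m
    · constructor
      · rw [Nat.div_eq_of_lt hL]; exact Nat.zero_le _
      · rcases Nat.eq_zero_or_pos ((Ico a (a+L)).filter (fun i => i % m = t)).card with h0 | h1
        · rw [h0]; exact Nat.zero_le _
        · have hLpos : 0 < L := by
            rcases Nat.eq_zero_or_pos L with rfl | h
            · simp at h1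
            · exact h
          calc ((Ico a (a+L)).filter (fun i => i % m = t)).card ≤ 1 :=
                cnt_le_one m a L t hL.le
            _ ≤ (L + m - 1) / m := by
                rw [Nat.one_le_div_iff hm]; omega
    · push_neg at hL
      have hL' : a + L = (a + m) + (L - m) := by omega
      have hcard : ((Ico a (a+L)).filter (fun i => i % m = t)).card
          = 1 + ((Ico (a+m) ((a+m)+(L-m))).filter (fun i => i % m = t)).card := by
        rw [hL', show Ico a ((a+m)+(L-m)) = Ico a (a+m) ∪ Ico (a+m) ((a+m)+(L-m)) from
            (Finset.Ico_union_Ico_eq_Ico (by omega) (by omega)).symm,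
          Finset.filter_union, Finset.card_union_of_disjoint
          (Finset.disjoint_filter_filter (Finset.Ico_disjoint_Ico_consecutive _ _ _)),
          cnt_eq_one m a t hm ht]
      obtain ⟨ih1, ih2⟩ := ih (L - m) (by omega) (a + m)
      constructor
      · rw [hcard]
        have : L / m = (L - m) / m + 1 := by
          rw [← Nat.add_div_right (L - m) hm]
          congr 1
          omega
        omega
      · rw [hcard]
        have : (L + m - 1) / m = ((L - m) + m - 1) / m + 1 := by
          rw [← Nat.add_div_right ((L - m) + m - 1) hm]
          congr 1
          omega
        omega

lemma floor_bound (n m d : ℕ) (hm : 0 < m) (h : n / m ≤ d) :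
    ⌊(n:ℚ)/(m:ℚ)⌋ ≤ (d:ℤ) := by
  have hn : n < (d+1) * m := by
    by_contra hc
    push_neg at hc
    have : d + 1 ≤ n / m := (Nat.le_div_iff_mul_le hm).2 hc
    omega
  have hmq : (0:ℚ) < m := by exact_mod_cast hm
  have : (n:ℚ)/(m:ℚ) < ((d:ℤ):ℚ) + 1 := by
    rw [div_lt_iff₀ hmq]
    push_cast
    exact_mod_cast hn
  have := Int.floor_lt.2 (by push_cast at this ⊢; linarith : (n:ℚ)/(m:ℚ) < (((d:ℤ)+1 : ℤ):ℚ))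
  omega

lemma ceil_bound (n m d : ℕ) (hm : 0 < m) (h : d ≤ (n + m - 1) / m) :
    (d:ℤ) ≤ ⌈(n:ℚ)/(m:ℚ)⌉ := by
  have hdm : d * m ≤ n + m - 1 := (Nat.le_div_iff_mul_le hm).1 h
  have hmq : (0:ℚ) < m := by exact_mod_cast hm
  have hlt : (((d:ℤ) - 1 : ℤ):ℚ) < (n:ℚ)/(m:ℚ) := by
    rw [lt_div_iff₀ hmq]
    push_cast
    have : d * m < n + m := by omega
    have : (d:ℚ) * m < (n:ℚ) + m := by exact_mod_cast this
    linarith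
  have := Int.lt_ceil.2 hlt
  omega

lemma key_lt_helper {n a1 b1 a2 b2 : ℕ} (h1 : b1 < n) (hlt : a1 < a2) :
    a1 * n + b1 < a2 * n + b2 := by
  calc a1 * n + b1 < (a1 + 1) * n := by rw [add_mul, one_mul]; omega
    _ ≤ a2 * n := Nat.mul_le_mul_right n hlt
    _ ≤ a2 * n + b2 := Nat.le_add_right _ _

lemma pair_inj {n a1 b1 a2 b2 : ℕ} (h1 : b1 < n) (h2 : b2 < n)
    (h : a1 * n + b1 = a2 * n + b2) : a1 = a2 ∧ b1 = b2 := by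
  rcases lt_trichotomy a1 a2 with hlt | heq | hlt
  · exact absurd h (key_lt_helper h1 hlt).ne
  · subst heq; omega
  · exact absurd h.symm (key_lt_helper h2 hlt).ne

section Detach
variable {V E : Type} [Fintype V] [Fintype E] {k : ℕ}
variable (ends : E → V × V) (c : E → Fin k)

/-- half-edges at `w` -/
def HalfAt (w : V) : Type := {e : E // (ends e).1 = w} ⊕ {e : E // (ends e).2 = w}

noncomputable instance (w : V) : Fintype (HalfAt ends w) := by
  classical
  unfold HalfAt
  infer_instance

def inlH {w : V} (l : {e : E // (ends e).1 = w}) : HalfAt ends w := Sum.inl l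
def inrH {w : V} (r : {e : E // (ends e).2 = w}) : HalfAt ends w := Sum.inr r

def hEdge {w : V} : HalfAt ends w → E := Sum.elim (·.1) (·.1)
def hBit {w : V} : HalfAt ends w → ℕ := Sum.elim (fun _ => 0) (fun _ => 1)

noncomputable def eIdx : E ≃ Fin (Fintype.card E) := Fintype.equivFin E

noncomputable def hKey {w : V} (h : HalfAt ends w) : ℕ :=
  (c (hEdge ends h)).val * (2 * Fintype.card E)
    + (2 * (eIdx (E := E) (hEdge ends h)).val + hBit ends h)

lemma hBit_lt {w : V} (h : HalfAt ends w) : hBit ends h < 2 := by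
  cases h <;> simp [hBit]

lemma hKey_inj {w : V} : Function.Injective (hKey ends c (w := w)) := by
  intro h1 h2 heq
  have hb1 := hBit_lt ends h1
  have hb2 := hBit_lt ends h2
  have hi1 : (eIdx (E := E) (hEdge ends h1)).val < Fintype.card E := (eIdx _).isLt
  have hi2 : (eIdx (E := E) (hEdge ends h2)).val < Fintype.card E := (eIdx _).isLt
  unfold hKey at heq
  have houter := pair_inj (n := 2 * Fintype.card E)
    (a1 := (c (hEdge ends h1)).val) (a2 := (c (hEdge ends h2)).val)
    (by omega) (by omega) heq
  have hinner := pair_inj (n := 2)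
    (a1 := (eIdx (E := E) (hEdge ends h1)).val) (a2 := (eIdx (E := E) (hEdge ends h2)).val)
    hb1 hb2 (by omega)
  have hidx : eIdx (E := E) (hEdge ends h1) = eIdx (E := E) (hEdge ends h2) :=
    Fin.ext hinner.1
  have hedge : hEdge ends h1 = hEdge ends h2 := (eIdx (E := E)).injective hidx
  have hbits := hinner.2
  cases h1 with
  | inl a => cases h2 with
    | inl b => exact congrArg Sum.inl (Subtype.ext hedge)
    | inr b => simp [hBit] at hbits
  | inr a => cases h2 with
    | inl b => simp [hBit] at hbits
    | inr b => exact congrArg Sum.inr (Subtype.ext hedge)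

lemma hKey_lt_of_color_lt {w : V} (h1 h2 : HalfAt ends w)
    (hc : (c (hEdge ends h1)).val < (c (hEdge ends h2)).val) :
    hKey ends c h1 < hKey ends c h2 := by
  have hb1 := hBit_lt ends h1
  have hi1 : (eIdx (E := E) (hEdge ends h1)).val < Fintype.card E := (eIdx _).isLt
  unfold hKey
  exact key_lt_helper (by omega) hc

noncomputable def hRank {w : V} (h : HalfAt ends w) : ℕ :=
  (univ.filter (fun h' : HalfAt ends w => hKey ends c h' < hKey ends c h)).card

lemma hRank_lt_of_key_lt {w : V} {h1 h2 : HalfAt ends w}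
    (hlt : hKey ends c h1 < hKey ends c h2) : hRank ends c h1 < hRank ends c h2 := by
  apply Finset.card_lt_card
  have hsub : (univ.filter (fun h' : HalfAt ends w => hKey ends c h' < hKey ends c h1))
      ⊆ (univ.filter (fun h' : HalfAt ends w => hKey ends c h' < hKey ends c h2)) := by
    intro h' hh'
    rw [Finset.mem_filter] at hh' ⊢
    exact ⟨hh'.1, lt_trans hh'.2 hlt⟩
  refine (Finset.ssubset_iff_of_subset hsub).2 ⟨h1, ?_, ?_⟩
  · exact Finset.mem_filter.2 ⟨Finset.mem_univ _, hlt⟩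
  · intro hmem
    exact absurd (Finset.mem_filter.1 hmem).2 (lt_irrefl _)

lemma hRank_inj {w : V} : Function.Injective (hRank ends c (w := w)) := by
  intro h1 h2 heq
  by_contra hne
  have hkne : hKey ends c h1 ≠ hKey ends c h2 := fun h => hne (hKey_inj ends c h)
  rcases hkne.lt_or_gt with hlt | hlt
  · exact absurd heq (hRank_lt_of_key_lt ends c hlt).ne
  · exact absurd heq.symm (hRank_lt_of_key_lt ends c hlt).ne

lemma hRank_lt_card {w : V} (h : HalfAt ends w) :
    hRank ends c h < Fintype.card (HalfAt ends w) := by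
  rw [← Finset.card_univ]
  apply Finset.card_lt_card
  refine (Finset.ssubset_iff_of_subset (Finset.subset_univ _)).2 ⟨h, Finset.mem_univ _, ?_⟩
  intro hmem
  exact absurd (Finset.mem_filter.1 hmem).2 (lt_irrefl _)

lemma hRank_succ {w : V} {h1 h2 : HalfAt ends w}
    (hk : hKey ends c h2 = hKey ends c h1 + 1) :
    hRank ends c h2 = hRank ends c h1 + 1 := by
  classical
  have hfe : (univ.filter (fun h' : HalfAt ends w => hKey ends c h' < hKey ends c h2))
      = insert h1 (univ.filter (fun h' : HalfAt ends w => hKey ends c h' < hKey ends c h1)) := by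
    ext h'
    simp only [Finset.mem_filter, Finset.mem_insert, Finset.mem_univ, true_and, hk]
    constructor
    · intro hlt
      rcases Nat.lt_succ_iff_lt_or_eq.1 hlt with h | h
      · exact Or.inr h
      · exact Or.inl (hKey_inj ends c h)
    · rintro (rfl | h)
      · omega
      · omega
  rw [hRank, hfe, Finset.card_insert_of_notMem (by
    intro hmem
    exact absurd (Finset.mem_filter.1 hmem).2 (lt_irrefl _))]
  rfl

lemma image_rank_eq_Ico {w : V} (P : HalfAt ends w → Prop) [DecidablePred P] (A : ℕ)
    (hmem : ∀ h, P h → A ≤ hRank ends c h ∧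
      hRank ends c h < A + (univ.filter P).card) :
    (univ.filter P).image (hRank ends c) = Ico A (A + (univ.filter P).card) := by
  apply Finset.eq_of_subset_of_card_le
  · intro i hi
    rw [Finset.mem_image] at hi
    obtain ⟨h, hP, rfl⟩ := hi
    rw [Finset.mem_Ico]
    exact hmem h (Finset.mem_filter.1 hP).2
  · rw [Nat.card_Ico, Finset.card_image_of_injective _ (hRank_inj ends c)]
    omega

lemma count_eq {w : V} (P : HalfAt ends w → Prop) [DecidablePred P] (A m tv : ℕ)
    (himg : (univ.filter P).image (hRank ends c) = Ico A (A + (univ.filter P).card)) :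
    (univ.filter (fun h => P h ∧ hRank ends c h % m = tv)).card
      = ((Ico A (A + (univ.filter P).card)).filter (fun i => i % m = tv)).card := by
  rw [← himg, Finset.filter_image,
    Finset.card_image_of_injective _ (hRank_inj ends c), Finset.filter_filter]

section More
set_option linter.unusedSectionVars false

lemma filter_sum_card {w : V} (q : HalfAt ends w → Prop) [DecidablePred q] :
    (univ.filter q).card
      = Nat.card {l : {e : E // (ends e).1 = w} // q (inlH ends l)}
        + Nat.card {r : {e : E // (ends e).2 = w} // q (inrH ends r)} := by
  classical
  have step1 : (univ.filter q).card = Nat.card {h : HalfAt ends w // q h} := by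
    rw [Nat.card_eq_fintype_card, Fintype.card_subtype]
  rw [step1]
  have step2 : Nat.card {h : HalfAt ends w // q h}
      = Nat.card {h : {e : E // (ends e).1 = w} ⊕ {e : E // (ends e).2 = w} //
          q (show HalfAt ends w from h)} := rfl
  rw [step2, Nat.card_congr (Equiv.subtypeSum), Nat.card_sum]
  rfl

lemma degH_eq {w : V} : gDeg ends w = Fintype.card (HalfAt ends w) := by
  rw [← Nat.card_eq_fintype_card]
  show _ = Nat.card ({e : E // (ends e).1 = w} ⊕ {e : E // (ends e).2 = w})
  rw [Nat.card_sum]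
  rfl


lemma colorH_eq {w : V} (j : Fin k) :
    gColorDeg ends c j w
      = (univ.filter (fun h : HalfAt ends w => c (hEdge ends h) = j)).card := by
  classical
  rw [filter_sum_card]
  unfold gColorDeg
  congr 1
  · exact Nat.card_congr ((Equiv.subtypeEquivRight (fun e => and_comm)).trans
      (Equiv.subtypeSubtypeEquivSubtypeInter
        (fun e : E => (ends e).1 = w) (fun e : E => c e = j)).symm)
  · exact Nat.card_congr ((Equiv.subtypeEquivRight (fun e => and_comm)).trans
      (Equiv.subtypeSubtypeEquivSubtypeInter
        (fun e : E => (ends e).2 = w) (fun e : E => c e = j)).symm)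

lemma color_mem {w : V} (j : Fin k) (h : HalfAt ends w) (hh : c (hEdge ends h) = j) :
    (univ.filter (fun h' : HalfAt ends w => (c (hEdge ends h')).val < j.val)).card
        ≤ hRank ends c h ∧
    hRank ends c h
      < (univ.filter (fun h' : HalfAt ends w => (c (hEdge ends h')).val < j.val)).card
        + (univ.filter (fun h' : HalfAt ends w => c (hEdge ends h') = j)).card := by
  classical
  constructor
  · apply Finset.card_le_card
    intro h' hm
    rw [Finset.mem_filter] at hm ⊢
    refine ⟨Finset.mem_univ _, hKey_lt_of_color_lt ends c h' h ?_⟩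
    rw [hh]
    exact hm.2
  · have hLpos : 0 < (univ.filter (fun h' : HalfAt ends w => c (hEdge ends h') = j)).card :=
      Finset.card_pos.2 ⟨h, Finset.mem_filter.2 ⟨Finset.mem_univ _, hh⟩⟩
    have hsub : (univ.filter (fun h' : HalfAt ends w => hKey ends c h' < hKey ends c h))
        ⊆ (univ.filter (fun h' : HalfAt ends w => (c (hEdge ends h')).val < j.val))
          ∪ ((univ.filter (fun h' : HalfAt ends w => c (hEdge ends h') = j)).erase h) := by
      intro h' hm
      rw [Finset.mem_filter] at hm
      rcases lt_trichotomy ((c (hEdge ends h')).val) j.val with hlt | heq | hgt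
      · exact Finset.mem_union_left _ (Finset.mem_filter.2 ⟨Finset.mem_univ _, hlt⟩)
      · refine Finset.mem_union_right _ (Finset.mem_erase.2
          ⟨?_, Finset.mem_filter.2 ⟨Finset.mem_univ _, Fin.ext heq⟩⟩)
        rintro rfl
        exact absurd hm.2 (lt_irrefl _)
      · exfalso
        have := hKey_lt_of_color_lt ends c h h' (by rw [hh]; exact hgt)
        omega
    have hc1 := Finset.card_le_card hsub
    have hcu := Finset.card_union_le
      (univ.filter (fun h' : HalfAt ends w => (c (hEdge ends h')).val < j.val))
      ((univ.filter (fun h' : HalfAt ends w => c (hEdge ends h') = j)).erase h)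
    have hce : ((univ.filter (fun h' : HalfAt ends w => c (hEdge ends h') = j)).erase h).card
        = (univ.filter (fun h' : HalfAt ends w => c (hEdge ends h') = j)).card - 1 :=
      Finset.card_erase_of_mem (Finset.mem_filter.2 ⟨Finset.mem_univ _, hh⟩)
    unfold hRank
    omega

lemma sigma_snd_val {η : V → ℕ} {σ τ : Σ w : V, Fin (η w)} (h : σ = τ) :
    σ.2.val = τ.2.val := by subst h; rfl

variable (η : V → ℕ)

noncomputable def detachF (hpos : ∀ w, 0 < η w) :
    E → (Σ w : V, Fin (η w)) × (Σ w : V, Fin (η w)) :=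
  fun e =>
    (⟨(ends e).1, ⟨hRank ends c (inlH ends ⟨e, rfl⟩) % η (ends e).1, Nat.mod_lt _ (hpos _)⟩⟩,
     ⟨(ends e).2, ⟨hRank ends c (inrH ends ⟨e, rfl⟩) % η (ends e).2, Nat.mod_lt _ (hpos _)⟩⟩)

lemma pos1_eq (w : V) (l : {e : E // (ends e).1 = w}) :
    hRank ends c (inlH ends (⟨l.1, rfl⟩ : {e' : E // (ends e').1 = (ends l.1).1}))
      = hRank ends c (inlH ends l) := by
  obtain ⟨e, he⟩ := l
  subst he
  rfl

lemma pos2_eq (w : V) (r : {e : E // (ends e).2 = w}) :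
    hRank ends c (inrH ends (⟨r.1, rfl⟩ : {e' : E // (ends e').2 = (ends r.1).2}))
      = hRank ends c (inrH ends r) := by
  obtain ⟨e, he⟩ := r
  subst he
  rfl

lemma fst_detach_eq_iff (hpos : ∀ w, 0 < η w) (e : E) (w : V) (t : Fin (η w)) :
    (detachF ends c η hpos e).1 = ⟨w, t⟩ ↔
      ((ends e).1 = w ∧
        hRank ends c (inlH ends (⟨e, rfl⟩ : {e' : E // (ends e').1 = (ends e).1})) % η w
          = t.val) := by
  constructor
  · intro h
    have hw : (ends e).1 = w := congrArg Sigma.fst h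
    subst hw
    exact ⟨rfl, sigma_snd_val h⟩
  · rintro ⟨hw, hv⟩
    subst hw
    exact congrArg (Sigma.mk (ends e).1) (Fin.ext hv)

lemma snd_detach_eq_iff (hpos : ∀ w, 0 < η w) (e : E) (w : V) (t : Fin (η w)) :
    (detachF ends c η hpos e).2 = ⟨w, t⟩ ↔
      ((ends e).2 = w ∧
        hRank ends c (inrH ends (⟨e, rfl⟩ : {e' : E // (ends e').2 = (ends e).2})) % η w
          = t.val) := by
  constructor
  · intro h
    have hw : (ends e).2 = w := congrArg Sigma.fst h
    subst hw
    exact ⟨rfl, sigma_snd_val h⟩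
  · rintro ⟨hw, hv⟩
    subst hw
    exact congrArg (Sigma.mk (ends e).2) (Fin.ext hv)


lemma pos2_eq' (e : E) (w : V) (hw : (ends e).2 = w) :
    hRank ends c (inrH ends (⟨e, rfl⟩ : {e' : E // (ends e').2 = (ends e).2}))
      = hRank ends c (inrH ends (⟨e, hw⟩ : {e' : E // (ends e').2 = w})) := by
  subst hw
  rfl

lemma gdeg_detach (hpos : ∀ w, 0 < η w) (w : V) (t : Fin (η w)) :
    gDeg (detachF ends c η hpos) ⟨w, t⟩
      = (univ.filter (fun h : HalfAt ends w => hRank ends c h % η w = t.val)).card := by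
  classical
  rw [filter_sum_card]
  unfold gDeg
  congr 1
  · apply Nat.card_congr
    refine (Equiv.subtypeEquivRight (fun e => fst_detach_eq_iff ends c η hpos e w t)).trans ?_
    refine ((Equiv.subtypeSubtypeEquivSubtypeInter (fun e : E => (ends e).1 = w)
      (fun e : E => hRank ends c
        (inlH ends (⟨e, rfl⟩ : {e' : E // (ends e').1 = (ends e).1})) % η w
          = t.val)).symm).trans ?_
    exact Equiv.subtypeEquivRight (fun l => by rw [pos1_eq])
  · apply Nat.card_congr
    refine (Equiv.subtypeEquivRight (fun e => snd_detach_eq_iff ends c η hpos e w t)).trans ?_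
    refine ((Equiv.subtypeSubtypeEquivSubtypeInter (fun e : E => (ends e).2 = w)
      (fun e : E => hRank ends c
        (inrH ends (⟨e, rfl⟩ : {e' : E // (ends e').2 = (ends e).2})) % η w
          = t.val)).symm).trans ?_
    exact Equiv.subtypeEquivRight (fun r => by rw [pos2_eq])

lemma gcolordeg_detach (hpos : ∀ w, 0 < η w) (w : V) (t : Fin (η w)) (j : Fin k) :
    gColorDeg (detachF ends c η hpos) c j ⟨w, t⟩
      = (univ.filter (fun h : HalfAt ends w =>
          c (hEdge ends h) = j ∧ hRank ends c h % η w = t.val)).card := by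
  classical
  rw [filter_sum_card]
  unfold gColorDeg
  congr 1
  · apply Nat.card_congr
    refine (Equiv.subtypeEquivRight (fun e => ?_)).trans
      (((Equiv.subtypeSubtypeEquivSubtypeInter (fun e : E => (ends e).1 = w)
        (fun e : E => c e = j ∧ hRank ends c
          (inlH ends (⟨e, rfl⟩ : {e' : E // (ends e').1 = (ends e).1})) % η w
            = t.val)).symm).trans
        (Equiv.subtypeEquivRight (fun l => ?_)))
    · rw [fst_detach_eq_iff ends c η hpos e w t]
      exact and_left_comm
    · rw [pos1_eq]
      exact Iff.rfl
  · apply Nat.card_congr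
    refine (Equiv.subtypeEquivRight (fun e => ?_)).trans
      (((Equiv.subtypeSubtypeEquivSubtypeInter (fun e : E => (ends e).2 = w)
        (fun e : E => c e = j ∧ hRank ends c
          (inrH ends (⟨e, rfl⟩ : {e' : E // (ends e').2 = (ends e).2})) % η w
            = t.val)).symm).trans
        (Equiv.subtypeEquivRight (fun r => ?_)))
    · rw [snd_detach_eq_iff ends c η hpos e w t]
      exact and_left_comm
    · rw [pos2_eq]
      exact Iff.rfl

end More
end Detach


/-- (A1)-(A2): any `k`-edge-colored finite multigraph `H` with `η : V(H) → ℕ`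
(`η(w) = 1` implying no loops at `w`) admits a loopless `η`-detachment `G` with
amalgamation function `ψ = Sigma.fst` in which every split vertex `u` over `w`
has degree, and color-`j` degree for every `j`, between the floor and ceiling of
`d_H(w)/η(w)` and `d_{H(j)}(w)/η(w)` respectively. -/
theorem detachment_degrees {V E : Type} [Fintype V] [Fintype E] {k : ℕ}
    (ends : E → V × V) (c : E → Fin k) (η : V → ℕ)
    (hpos : ∀ w, 0 < η w) (hloop : ∀ w, η w = 1 → gLoops ends w = 0) :
    ∃ ends' : E → (Σ w : V, Fin (η w)) × (Σ w : V, Fin (η w)),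
      IsDetachment ends η ends' ∧
      (∀ e, (ends' e).1 ≠ (ends' e).2) ∧
      (∀ u : Σ w : V, Fin (η w),
        ⌊(gDeg ends u.1 : ℚ) / (η u.1 : ℚ)⌋ ≤ (gDeg ends' u : ℤ) ∧
        (gDeg ends' u : ℤ) ≤ ⌈(gDeg ends u.1 : ℚ) / (η u.1 : ℚ)⌉) ∧
      (∀ (u : Σ w : V, Fin (η w)) (j : Fin k),
        ⌊(gColorDeg ends c j u.1 : ℚ) / (η u.1 : ℚ)⌋ ≤ (gColorDeg ends' c j u : ℤ) ∧
        (gColorDeg ends' c j u : ℤ) ≤ ⌈(gColorDeg ends c j u.1 : ℚ) / (η u.1 : ℚ)⌉) := by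
  classical
  refine ⟨detachF ends c η hpos, fun e => Or.inl rfl, ?_, ?_, ?_⟩
  · -- looplessness
    intro e heq
    have hw : (ends e).1 = (ends e).2 := congrArg Sigma.fst heq
    have hv := sigma_snd_val heq
    simp only [detachF] at hv
    have hw' : (ends e).2 = (ends e).1 := hw.symm
    rw [pos2_eq' ends c e (ends e).1 hw'] at hv
    rw [hw'] at hv
    have hkey : hKey ends c (inrH ends (⟨e, hw'⟩ : {e' : E // (ends e').2 = (ends e).1}))
        = hKey ends c (inlH ends (⟨e, rfl⟩ : {e' : E // (ends e').1 = (ends e).1})) + 1 := by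
      simp [hKey, hEdge, hBit, inlH, inrH]
      ring
    have hr := hRank_succ ends c hkey
    rw [hr] at hv
    have hdvd : η (ends e).1 ∣ 1 := by
      have := (Nat.modEq_iff_dvd' (Nat.le_succ _)).mp hv
      simpa using this
    have hm1 : η (ends e).1 = 1 := Nat.dvd_one.mp hdvd
    have h0 := hloop _ hm1
    have hpos' : 0 < gLoops ends (ends e).1 := by
      have hmem : ends e = ((ends e).1, (ends e).1) := Prod.ext rfl hw' 
      unfold gLoops
      have : Nonempty {e' : E // ends e' = ((ends e).1, (ends e).1)} := ⟨⟨e, hmem⟩⟩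
      exact Nat.card_pos
    omega
  · -- total degrees
    intro u
    obtain ⟨w, t⟩ := u
    have hm : 0 < η w := hpos w
    have htv : t.val < η w := t.isLt
    have himg : (univ.filter (fun _ : HalfAt ends w => True)).image (hRank ends c)
        = Ico 0 (0 + (univ.filter (fun _ : HalfAt ends w => True)).card) :=
      image_rank_eq_Ico ends c _ 0 (fun h _ => ⟨Nat.zero_le _, by
        rw [Finset.filter_true, Finset.card_univ]
        simpa using hRank_lt_card ends c h⟩)
    have hcnt := count_eq ends c (fun _ : HalfAt ends w => True) 0 (η w) t.val himg
    obtain ⟨hlo, hhi⟩ := cnt_bounds (η w) t.val hm htv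
      (univ.filter (fun _ : HalfAt ends w => True)).card 0
    rw [← hcnt] at hlo hhi
    have hLH : (univ.filter (fun _ : HalfAt ends w => True)).card = gDeg ends w := by
      rw [Finset.filter_true, Finset.card_univ, degH_eq]
    rw [hLH] at hlo hhi
    simp only [true_and] at hlo hhi
    rw [← gdeg_detach ends c η hpos w t] at hlo hhi
    exact ⟨floor_bound _ _ _ hm hlo, ceil_bound _ _ _ hm hhi⟩
  · -- color degrees
    intro u j
    obtain ⟨w, t⟩ := u
    have hm : 0 < η w := hpos w
    have htv : t.val < η w := t.isLt
    have himg : (univ.filter (fun h : HalfAt ends w => c (hEdge ends h) = j)).image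
          (hRank ends c)
        = Ico (univ.filter (fun h' : HalfAt ends w => (c (hEdge ends h')).val < j.val)).card
            ((univ.filter (fun h' : HalfAt ends w => (c (hEdge ends h')).val < j.val)).card
              + (univ.filter (fun h : HalfAt ends w => c (hEdge ends h) = j)).card) :=
      image_rank_eq_Ico ends c _ _ (fun h hh => color_mem ends c j h hh)
    have hcnt := count_eq ends c (fun h : HalfAt ends w => c (hEdge ends h) = j)
      (univ.filter (fun h' : HalfAt ends w => (c (hEdge ends h')).val < j.val)).card
      (η w) t.val himg
    obtain ⟨hlo, hhi⟩ := cnt_bounds (η w) t.val hm htv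
      (univ.filter (fun h : HalfAt ends w => c (hEdge ends h) = j)).card
      (univ.filter (fun h' : HalfAt ends w => (c (hEdge ends h')).val < j.val)).card
    rw [← hcnt] at hlo hhi
    rw [← colorH_eq ends c j] at hlo hhi
    rw [← gcolordeg_detach ends c η hpos w t j] at hlo hhi
    exact ⟨floor_bound _ _ _ hm hlo, ceil_bound _ _ _ hm hhi⟩
end

section
/- Let H be a k-edge-colored finite multigraph with loops and η : V(H) → ℕ with η(w) = 1 implying ℓ_H(w) = 0. Then there is a loopless η-detachment G with amalgamation function ψ such that: for each w with η(w) ≥ 2 and distinct u, u' ∈ ψ⁻¹(w), the multiplicity m_G(u,u') lies between ⌊ℓ_H(w)/C(η(w),2)⌋ and ⌈ℓ_H(w)/C(η(w),2)⌉; and for distinct w, z ∈ V(H), u ∈ ψ⁻¹(w), v ∈ ψ⁻¹(z), m_G(u,v) lies between ⌊m_H(w,z)/(η(w)η(z))⌋ and ⌈m_H(w,z)/(η(w)η(z))⌉. -/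
theorem floor_div_le_ceil_sub_div {K : Type*} [Field K] [LinearOrder K] [IsStrictOrderedRing K]
    [FloorRing K] (x : K) {v r : K} (hv : 0 ≤ v) (hvr : v < r) :
    ⌊x / r⌋ ≤ ⌈(x - v) / r⌉ := by
  have hr : 0 < r := hv.trans_lt hvr
  rw [Int.le_ceil_iff]
  have hfloor := Int.floor_le (x / r)
  have hshift : x / r - 1 < (x - v) / r := by
    rw [sub_div, sub_lt_sub_iff_left, div_lt_one hr]; exact hvr
  linarith

theorem exists_balanced_map (α S : Type*) [Finite α] [Finite S] [Nonempty S] :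
    ∃ f : α → S, ∀ s,
      ⌊(Nat.card α : ℚ) / Nat.card S⌋ ≤ (Nat.card {a // f a = s} : ℤ) ∧
        (Nat.card {a // f a = s} : ℤ) ≤ ⌈(Nat.card α : ℚ) / Nat.card S⌉ := by
  set m := Nat.card α
  set r := Nat.card S
  have hr : 0 < r := Nat.card_pos
  let eα := Finite.equivFin α
  let eS := Finite.equivFin S
  refine ⟨fun a => eS.symm ⟨eα a % r, Nat.mod_lt _ hr⟩, fun s => ?_⟩
  have hfiber : Nat.card {a // eS.symm ⟨eα a % r, Nat.mod_lt _ hr⟩ = s} =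
      m.count (· ≡ eS s [MOD r]) := by
    rw [Nat.count_eq_card_fintype, Fintype.card_eq_nat_card]
    refine Nat.card_congr ((eα.subtypeEquiv fun a => ?_).trans
      ((Fin.equivSubtype.subtypeEquiv fun i => Iff.rfl).trans
        (Equiv.subtypeSubtypeEquivSubtypeInter (· < m) (· ≡ eS s [MOD r]))))
    rw [Equiv.symm_apply_eq, Fin.ext_iff, Nat.ModEq, Nat.mod_eq_of_lt (eS s).isLt]
    rfl
  have hv : ((eS s : ℕ) : ℚ) < r := by exact_mod_cast (eS s).isLt
  rw [hfiber, Nat.count_modEq_card_eq_ceil _ hr, Nat.mod_eq_of_lt (eS s).isLt]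
  exact ⟨floor_div_le_ceil_sub_div _ (Nat.cast_nonneg _) hv, by gcongr; simp⟩

theorem exists_fiberwise_balanced_map {α S β : Type*} [Finite α] [Finite S]
    (g : α → β) (π : S → β) (hg : ∀ a, ∃ s, π s = g a) :
    ∃ F : α → S, (∀ a, π (F a) = g a) ∧ ∀ s,
      ⌊(Nat.card {a // g a = π s} : ℚ) / Nat.card {s' // π s' = π s}⌋ ≤
          (Nat.card {a // F a = s} : ℤ) ∧
        (Nat.card {a // F a = s} : ℤ) ≤
          ⌈(Nat.card {a // g a = π s} : ℚ) / Nat.card {s' // π s' = π s}⌉ := by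
  have hfib : ∀ b, ∃ f : {a // g a = b} → {s // π s = b}, ∀ s,
      ⌊(Nat.card {a // g a = b} : ℚ) / Nat.card {s // π s = b}⌋ ≤
          (Nat.card {a // f a = s} : ℤ) ∧
        (Nat.card {a // f a = s} : ℤ) ≤
          ⌈(Nat.card {a // g a = b} : ℚ) / Nat.card {s // π s = b}⌉ := by
    intro b
    rcases isEmpty_or_nonempty {s // π s = b} with h | h
    · exact ⟨fun a => h.elim ⟨(hg a.1).choose, (hg a.1).choose_spec.trans a.2⟩, h.elim⟩
    · exact exists_balanced_map _ _
  choose f hf using hfib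
  have hF : ∀ a b (h : g a = b), (f b ⟨a, h⟩ : S) = f (g a) ⟨a, rfl⟩ := by
    rintro a b rfl; rfl
  refine ⟨fun a => f (g a) ⟨a, rfl⟩, fun a => (f (g a) ⟨a, rfl⟩).2, fun s => ?_⟩
  have hcard : Nat.card {a // (f (g a) ⟨a, rfl⟩ : S) = s} =
      Nat.card {x // f (π s) x = ⟨s, rfl⟩} := by
    refine Nat.card_congr (((Equiv.subtypeEquivRight fun a => ?_).trans
      (Equiv.subtypeSubtypeEquivSubtypeInter (g · = π s)
        (fun a => (f (g a) ⟨a, rfl⟩ : S) = s)).symm).trans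
      (Equiv.subtypeEquivRight fun x => ?_))
    · exact ⟨fun h => ⟨h ▸ (f (g a) ⟨a, rfl⟩).2.symm, h⟩, And.right⟩
    · rw [Subtype.ext_iff, ← hF x.1 _ x.2]
  rw [hcard]
  exact hf (π s) ⟨s, rfl⟩

section SigmaLift

variable {V : Type*} {X : V → Type*}

theorem natCard_nonDiag_over_offDiag {w z : V} (hwz : w ≠ z) :
    Nat.card {q : {q : Sym2 (Σ v, X v) // ¬q.IsDiag} // q.1.map Sigma.fst = s(w, z)} =
      Nat.card (X w) * Nat.card (X z) := by
  rw [← Nat.card_prod]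
  refine (Nat.card_congr (Equiv.ofBijective
    (fun p : X w × X z => ⟨⟨s(⟨w, p.1⟩, ⟨z, p.2⟩), by simp [hwz]⟩, by simp⟩) ⟨?_, ?_⟩)).symm
  · rintro ⟨x, y⟩ ⟨x', y'⟩ h
    simpa [hwz] using congrArg (·.1.1) h
  · rintro ⟨⟨q, hq⟩, hmap⟩
    induction q using Sym2.inductionOn with
    | _ u v =>
    obtain ⟨a, x⟩ := u
    obtain ⟨b, y⟩ := v
    simp only [Sym2.map_mk, Sym2.eq_iff] at hmap
    rcases hmap with ⟨rfl, rfl⟩ | ⟨rfl, rfl⟩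
    · exact ⟨(x, y), rfl⟩
    · exact ⟨(y, x), by simp [Sym2.eq_swap]⟩

theorem natCard_nonDiag_over_diag (w : V) :
    Nat.card {q : {q : Sym2 (Σ v, X v) // ¬q.IsDiag} // q.1.map Sigma.fst = s(w, w)} =
      (Nat.card (X w)).choose 2 := by
  rw [← Sym2.natCard_subtype_not_diag]
  refine (Nat.card_congr (Equiv.ofBijective
    (fun q : {q : Sym2 (X w) // ¬q.IsDiag} =>
      ⟨⟨q.1.map (Sigma.mk w), by rw [Sym2.isDiag_map sigma_mk_injective]; exact q.2⟩,
        by rw [Sym2.map_map]; induction q.1 using Sym2.inductionOn; rfl⟩) ⟨?_, ?_⟩)).symm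
  · rintro ⟨q, _⟩ ⟨q', _⟩ h
    exact Subtype.ext (Sym2.map.injective sigma_mk_injective (congrArg (·.1.1) h))
  · rintro ⟨⟨q, hq⟩, hmap⟩
    induction q using Sym2.inductionOn with
    | _ u v =>
    obtain ⟨a, x⟩ := u
    obtain ⟨b, y⟩ := v
    simp only [Sym2.map_mk, Sym2.eq_iff, or_self] at hmap
    obtain ⟨rfl, rfl⟩ := hmap
    exact ⟨⟨s(x, y), by simpa using hq⟩, rfl⟩

theorem exists_nonDiag_over {a b : V} (ha : Nonempty (X a)) (hb : Nonempty (X b))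
    (hab : a = b → Nontrivial (X a)) :
    ∃ q : {q : Sym2 (Σ v, X v) // ¬q.IsDiag}, q.1.map Sigma.fst = s(a, b) := by
  by_cases h : a = b
  · subst h
    obtain ⟨x, y, hxy⟩ := (hab rfl).exists_pair_ne
    exact ⟨⟨s(⟨a, x⟩, ⟨a, y⟩), by simpa⟩, rfl⟩
  · exact ⟨⟨s(⟨a, ha.some⟩, ⟨b, hb.some⟩), by simp [h]⟩, rfl⟩

end SigmaLift

section Multigraph

variable {V E : Type} (ends : E → V × V)

theorem gMult_eq_natCard_sym2 (u v : V) :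
    gMult ends u v = Nat.card {e // s((ends e).1, (ends e).2) = s(u, v)} :=
  Nat.card_congr (Equiv.subtypeEquivRight fun e => by
    rw [show s(u, v) = s((u, v).1, (u, v).2) from rfl, Sym2.mk_eq_mk_iff]; rfl)

theorem gLoops_eq_natCard_sym2 (w : V) :
    gLoops ends w = Nat.card {e // s((ends e).1, (ends e).2) = s(w, w)} :=
  Nat.card_congr (Equiv.subtypeEquivRight fun e => by
    rw [show s(w, w) = s((w, w).1, (w, w).2) from rfl, Sym2.mk_eq_mk_iff, Prod.swap_prod_mk,
      or_self])

theorem gLoops_ne_zero [Finite E] {e : E} {w : V} (he : ends e = (w, w)) :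
    gLoops ends w ≠ 0 :=
  Nat.card_ne_zero.2 ⟨⟨⟨e, he⟩⟩, inferInstance⟩

theorem gMult_out_eq_natCard {W : Type} (F : E → {q : Sym2 W // ¬q.IsDiag}) {u v : W}
    (huv : u ≠ v) :
    gMult (fun e => (F e).1.out) u v =
      Nat.card {e // F e = ⟨s(u, v), Sym2.mk_isDiag_iff.not.2 huv⟩} := by
  rw [gMult_eq_natCard_sym2]
  exact Nat.card_congr (Equiv.subtypeEquivRight fun e => by
    rw [show s((F e).1.out.1, (F e).1.out.2) = (F e).1 from Quot.out_eq _, Subtype.ext_iff])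

theorem isDetachment_of_map_fst (η : V → ℕ)
    (ends' : E → (Σ w : V, Fin (η w)) × (Σ w : V, Fin (η w)))
    (h : ∀ e, s((ends' e).1, (ends' e).2).map Sigma.fst = s((ends e).1, (ends e).2)) :
    IsDetachment ends η ends' := by
  intro e
  rcases (Sym2.mk_eq_mk_iff (p := ((ends' e).1.1, (ends' e).2.1)) (q := ends e)).1 (h e)
    with he | he
  · exact Or.inl he
  · exact Or.inr (by rw [← Prod.swap_swap (ends e), ← he]; rfl)

theorem exists_nonDiag_over_ends [Finite E] (η : V → ℕ) (hpos : ∀ w, 0 < η w)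
    (hloop : ∀ w, η w = 1 → gLoops ends w = 0) (e : E) :
    ∃ q : {q : Sym2 (Σ w, Fin (η w)) // ¬q.IsDiag},
      q.1.map Sigma.fst = s((ends e).1, (ends e).2) := by
  rcases hends : ends e with ⟨a, b⟩
  refine exists_nonDiag_over (Fin.pos_iff_nonempty.1 (hpos a)) (Fin.pos_iff_nonempty.1 (hpos b))
    fun hab => Fin.nontrivial_iff_two_le.2 ?_
  dsimp only at hab ⊢
  subst hab
  have := hpos a
  have := mt (hloop a) (gLoops_ne_zero ends hends)
  omega

end Multigraph

theorem detachment_multiplicities_general {V E : Type} [Fintype V] [Fintype E]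
    (ends : E → V × V) (η : V → ℕ)
    (hpos : ∀ w, 0 < η w) (hloop : ∀ w, η w = 1 → gLoops ends w = 0) :
    ∃ ends' : E → (Σ w : V, Fin (η w)) × (Σ w : V, Fin (η w)),
      IsDetachment ends η ends' ∧
      (∀ e, (ends' e).1 ≠ (ends' e).2) ∧
      (∀ (w : V), 2 ≤ η w → ∀ t t' : Fin (η w), t ≠ t' →
        ⌊(gLoops ends w : ℚ) / (Nat.choose (η w) 2 : ℚ)⌋ ≤
          (gMult ends' ⟨w, t⟩ ⟨w, t'⟩ : ℤ) ∧
        (gMult ends' ⟨w, t⟩ ⟨w, t'⟩ : ℤ) ≤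
          ⌈(gLoops ends w : ℚ) / (Nat.choose (η w) 2 : ℚ)⌉) ∧
      (∀ (w z : V), w ≠ z → ∀ (t : Fin (η w)) (s : Fin (η z)),
        ⌊(gMult ends w z : ℚ) / ((η w : ℚ) * (η z : ℚ))⌋ ≤
          (gMult ends' ⟨w, t⟩ ⟨z, s⟩ : ℤ) ∧
        (gMult ends' ⟨w, t⟩ ⟨z, s⟩ : ℤ) ≤
          ⌈(gMult ends w z : ℚ) / ((η w : ℚ) * (η z : ℚ))⌉) := by
  obtain ⟨F, hFπ, hFbal⟩ := exists_fiberwise_balanced_map (fun e => s((ends e).1, (ends e).2))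
    (fun q : {q : Sym2 (Σ w, Fin (η w)) // ¬q.IsDiag} => q.1.map Sigma.fst)
    (exists_nonDiag_over_ends ends η hpos hloop)
  have hout : ∀ e, s((F e).1.out.1, (F e).1.out.2) = (F e).1 := fun e => Quot.out_eq _
  refine ⟨fun e => (F e).1.out, isDetachment_of_map_fst ends η _ fun e => ?_,
    fun e h => (F e).2 ?_, fun w _ t t' htt => ?_, fun w z hwz t s => ?_⟩
  · rw [hout, hFπ]
  · rwa [← hout e, Sym2.mk_isDiag_iff]
  · have h := hFbal ⟨s(⟨w, t⟩, ⟨w, t'⟩), by simpa⟩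
    simp only [Sym2.map_mk, natCard_nonDiag_over_diag, Nat.card_fin] at h
    rwa [gMult_out_eq_natCard F (by simpa), gLoops_eq_natCard_sym2]
  · have h := hFbal ⟨s(⟨w, t⟩, ⟨z, s⟩), by simp [hwz]⟩
    simp only [Sym2.map_mk, natCard_nonDiag_over_offDiag hwz, Nat.card_fin, Nat.cast_mul] at h
    rwa [gMult_out_eq_natCard F (by simp [hwz]), gMult_eq_natCard_sym2]

/-- (A3) and (A5): any `k`-edge-colored finite multigraph `H` with `η : V(H) → ℕ`
(`η(w) = 1` implying no loops at `w`) admits a loopless `η`-detachment `G` in which,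
for `η(w) ≥ 2` and distinct split vertices `u, u'` over `w`, the multiplicity
`m_G(u,u')` lies between `⌊ℓ_H(w)/C(η(w),2)⌋` and `⌈ℓ_H(w)/C(η(w),2)⌉`, and for
distinct `w, z` and split vertices `u` over `w`, `v` over `z`, `m_G(u,v)` lies
between `⌊m_H(w,z)/(η(w)η(z))⌋` and `⌈m_H(w,z)/(η(w)η(z))⌉`. -/
theorem detachment_multiplicities {V E : Type} [Fintype V] [Fintype E] {k : ℕ}
    (ends : E → V × V) (c : E → Fin k) (η : V → ℕ)
    (hpos : ∀ w, 0 < η w) (hloop : ∀ w, η w = 1 → gLoops ends w = 0) :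
    ∃ ends' : E → (Σ w : V, Fin (η w)) × (Σ w : V, Fin (η w)),
      IsDetachment ends η ends' ∧
      (∀ e, (ends' e).1 ≠ (ends' e).2) ∧
      (∀ (w : V), 2 ≤ η w → ∀ t t' : Fin (η w), t ≠ t' →
        ⌊(gLoops ends w : ℚ) / (Nat.choose (η w) 2 : ℚ)⌋ ≤
          (gMult ends' ⟨w, t⟩ ⟨w, t'⟩ : ℤ) ∧
        (gMult ends' ⟨w, t⟩ ⟨w, t'⟩ : ℤ) ≤
          ⌈(gLoops ends w : ℚ) / (Nat.choose (η w) 2 : ℚ)⌉) ∧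
      (∀ (w z : V), w ≠ z → ∀ (t : Fin (η w)) (s : Fin (η z)),
        ⌊(gMult ends w z : ℚ) / ((η w : ℚ) * (η z : ℚ))⌋ ≤
          (gMult ends' ⟨w, t⟩ ⟨z, s⟩ : ℤ) ∧
        (gMult ends' ⟨w, t⟩ ⟨z, s⟩ : ℤ) ≤
          ⌈(gMult ends w z : ℚ) / ((η w : ℚ) * (η z : ℚ))⌉) :=
  detachment_multiplicities_general ends η hpos hloop
end
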